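/- arXiv:2308.14205 — 8 statements merged into one kernel-verified Lean document; each statement's English description precedes it below -/
import Mathlib

section
/- If (t₁,…,t_{n−1}) is a sequence of transpositions in S_n whose product t₁⋯t_{n−1} equals the n-cycle (1 2 … n), then the associated geometric graph on vertices 1,…,n (with an edge {a,b} for each transposition (a b)) is a tree. -/
open SimpleGraph

-- deleting a cycle edge preserves connectivity
lemma myConnDelete {V : Type*} {G : SimpleGraph V} (hG : G.Connected) {u : V} {c : G.Walk u u}
    (hc : c.IsCycle) {e : Sym2 V} (he : e ∈ c.edges) :
    (G \ SimpleGraph.fromEdgeSet {e}).Connected := by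
  induction e using Sym2.ind with
  | _ v w =>
  have hr : (G \ SimpleGraph.fromEdgeSet {s(v, w)}).Reachable v w :=
    (SimpleGraph.adj_and_reachable_delete_edges_iff_exists_cycle.mpr ⟨u, c, hc, he⟩).2
  haveI : Nonempty V := hG.nonempty
  refine SimpleGraph.Connected.mk fun a b => ?_
  obtain ⟨p⟩ := hG.preconnected a b
  induction p with
  | nil => rfl
  | @cons x y z h p ih =>
    refine Reachable.trans ?_ ih
    by_cases hxy : s(x, y) = s(v, w)
    · rw [Sym2.eq_iff] at hxy
      rcases hxy with ⟨rfl, rfl⟩ | ⟨rfl, rfl⟩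
      · exact hr
      · exact hr.symm
    · exact SimpleGraph.Adj.reachable (by simp [h, hxy])

lemma myEdgeLt {V : Type*} [Fintype V] (G : SimpleGraph V) {e : Sym2 V} [Fintype G.edgeSet]
    [Fintype (G \ SimpleGraph.fromEdgeSet {e}).edgeSet] (he : e ∈ G.edgeSet) :
    (G \ SimpleGraph.fromEdgeSet {e}).edgeFinset.card < G.edgeFinset.card := by
  apply Finset.card_lt_card
  constructor
  · intro f hf
    simp only [Set.mem_toFinset, SimpleGraph.mem_edgeFinset, SimpleGraph.edgeSet_sdiff,
      SimpleGraph.edgeSet_fromEdgeSet, SimpleGraph.edgeSet_sdiff_sdiff_isDiag,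
      Set.mem_diff] at *
    exact hf.1
  · intro hsub
    have := hsub (SimpleGraph.mem_edgeFinset.mpr he)
    simp [SimpleGraph.edgeSet_sdiff, SimpleGraph.edgeSet_fromEdgeSet,
      SimpleGraph.edgeSet_sdiff_sdiff_isDiag] at this

lemma myCardLe {V : Type*} [Fintype V] :
    ∀ (m : ℕ) (G : SimpleGraph V) [Fintype G.edgeSet], G.edgeFinset.card = m →
      G.Connected → Fintype.card V ≤ m + 1 := by
  intro m
  induction m using Nat.strong_induction_on with
  | _ m ih =>
    intro G _ hcard hconn
    by_cases hac : G.IsAcyclic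
    · have := SimpleGraph.IsTree.card_edgeFinset ⟨hconn, hac⟩
      omega
    · rw [SimpleGraph.IsAcyclic] at hac
      push_neg at hac
      obtain ⟨v, c, hc⟩ := hac
      have hlen : c.edges ≠ [] := by
        have h3 := hc.three_le_length
        intro h
        rw [← SimpleGraph.Walk.length_edges, h] at h3
        simp at h3
      obtain ⟨e, he⟩ := List.exists_mem_of_ne_nil _ hlen
      classical
      haveI : Fintype (G \ SimpleGraph.fromEdgeSet {e}).edgeSet := Fintype.ofFinite _
      have hconn' := myConnDelete hconn hc he
      have hlt := myEdgeLt G (c.edges_subset_edgeSet he)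
      have := ih _ (hcard ▸ hlt) _ rfl hconn'
      omega

lemma myIsTree {V : Type*} [Fintype V] (G : SimpleGraph V) [Fintype G.edgeSet]
    (hconn : G.Connected) (hcard : G.edgeFinset.card + 1 ≤ Fintype.card V) : G.IsTree := by
  refine ⟨hconn, fun v c hc => ?_⟩
  have hlen : c.edges ≠ [] := by
    have h3 := hc.three_le_length
    intro h
    rw [← SimpleGraph.Walk.length_edges, h] at h3
    simp at h3
  obtain ⟨e, he⟩ := List.exists_mem_of_ne_nil _ hlen
  classical
  haveI : Fintype (G \ SimpleGraph.fromEdgeSet {e}).edgeSet := Fintype.ofFinite _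
  have hconn' := myConnDelete hconn hc he
  have hlt := myEdgeLt G (c.edges_subset_edgeSet he)
  have := myCardLe _ (G \ SimpleGraph.fromEdgeSet {e}) rfl hconn'
  omega

lemma mySwapSym2 {α : Type*} [DecidableEq α] {a b x y : α} (hab : a ≠ b) (hxy : x ≠ y)
    (h : Equiv.swap a b = Equiv.swap x y) : s(a, b) = s(x, y) := by
  have ha : Equiv.swap x y a = b := by rw [← h, Equiv.swap_apply_left]
  rw [Equiv.swap_apply_def] at ha
  split_ifs at ha with h1 h2
  · subst h1; subst ha; rfl
  · subst h2; subst ha; rw [Sym2.eq_swap]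
  · exact absurd ha.symm hab.symm

/-- If a sequence of `n-1` transpositions multiplies to the `n`-cycle `(1,2,…,n)`,
then the associated geometric graph (an edge `{a,b}` for each transposition `(a b)`)
is a tree. -/
theorem stmt1 (n : ℕ) (hn : 1 ≤ n) (l : List (Equiv.Perm (Fin n)))
    (hlen : l.length = n - 1) (hswap : ∀ τ ∈ l, τ.IsSwap)
    (hprod : l.prod = finRotate n) :
    (SimpleGraph.fromRel fun a b => ∃ τ ∈ l, τ = Equiv.swap a b).IsTree := by
  obtain _ | m := n
  · omega
  classical
  set G := (SimpleGraph.fromRel fun a b : Fin (m + 1) => ∃ τ ∈ l, τ = Equiv.swap a b) with hG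
  -- step 1 : single swap reachability
  have step1 : ∀ τ ∈ l, ∀ x : Fin (m + 1), G.Reachable x (τ x) := by
    intro τ hτ x
    obtain ⟨a, b, hab, rfl⟩ := hswap τ hτ
    have hadj : G.Adj a b := by
      rw [hG, SimpleGraph.fromRel_adj]
      exact ⟨hab, Or.inl ⟨Equiv.swap a b, hτ, rfl⟩⟩
    by_cases hxa : x = a
    · subst hxa; rw [Equiv.swap_apply_left]; exact hadj.reachable
    by_cases hxb : x = b
    · subst hxb; rw [Equiv.swap_apply_right]; exact hadj.symm.reachable
    · rw [Equiv.swap_apply_of_ne_of_ne hxa hxb]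
  -- step 2 : products of swaps from l
  have step2 : ∀ l' : List (Equiv.Perm (Fin (m + 1))), (∀ τ ∈ l', τ ∈ l) →
      ∀ x : Fin (m + 1), G.Reachable x (l'.prod x) := by
    intro l' hl'
    induction l' with
    | nil => intro x; simpa using SimpleGraph.Reachable.refl x
    | cons τ t ih =>
      intro x
      rw [List.prod_cons, Equiv.Perm.mul_apply]
      exact (ih (fun σ hσ => hl' σ (List.mem_cons_of_mem _ hσ)) x).trans
        (step1 τ (hl' τ List.mem_cons_self) _)
  have step3 : ∀ x : Fin (m + 1), G.Reachable x (x + 1) := by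
    intro x
    have := step2 l (fun _ h => h) x
    rwa [hprod, finRotate_succ_apply] at this
  open Fin.NatCast in
  have step4 : ∀ (k : ℕ) (x : Fin (m + 1)), G.Reachable x (x + (k : Fin (m + 1))) := by
    intro k
    induction k with
    | zero => intro x; simpa using SimpleGraph.Reachable.refl x
    | succ k ih =>
      intro x
      have : ((k + 1 : ℕ) : Fin (m + 1)) = (k : Fin (m + 1)) + 1 := by push_cast; ring
      rw [this, ← add_assoc]
      exact (ih x).trans (step3 _)
  have hconn : G.Connected := by
    haveI : Nonempty (Fin (m + 1)) := ⟨0⟩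
    refine SimpleGraph.Connected.mk fun x y => ?_
    have := step4 (y - x).val x
    rwa [Fin.cast_val_eq_self, add_sub_cancel] at this
  -- edge count
  haveI : Fintype G.edgeSet := Fintype.ofFinite _
  have hcount : G.edgeFinset.card ≤ m := by
    set g : Equiv.Perm (Fin (m + 1)) → Sym2 (Fin (m + 1)) :=
      fun τ => if h : τ.IsSwap then s(h.choose, h.choose_spec.choose) else s(0, 0) with hg
    have hsub : G.edgeFinset ⊆ l.toFinset.image g := by
      intro e he
      induction e using Sym2.ind with
      | _ a b =>
        rw [SimpleGraph.mem_edgeFinset, SimpleGraph.mem_edgeSet, hG,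
          SimpleGraph.fromRel_adj] at he
        obtain ⟨hab, hor⟩ := he
        have : ∃ τ ∈ l, τ = Equiv.swap a b := by
          rcases hor with h | ⟨τ, hτ, rfl⟩
          · exact h
          · exact ⟨_, hτ, Equiv.swap_comm b a⟩
        obtain ⟨τ, hτ, hτeq⟩ := this
        refine Finset.mem_image.mpr ⟨τ, List.mem_toFinset.mpr hτ, ?_⟩
        have hsw : τ.IsSwap := ⟨a, b, hab, hτeq⟩
        rw [hg]
        simp only [dif_pos hsw]
        obtain ⟨hxy, hτeq'⟩ := hsw.choose_spec.choose_spec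
        exact (mySwapSym2 hab hxy (hτeq ▸ hτeq')).symm
    calc G.edgeFinset.card ≤ (l.toFinset.image g).card := Finset.card_le_card hsub
      _ ≤ l.toFinset.card := Finset.card_image_le
      _ ≤ l.length := List.toFinset_card_le l
      _ = m := hlen
  exact myIsTree G hconn (by simpa using Nat.add_le_add_right hcount 1)
end

section
/- Let T be a tree drawn with vertices on a convex polygon (non-crossing geometric tree) on n vertices. Define a relation on edges: (x,z) ≺ (x,y) if they share vertex x and y lies in the cyclic interval (x, z) (i.e., z >_x y in the linear order x <_x x+1 <_x … <_x x−1), and let ≤_T be the reflexive–transitive closure of ≺. Then ≤_T is a partial order on the edge set of T (in particular it is antisymmetric). -/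
/-- Extract an indexed chain from `Relation.TransGen`. -/
private lemma chain_of_transGen {α : Type*} {r : α → α → Prop} {a b : α}
    (h : Relation.TransGen r a b) :
    ∃ (m : ℕ) (f : ℕ → α), 0 < m ∧ f 0 = a ∧ f m = b ∧ ∀ i < m, r (f i) (f (i + 1)) := by
  induction h with
  | @single c h =>
      refine ⟨1, fun i => if i = 0 then a else c, one_pos, by simp, by simp, ?_⟩
      intro i hi
      interval_cases i
      simpa using h
  | @tail b c hab hbc ih =>
      obtain ⟨m, f, hm, h0, hmb, hstep⟩ := ih
      refine ⟨m + 1, fun i => if i ≤ m then f i else c, by omega, by simpa using h0, by simp, ?_⟩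
      intro i hi
      rcases Nat.lt_or_ge i m with h' | h'
      · have h1 : i ≤ m := h'.le
        have h2 : i + 1 ≤ m := h'
        simpa [h1, h2] using hstep i h'
      · have : i = m := by omega
        subst this
        simpa [hmb] using hbc

/-- If `e` contains two distinct elements `a b`, then `e = s(a, b)`. -/
private lemma sym2_eq_of_mem {V : Type*} {e : Sym2 V} {a b : V} (hab : a ≠ b)
    (ha : a ∈ e) (hb : b ∈ e) : e = s(a, b) := by
  induction e with
  | _ c d =>
      rw [Sym2.mem_iff] at ha hb
      rcases ha with rfl | rfl <;> rcases hb with rfl | rfl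
      · exact absurd rfl hab
      · rfl
      · exact Sym2.eq_swap
      · exact absurd rfl hab

/-- In an acyclic graph, the Goulden–Yong-type relation on edges has no cycles:
there is no cyclic chain `f 0, f 1, …, f m = f 0` with each consecutive pair
related by sharing a pivot `x` and strictly decreasing value `ν x ·`. -/
private lemma no_cycle_aux {V : Type*} {G : SimpleGraph V} (hac : G.IsAcyclic)
    (ν : V → V → ℕ) (R : G.edgeSet → G.edgeSet → Prop)
    (hR : ∀ e f, R e f → ∃ x y z : V, (e : Sym2 V) = s(x, z) ∧ (f : Sym2 V) = s(x, y) ∧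
      ν x y < ν x z) :
    ∀ m, 0 < m → ∀ f : ℕ → G.edgeSet, f m = f 0 →
      (∀ i < m, R (f i) (f (i + 1))) → False := by
  intro m
  induction m using Nat.strong_induction_on with
  | _ m IH =>
  intro hm f hcyc hstep
  classical
  by_cases hdup : ∃ p q, p < q ∧ q ≤ m ∧ ¬(p = 0 ∧ q = m) ∧ f p = f q
  · -- shorten the cycle at a duplicate
    obtain ⟨p, q, hpq, hqm, hne, heq⟩ := hdup
    have hlt : q - p < m := by omega
    refine IH (q - p) hlt (by omega) (fun i => f (p + i)) ?_ ?_
    · show f (p + (q - p)) = f (p + 0)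
      have hq : p + (q - p) = q := by omega
      rw [hq, Nat.add_zero]
      exact heq.symm
    · intro i hi
      have h1 : p + i < m := by omega
      show R (f (p + i)) (f (p + (i + 1)))
      have h2 : p + (i + 1) = (p + i) + 1 := by omega
      rw [h2]
      exact hstep (p + i) h1
  · push_neg at hdup
    -- hdup : ∀ p q, p < q → q ≤ m → ¬(p = 0 ∧ q = m) → f p ≠ f q
    have H : ∀ i : Fin m, ∃ x y z : V, ((f (i : ℕ) : Sym2 V)) = s(x, z) ∧
        ((f ((i : ℕ) + 1) : Sym2 V)) = s(x, y) ∧ ν x y < ν x z :=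
      fun i => hR _ _ (hstep i i.2)
    choose x y z hfz hfy hν using H
    have h0m : (0 : ℕ) < m := hm
    by_cases hall : ∀ i : Fin m, x i = x ⟨0, h0m⟩
    · -- all pivots equal: strictly decreasing values around a cycle
      set X : V := x ⟨0, h0m⟩ with hX
      have dec : ∀ j (h1 : j < m) (h2 : j + 1 < m),
          ν X (z ⟨j + 1, h2⟩) < ν X (z ⟨j, h1⟩) := by
        intro j h1 h2
        have e1 : (f (j + 1) : Sym2 V) = s(X, y ⟨j, h1⟩) := by
          rw [← hall ⟨j, h1⟩]; exact hfy ⟨j, h1⟩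
        have e2 : (f (j + 1) : Sym2 V) = s(X, z ⟨j + 1, h2⟩) := by
          rw [← hall ⟨j + 1, h2⟩]; exact hfz ⟨j + 1, h2⟩
        have hyz : y ⟨j, h1⟩ = z ⟨j + 1, h2⟩ := Sym2.congr_right.mp (e1.symm.trans e2)
        have h3 := hν ⟨j, h1⟩
        rw [hall ⟨j, h1⟩, hyz] at h3
        exact h3
      have mono : ∀ j (h1 : j < m), ν X (z ⟨j, h1⟩) + j ≤ ν X (z ⟨0, h0m⟩) := by
        intro j
        induction j with
        | zero => intro h1; exact le_rfl
        | succ k ih =>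
            intro h1
            have hk : k < m := by omega
            have := dec k hk h1
            have := ih hk
            omega
      -- wrap-around step
      have hm1 : m - 1 < m := by omega
      have hcoe : ((⟨m - 1, hm1⟩ : Fin m) : ℕ) + 1 = m := by
        show m - 1 + 1 = m
        omega
      have e1 : (f m : Sym2 V) = s(X, y ⟨m - 1, hm1⟩) := by
        have h := hfy ⟨m - 1, hm1⟩
        rw [hall ⟨m - 1, hm1⟩, hcoe] at h
        exact h
      have e2 : (f m : Sym2 V) = s(X, z ⟨0, h0m⟩) := by
        have h := hfz ⟨0, h0m⟩
        rw [hall ⟨0, h0m⟩] at h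
        rw [hcyc]
        exact h
      have hyz : y ⟨m - 1, hm1⟩ = z ⟨0, h0m⟩ := Sym2.congr_right.mp (e1.symm.trans e2)
      have hwrap : ν X (z ⟨0, h0m⟩) < ν X (z ⟨m - 1, hm1⟩) := by
        have h3 := hν ⟨m - 1, hm1⟩
        rw [hall ⟨m - 1, hm1⟩, hyz] at h3
        exact h3
      have := mono (m - 1) hm1
      omega
    · -- some pivot differs: find a consecutive pair of distinct pivots
      push_neg at hall
      obtain ⟨i₁, hne1⟩ := hall
      have hP : ∃ j : ℕ, ∃ h : j < m, x ⟨j, h⟩ ≠ x ⟨0, h0m⟩ := ⟨i₁, i₁.2, hne1⟩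
      let k := Nat.find hP
      obtain ⟨hkm, hkx⟩ : ∃ h : k < m, x ⟨k, h⟩ ≠ x ⟨0, h0m⟩ := Nat.find_spec hP
      have hk0 : k ≠ 0 := fun h =>
        hkx (by rw [show (⟨k, hkm⟩ : Fin m) = ⟨0, h0m⟩ from Fin.ext h])
      have hkprev : ¬∃ h : k - 1 < m, x ⟨k - 1, h⟩ ≠ x ⟨0, h0m⟩ :=
        Nat.find_min hP (by omega)
      have hk1m : k - 1 < m := by omega
      have hxprev : x ⟨k - 1, hk1m⟩ = x ⟨0, h0m⟩ := by
        by_contra h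
        exact hkprev ⟨hk1m, h⟩
      -- pivots u = x (k-1) and v = x k are distinct, and f k = s(u, v)
      set i₀ : ℕ := k - 1 with hi₀
      have hi₀m : i₀ < m := hk1m
      have hi₀1m : i₀ + 1 < m := by omega
      have hi₀1k : i₀ + 1 = k := by omega
      have huv : x ⟨i₀, hi₀m⟩ ≠ x ⟨i₀ + 1, hi₀1m⟩ := by
        intro h
        apply hkx
        rw [show (⟨k, hkm⟩ : Fin m) = ⟨i₀ + 1, hi₀1m⟩ from Fin.ext hi₀1k.symm]
        rw [← h, hxprev]
      set u : V := x ⟨i₀, hi₀m⟩ with hu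
      set v : V := x ⟨i₀ + 1, hi₀1m⟩ with hv
      have hvy : v ∈ (f (i₀ + 1) : Sym2 V) := by
        rw [hfz ⟨i₀ + 1, hi₀1m⟩]
        exact Sym2.mem_mk_left _ _
      have huy : u ∈ (f (i₀ + 1) : Sym2 V) := by
        rw [hfy ⟨i₀, hi₀m⟩]
        exact Sym2.mem_mk_left _ _
      have hedge : (f (i₀ + 1) : Sym2 V) = s(u, v) := sym2_eq_of_mem huv huy hvy
      have hadj : G.Adj u v := by
        have := (f (i₀ + 1)).2
        rw [hedge] at this
        exact this
      -- the edge s(u, v) is a bridge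
      have hbridge := (SimpleGraph.isAcyclic_iff_forall_adj_isBridge.mp hac) hadj
      rw [SimpleGraph.isBridge_iff] at hbridge
      have hnr : ¬(G \ SimpleGraph.fromEdgeSet {s(u, v)}).Reachable u v := hbridge
      set G' : SimpleGraph V := G \ SimpleGraph.fromEdgeSet {s(u, v)} with hG'
      -- a single hop along an edge f j ≠ f (i₀+1)
      have hop : ∀ (a b : V) (j : ℕ), a ∈ (f j : Sym2 V) → b ∈ (f j : Sym2 V) →
          f j ≠ f (i₀ + 1) → G'.Reachable a b := by
        intro a b j ha hb hne'
        by_cases hab : a = b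
        · exact hab ▸ SimpleGraph.Reachable.refl a
        · have he : (f j : Sym2 V) = s(a, b) := sym2_eq_of_mem hab ha hb
          have hadj' : G.Adj a b := by
            have := (f j).2
            rw [he] at this
            exact this
          have : G'.Adj a b := by
            rw [hG', SimpleGraph.sdiff_adj]
            refine ⟨hadj', ?_⟩
            rw [SimpleGraph.fromEdgeSet_adj]
            rintro ⟨hmem, -⟩
            rw [Set.mem_singleton_iff] at hmem
            apply hne'
            apply Subtype.ext
            rw [he, hmem, hedge]
          exact this.reachable
      -- memberships of pivots in edges
      have M1 : ∀ j (hj : j < m), x ⟨j, hj⟩ ∈ (f (j + 1) : Sym2 V) := by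
        intro j hj
        rw [hfy ⟨j, hj⟩]
        exact Sym2.mem_mk_left _ _
      have M2 : ∀ j (hj : j < m), x ⟨j, hj⟩ ∈ (f j : Sym2 V) := by
        intro j hj
        rw [hfz ⟨j, hj⟩]
        exact Sym2.mem_mk_left _ _
      -- segments of the pivot walk
      have seg : ∀ b, ∀ (hb : b < m), ∀ a, ∀ (ha : a ≤ b),
          (∀ j, a < j → j ≤ b → f j ≠ f (i₀ + 1)) →
          G'.Reachable (x ⟨a, lt_of_le_of_lt ha hb⟩) (x ⟨b, hb⟩) := by
        intro b
        induction b with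
        | zero =>
            intro hb a ha _
            have : a = 0 := by omega
            subst this
            exact SimpleGraph.Reachable.refl _
        | succ c ih =>
            intro hb a ha hcond
            rcases Nat.lt_or_ge a (c + 1) with h' | h'
            · have hc : c < m := by omega
              have hstep1 : G'.Reachable (x ⟨c, hc⟩) (x ⟨c + 1, hb⟩) :=
                hop _ _ (c + 1) (M1 c hc) (M2 (c + 1) hb)
                  (hcond (c + 1) (by omega) le_rfl)
              have hrest := ih hc a (by omega)
                (fun j hj1 hj2 => hcond j hj1 (by omega))
              exact hrest.trans hstep1
            · have : a = c + 1 := by omega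
              subst this
              exact SimpleGraph.Reachable.refl _
      have hm1 : m - 1 < m := by omega
      -- segment 1 : from x (i₀+1) to x (m-1)
      have r1 : G'.Reachable (x ⟨i₀ + 1, hi₀1m⟩) (x ⟨m - 1, hm1⟩) := by
        have := seg (m - 1) hm1 (i₀ + 1) (by omega)
          (fun j hj1 hj2 => (hdup (i₀ + 1) j hj1 (by omega) (by omega)).symm)
        exact this
      -- wrap : from x (m-1) to x 0 via the edge f 0 = f m
      have r2 : G'.Reachable (x ⟨m - 1, hm1⟩) (x ⟨0, h0m⟩) := by
        have hmem1 : x ⟨m - 1, hm1⟩ ∈ (f 0 : Sym2 V) := by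
          have h := M1 (m - 1) hm1
          have h' : (m - 1) + 1 = m := by omega
          rw [h', hcyc] at h
          exact h
        exact hop _ _ 0 hmem1 (M2 0 h0m)
          (hdup 0 (i₀ + 1) (by omega) (by omega) (by omega))
      -- segment 2 : from x 0 to x i₀
      have r3 : G'.Reachable (x ⟨0, h0m⟩) (x ⟨i₀, hi₀m⟩) := by
        have := seg i₀ hi₀m 0 (by omega)
          (fun j hj1 hj2 => hdup j (i₀ + 1) (by omega) (by omega) (by omega))
        exact this
      exact hnr (((r1.trans r2).trans r3).symm)

/-- For a non-crossing geometric tree `G` on `n` vertices placed on a convex polygon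
(vertices labeled by `ZMod n` clockwise), the reflexive–transitive closure of the
Goulden–Yong relation `(x,z) ≺ (x,y)` (edges sharing the vertex `x` with `z >ₓ y`,
where `<ₓ` is the order `x <ₓ x+1 <ₓ ⋯ <ₓ x-1`) is a partial order on the edge set. -/
theorem stmt2 (n : ℕ) [NeZero n] (G : SimpleGraph (ZMod n)) (htree : G.IsTree)
    (hnc : ∀ a b c d : ZMod n, G.Adj a b → G.Adj c d →
      ¬((0 < (c - a).val ∧ (c - a).val < (b - a).val) ∧
        (0 < (d - b).val ∧ (d - b).val < (a - b).val))) :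
    IsPartialOrder G.edgeSet
      (Relation.ReflTransGen fun e f =>
        ∃ x y z : ZMod n, (e : Sym2 (ZMod n)) = s(x, z) ∧ (f : Sym2 (ZMod n)) = s(x, y) ∧
          (y - x).val < (z - x).val) := by
  classical
  have hac : G.IsAcyclic := htree.2
  refine { refl := fun a => Relation.ReflTransGen.refl,
           trans := fun a b c hab hbc => hab.trans hbc,
           antisymm := ?_ }
  intro a b hab hba
  by_contra hne
  have hT : Relation.TransGen
      (fun e f : G.edgeSet =>
        ∃ x y z : ZMod n, (e : Sym2 (ZMod n)) = s(x, z) ∧ (f : Sym2 (ZMod n)) = s(x, y) ∧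
          (y - x).val < (z - x).val) a a := by
    rcases hab.cases_head with h | ⟨c, hac', hcb⟩
    · exact absurd h hne
    · exact Relation.TransGen.head' hac' (hcb.trans hba)
  obtain ⟨m, f, hm, h0, hmm, hstep⟩ := chain_of_transGen hT
  exact no_cycle_aux hac (fun u w => (w - u).val) _ (fun e f h => h) m hm f
    (by rw [hmm, h0]) hstep
end

section
/- There exists a bijection ψ : S_n → S_n such that Des(ψ(π)) = Des(π) and inv(ψ(π)) = imaj(π) for all π ∈ S_n, where imaj(π) = maj(π^{-1}). -/
open scoped Classical

/-- The descent set of `π ∈ S_n` (1-indexed): `{1 ≤ i ≤ n-1 : π(i) > π(i+1)}`. -/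
noncomputable def permDes (n : ℕ) (π : Equiv.Perm (Fin n)) : Finset ℕ :=
  (Finset.Icc 1 (n - 1)).filter fun i =>
    ∃ (h1 : i - 1 < n) (h2 : i < n), π ⟨i, h2⟩ < π ⟨i - 1, h1⟩

/-- The major index of `π`: the sum of its descents. -/
noncomputable def permMaj (n : ℕ) (π : Equiv.Perm (Fin n)) : ℕ :=
  ∑ i ∈ permDes n π, i

/-- The number of inversions of `π`. -/
def permInv (n : ℕ) (π : Equiv.Perm (Fin n)) : ℕ :=
  (Finset.univ.filter fun p : Fin n × Fin n => p.1 < p.2 ∧ π p.2 < π p.1).card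

namespace FoataProof


/-- number of inversions of a word -/
def winv : List ℕ → ℕ
  | [] => 0
  | x :: t => t.countP (fun y => decide (y < x)) + winv t

def cross (u w : List ℕ) : ℕ := (u.map fun y => w.countP (fun z => decide (z < y))).sum

lemma cross_nil (w) : cross [] w = 0 := rfl

lemma cross_nil_right (u : List ℕ) : cross u [] = 0 := by
  simp [cross, List.countP_nil]

lemma cross_cons (y : ℕ) (u w) :
    cross (y :: u) w = w.countP (fun z => decide (z < y)) + cross u w := by
  simp [cross]

lemma winv_append (u w : List ℕ) : winv (u ++ w) = winv u + winv w + cross u w := by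
  induction u with
  | nil => simp [winv, cross]
  | cons y u ih =>
    simp only [List.cons_append, winv, ih, List.countP_append, cross_cons, List.append_eq]
    ring

lemma cross_cons_right (u : List ℕ) (x : ℕ) (w : List ℕ) :
    cross u (x :: w) = u.countP (fun y => decide (x < y)) + cross u w := by
  induction u with
  | nil => simp [cross, List.countP_nil]
  | cons y u ih =>
    simp only [cross_cons, ih, List.countP_cons, List.countP_nil]
    by_cases h : x < y <;> simp [h] <;> ring

lemma cross_singleton_right (u : List ℕ) (a : ℕ) :
    cross u [a] = u.countP (fun y => decide (a < y)) := by
  rw [cross_cons_right, cross_nil_right]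
  omega

lemma winv_concat (u : List ℕ) (a : ℕ) :
    winv (u ++ [a]) = winv u + u.countP (fun y => decide (a < y)) := by
  rw [winv_append, cross_singleton_right]
  simp [winv]

lemma cross_perm_right (u : List ℕ) {w w' : List ℕ} (h : w.Perm w') : cross u w = cross u w' := by
  unfold cross
  congr 1
  apply List.map_congr_left
  intro y _
  exact h.countP_eq _

/-- major index, tracking the (1-indexed) position `k` of the boundary between
the first two letters. -/
def majGo : ℕ → List ℕ → ℕ
  | _, [] => 0
  | _, [_] => 0
  | k, x :: y :: t => (if y < x then k else 0) + majGo (k+1) (y :: t)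

def wmaj (w : List ℕ) : ℕ := majGo 1 w

lemma majGo_concat (a : ℕ) : ∀ (u : List ℕ) (y k : ℕ),
    majGo k (y :: u ++ [a]) =
      majGo k (y :: u) + (if a < (y :: u).getLast (by simp) then k + u.length else 0) := by
  intro u
  induction u with
  | nil => intro y k; simp [majGo]
  | cons z t ih =>
    intro y k
    have hl : (y :: z :: t).getLast (by simp) = (z :: t).getLast (by simp) := by
      simp [List.getLast_cons]
    have h1 : majGo k (y :: (z :: t) ++ [a])
        = (if z < y then k else 0) + majGo (k+1) (z :: t ++ [a]) := rfl
    rw [h1, ih z (k+1), hl]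
    have h2 : majGo k (y :: z :: t) = (if z < y then k else 0) + majGo (k+1) (z :: t) := rfl
    rw [h2]
    by_cases h : a < (z :: t).getLast (by simp) <;> simp [h, List.length_cons] <;> omega

lemma wmaj_concat (u : List ℕ) (a : ℕ) :
    wmaj (u ++ [a]) = wmaj u +
      (if u.getLast?.any (fun y => decide (a < y)) then u.length else 0) := by
  cases u with
  | nil => simp [wmaj, majGo]
  | cons y t =>
    unfold wmaj
    rw [show (y :: t) ++ [a] = y :: t ++ [a] by simp, majGo_concat]
    have hL : (y :: t).getLast? = some ((y :: t).getLast (by simp)) :=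
      List.getLast?_eq_getLast _
    rw [hL]
    by_cases h : a < (y :: t).getLast (by simp) <;> simp [h, Nat.add_comm]


lemma length_dropWhile_le (pr : ℕ → Bool) (l : List ℕ) :
    (l.dropWhile pr).length ≤ l.length := by
  induction l with
  | nil => simp
  | cons x t ih =>
    rw [List.dropWhile_cons]
    by_cases h : pr x = true <;> simp [h] <;> omega

lemma dropWhile_head_false {pr : ℕ → Bool} : ∀ {v : List ℕ} {x r}, v.dropWhile pr = x :: r →
    pr x = false := by
  intro v
  induction v with
  | nil => intro x r h; simp at h
  | cons y t ih =>
    intro x r h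
    rw [List.dropWhile_cons] at h
    by_cases hy : pr y = true
    · simp [hy] at h; exact ih h
    · simp [hy] at h; rw [← h.1]; simpa using hy

lemma takeWhile_block {pr : ℕ → Bool} : ∀ {p : List ℕ}, (∀ y ∈ p, pr y = true) →
    ∀ {x : ℕ}, pr x = false → ∀ (r : List ℕ), (p ++ x :: r).takeWhile pr = p := by
  intro p
  induction p with
  | nil => intro _ x hx r; simp [List.takeWhile, hx]
  | cons z t ih =>
    intro hp x hx r
    have hz : pr z = true := hp z (by simp)
    simp only [List.cons_append, List.takeWhile_cons, hz]
    simp [ih (fun y hy => hp y (by simp [hy])) hx r]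

lemma dropWhile_block {pr : ℕ → Bool} : ∀ {p : List ℕ}, (∀ y ∈ p, pr y = true) →
    ∀ {x : ℕ}, pr x = false → ∀ (r : List ℕ), (p ++ x :: r).dropWhile pr = x :: r := by
  intro p
  induction p with
  | nil => intro _ x hx r; simp [List.dropWhile, hx]
  | cons z t ih =>
    intro hp x hx r
    have hz : pr z = true := hp z (by simp)
    simp only [List.cons_append, List.dropWhile_cons, hz]
    exact ih (fun y hy => hp y (by simp [hy])) hx r

lemma takeWhile_all {pr : ℕ → Bool} : ∀ {p : List ℕ}, (∀ y ∈ p, pr y = true) →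
    p.takeWhile pr = p := by
  intro p
  induction p with
  | nil => simp
  | cons z t ih =>
    intro hp
    simp only [List.takeWhile_cons, hp z (by simp)]
    simp [ih (fun y hy => hp y (by simp [hy]))]

lemma dropWhile_all {pr : ℕ → Bool} : ∀ {p : List ℕ}, (∀ y ∈ p, pr y = true) →
    p.dropWhile pr = [] := by
  intro p
  induction p with
  | nil => simp
  | cons z t ih =>
    intro hp
    simp only [List.dropWhile_cons, hp z (by simp)]
    simp [ih (fun y hy => hp y (by simp [hy]))]

/-- break the word after each letter satisfying `q`, and move the last letter
of each block to its front -/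
def gB (q : ℕ → Bool) (v : List ℕ) : List ℕ :=
  match h : v.dropWhile (fun x => !q x) with
  | [] => v
  | x :: r => x :: (v.takeWhile (fun x => !q x) ++ gB q r)
termination_by v.length
decreasing_by
  have h2 := List.takeWhile_append_dropWhile (l := v) (p := fun x => !q x)
  have h3 : v.length = (v.takeWhile (fun x => !q x)).length + (x :: r).length := by
    rw [← h, ← List.length_append, h2]
  simp at h3; omega

def dB (q : ℕ → Bool) : List ℕ → List ℕ
  | [] => []
  | x :: v => (v.takeWhile (fun y => !q y) ++ [x]) ++ dB q (v.dropWhile (fun y => !q y))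
termination_by l => l.length
decreasing_by
  simp only [List.length_cons]
  exact Nat.lt_succ_of_le (length_dropWhile_le _ _)

lemma gB_all {q : ℕ → Bool} {v : List ℕ} (h : ∀ x ∈ v, q x = false) : gB q v = v := by
  have hnil : v.dropWhile (fun x => !q x) = [] := by
    rw [List.dropWhile_eq_nil_iff]; intro x hx; simp [h x hx]
  rw [gB]
  split
  · rfl
  · rename_i x r h'
    rw [hnil] at h'
    cases h'

lemma gB_nil (q) : gB q [] = [] := gB_all (by simp)

lemma gB_block {q : ℕ → Bool} {p : List ℕ} (hp : ∀ y ∈ p, q y = false) {x : ℕ}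
    (hx : q x = true) (r : List ℕ) : gB q (p ++ x :: r) = x :: (p ++ gB q r) := by
  have hd : (p ++ x :: r).dropWhile (fun y => !q y) = x :: r :=
    dropWhile_block (by intro y hy; simp [hp y hy]) (by simp [hx]) r
  have ht : (p ++ x :: r).takeWhile (fun y => !q y) = p :=
    takeWhile_block (by intro y hy; simp [hp y hy]) (by simp [hx]) r
  rw [gB]
  split
  · rename_i h'
    rw [hd] at h'; cases h'
  · rename_i x' r' h'
    rw [hd] at h'
    injection h' with e1 e2
    subst e1; subst e2
    rw [ht]

/-- induction principle matching the block structure of `gB` -/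
lemma block_induction (q : ℕ → Bool) (P : List ℕ → Prop)
    (h1 : ∀ v, (∀ x ∈ v, q x = false) → P v)
    (h2 : ∀ p x r, (∀ y ∈ p, q y = false) → q x = true → P r → P (p ++ x :: r)) :
    ∀ v, P v := by
  intro v
  generalize hn : v.length = m
  induction m using Nat.strong_induction_on generalizing v with
  | _ m ih =>
    by_cases hall : ∀ x ∈ v, q x = false
    · exact h1 v hall
    · push_neg at hall
      have hd : v.dropWhile (fun x => !q x) ≠ [] := by
        intro hnil
        rw [List.dropWhile_eq_nil_iff] at hnil
        obtain ⟨x, hx, hqx⟩ := hall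
        have := hnil x hx
        simp at this
        exact hqx this
      obtain ⟨x, r, hxr⟩ := List.exists_cons_of_ne_nil hd
      have hv : v = v.takeWhile (fun x => !q x) ++ x :: r := by
        conv_lhs => rw [← List.takeWhile_append_dropWhile (p := fun x => !q x) (l := v)]
        rw [hxr]
      have hlen : r.length < m := by
        have : v.length = (v.takeWhile (fun x => !q x)).length + (x :: r).length := by
          conv_lhs => rw [hv]
          rw [List.length_append]
        simp at this; omega
      have hqx : q x = true := by
        have := dropWhile_head_false hxr
        simpa using this
      have hptrue : ∀ y ∈ v.takeWhile (fun x => !q x), q y = false := by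
        intro y hy
        have := List.mem_takeWhile_imp hy
        simpa using this
      rw [hv]
      exact h2 _ x r hptrue hqx (ih r.length hlen r rfl)

lemma gB_perm (q : ℕ → Bool) : ∀ v, (gB q v).Perm v := by
  apply block_induction q
  · intro v hall; rw [gB_all hall]
  · intro p x r hp hx ih
    rw [gB_block hp hx]
    refine List.Perm.trans (List.Perm.cons x (List.Perm.append_left p ih)) ?_
    exact (List.perm_middle).symm


lemma countP_eq_sum (p : ℕ → Bool) (l : List ℕ) :
    l.countP p = (l.map fun y => if p y then 1 else 0).sum := by
  induction l with
  | nil => simp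
  | cons x t ih =>
    rw [List.countP_cons]
    by_cases h : p x <;> simp [h, ih] <;> omega

lemma gB_filter_pos {q p : ℕ → Bool} (hpq : ∀ x, p x = true → q x = true) :
    ∀ v, (gB q v).filter p = v.filter p := by
  apply block_induction q
  · intro v hall; rw [gB_all hall]
  · intro pl x r hp hx ih
    rw [gB_block hp hx]
    have hple : pl.filter p = [] := by
      rw [List.filter_eq_nil_iff]
      intro y hy hpy
      have := hpq y hpy
      rw [hp y hy] at this; cases this
    simp only [List.filter_cons, List.filter_append, hple, ih]
    by_cases hpx : p x = true <;> simp [hpx]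

lemma gB_filter_neg {q p : ℕ → Bool} (hpq : ∀ x, p x = true → q x = false) :
    ∀ v, (gB q v).filter p = v.filter p := by
  apply block_induction q
  · intro v hall; rw [gB_all hall]
  · intro pl x r hp hx ih
    rw [gB_block hp hx]
    have hpx : p x = false := by
      by_contra h
      simp only [Bool.not_eq_false] at h
      have := hpq x h; rw [hx] at this; cases this
    simp only [List.filter_cons, List.filter_append, hpx, ih]
    simp

lemma last_complete {q : ℕ → Bool} {p : List ℕ} {x : ℕ} {r : List ℕ}
    (hlast : ∀ h : (p ++ x :: r : List ℕ) ≠ [], q ((p ++ x :: r).getLast h) = true) :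
    ∀ h : r ≠ [], q (r.getLast h) = true := by
  intro h
  have e : (p ++ x :: r).getLast (by simp) = r.getLast h := by
    rw [List.getLast_append_of_ne_nil (by simp [h])]
    exact List.getLast_cons h
  rw [← e]
  exact hlast _

lemma complete_all_false {q : ℕ → Bool} {v : List ℕ} (hall : ∀ x ∈ v, q x = false)
    (hlast : ∀ h : v ≠ [], q (v.getLast h) = true) : v = [] := by
  cases v with
  | nil => rfl
  | cons y t =>
    have h1 := hall _ (List.getLast_mem (l := y :: t) (by simp))
    have h2 := hlast (by simp)
    rw [h1] at h2; cases h2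

lemma gB_inv_le (a : ℕ) :
    ∀ v : List ℕ, (∀ h : v ≠ [], v.getLast h ≤ a) →
      winv v = winv (gB (fun y => decide (y ≤ a)) v) + v.countP (fun y => decide (a < y)) := by
  set q : ℕ → Bool := fun y => decide (y ≤ a) with hq
  suffices H2 : ∀ v : List ℕ, ((∀ h : v ≠ [], v.getLast h ≤ a) →
      winv v = winv (gB q v) + v.countP (fun y => decide (a < y))) by
    intro v hv; exact H2 v hv
  apply block_induction q
  · intro v hall hlast
    have : v = [] := by
      cases v with
      | nil => rfl
      | cons y t =>
        have h1 := hall _ (List.getLast_mem (l := y :: t) (by simp))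
        have h2 := hlast (by simp)
        rw [hq] at h1; simp at h1; omega
    rw [this]
    simp [winv, gB_nil]
  · intro p x r hp hx ih hlast
    have hpgt : ∀ y ∈ p, a < y := by
      intro y hy; have := hp y hy; rw [hq] at this; simp at this; omega
    have hxle : x ≤ a := by rw [hq] at hx; simpa using hx
    have hrlast : ∀ h : r ≠ [], r.getLast h ≤ a := by
      intro h
      have hc := last_complete (q := q) (p := p) (x := x) (r := r) ?_ h
      · rw [hq] at hc; simpa using hc
      · intro h'
        have := hlast h'
        rw [hq]; simpa using this
    have ihr := ih hrlast
    have hperm := gB_perm q r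
    set G := gB q r with hG
    rw [gB_block hp hx]
    rw [winv_append]
    rw [show winv (x :: (p ++ G)) = ((p ++ G).countP fun y => decide (y < x)) + winv (p ++ G) from rfl]
    rw [show winv (x :: r) = (r.countP fun y => decide (y < x)) + winv r from rfl]
    rw [winv_append, List.countP_append, List.countP_append]
    rw [List.countP_cons, cross_cons_right]
    have e1 : G.countP (fun y => decide (y < x)) = r.countP (fun y => decide (y < x)) :=
      hperm.countP_eq _
    have e2 : cross p G = cross p r := cross_perm_right p hperm
    have e3 : p.countP (fun y => decide (y < x)) = 0 := by
      rw [List.countP_eq_zero]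
      intro y hy
      have := hpgt y hy
      simp; omega
    have e4 : p.countP (fun y => decide (a < y)) = p.length := by
      rw [List.countP_eq_length]
      intro y hy
      simpa using hpgt y hy
    have e5 : p.countP (fun y => decide (x < y)) = p.length := by
      rw [List.countP_eq_length]
      intro y hy
      have := hpgt y hy
      simp; omega
    have e6 : (decide (a < x) : Bool) = false := by simp; omega
    rw [e1, e2, e3, e4, e5, e6]
    simp only [if_neg (by simp : ¬ (false = true))]
    omega

lemma gB_inv_gt (a : ℕ) :
    ∀ v : List ℕ, (∀ h : v ≠ [], a < v.getLast h) →
      winv (gB (fun y => decide (a < y)) v) = winv v + v.countP (fun y => decide (y ≤ a)) := by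
  set q : ℕ → Bool := fun y => decide (a < y) with hq
  suffices H2 : ∀ v : List ℕ, ((∀ h : v ≠ [], a < v.getLast h) →
      winv (gB q v) = winv v + v.countP (fun y => decide (y ≤ a))) by
    intro v hv; exact H2 v hv
  apply block_induction q
  · intro v hall hlast
    have : v = [] := by
      cases v with
      | nil => rfl
      | cons y t =>
        have h1 := hall _ (List.getLast_mem (l := y :: t) (by simp))
        have h2 := hlast (by simp)
        rw [hq] at h1; simp at h1; omega
    rw [this]
    simp [winv, gB_nil]
  · intro p x r hp hx ih hlast
    have hple : ∀ y ∈ p, y ≤ a := by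
      intro y hy; have := hp y hy; rw [hq] at this; simp at this; omega
    have hxgt : a < x := by rw [hq] at hx; simpa using hx
    have hrlast : ∀ h : r ≠ [], a < r.getLast h := by
      intro h
      have hc := last_complete (q := q) (p := p) (x := x) (r := r) ?_ h
      · rw [hq] at hc; simpa using hc
      · intro h'
        have := hlast h'
        rw [hq]; simpa using this
    have ihr := ih hrlast
    have hperm := gB_perm q r
    set G := gB q r with hG
    rw [gB_block hp hx]
    rw [winv_append]
    rw [show winv (x :: (p ++ G)) = ((p ++ G).countP fun y => decide (y < x)) + winv (p ++ G) from rfl]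
    rw [show winv (x :: r) = (r.countP fun y => decide (y < x)) + winv r from rfl]
    rw [winv_append, List.countP_append, List.countP_append]
    rw [List.countP_cons, cross_cons_right]
    have e1 : G.countP (fun y => decide (y < x)) = r.countP (fun y => decide (y < x)) :=
      hperm.countP_eq _
    have e2 : cross p G = cross p r := cross_perm_right p hperm
    have e3 : p.countP (fun y => decide (x < y)) = 0 := by
      rw [List.countP_eq_zero]
      intro y hy
      have := hple y hy
      simp; omega
    have e4 : p.countP (fun y => decide (y ≤ a)) = p.length := by
      rw [List.countP_eq_length]
      intro y hy
      simpa using hple y hy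
    have e5 : p.countP (fun y => decide (y < x)) = p.length := by
      rw [List.countP_eq_length]
      intro y hy
      have := hple y hy
      simp; omega
    have e6 : (decide (x ≤ a) : Bool) = false := by simp; omega
    rw [e1, e2, e3, e4, e5, e6]
    simp only [if_neg (by simp : ¬ (false = true))]
    omega

lemma dB_cons (q : ℕ → Bool) (x : ℕ) (v : List ℕ) :
    dB q (x :: v) = (v.takeWhile (fun y => !q y) ++ [x]) ++ dB q (v.dropWhile (fun y => !q y)) := by
  rw [dB]

lemma dB_block {q : ℕ → Bool} {p : List ℕ} (hp : ∀ y ∈ p, q y = false) (x : ℕ)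
    {w : List ℕ} (hw : ∀ h : w ≠ [], q (w.head h) = true) :
    dB q (x :: (p ++ w)) = (p ++ [x]) ++ dB q w := by
  rw [dB_cons]
  cases w with
  | nil =>
    rw [List.append_nil, takeWhile_all (by intro y hy; simp [hp y hy]),
      dropWhile_all (by intro y hy; simp [hp y hy])]
  | cons z t =>
    have hz : q z = true := hw (by simp)
    rw [takeWhile_block (by intro y hy; simp [hp y hy]) (by simp [hz]) t,
      dropWhile_block (by intro y hy; simp [hp y hy]) (by simp [hz]) t]

lemma gB_head (q : ℕ → Bool) (r : List ℕ) (hl : ∀ h : r ≠ [], q (r.getLast h) = true) :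
    ∀ h : gB q r ≠ [], q ((gB q r).head h) = true := by
  by_cases hall : ∀ x ∈ r, q x = false
  · have : r = [] := complete_all_false hall hl
    subst this
    rw [gB_nil]
    intro h; cases h rfl
  · push_neg at hall
    have hd : r.dropWhile (fun x => !q x) ≠ [] := by
      intro hnil
      rw [List.dropWhile_eq_nil_iff] at hnil
      obtain ⟨x, hx, hqx⟩ := hall
      have := hnil x hx
      simp at this
      exact hqx this
    obtain ⟨x, r2, hxr⟩ := List.exists_cons_of_ne_nil hd
    have hqx : q x = true := by
      have := dropWhile_head_false hxr
      simpa using this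
    have hptrue : ∀ y ∈ r.takeWhile (fun x => !q x), q y = false := by
      intro y hy
      have := List.mem_takeWhile_imp hy
      simpa using this
    have hv : r = r.takeWhile (fun x => !q x) ++ x :: r2 := by
      conv_lhs => rw [← List.takeWhile_append_dropWhile (p := fun x => !q x) (l := r)]
      rw [hxr]
    rw [hv, gB_block hptrue hqx]
    intro _
    simpa using hqx

lemma dB_gB (q : ℕ → Bool) : ∀ v : List ℕ, (∀ h : v ≠ [], q (v.getLast h) = true) →
    dB q (gB q v) = v := by
  suffices H2 : ∀ v : List ℕ, ((∀ h : v ≠ [], q (v.getLast h) = true) →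
      dB q (gB q v) = v) by
    intro v hv; exact H2 v hv
  apply block_induction q
  · intro v hall hlast
    rw [complete_all_false hall hlast]
    rw [gB_nil]
    rw [dB]
  · intro p x r hp hx ih hlast
    have hrlast := last_complete (q := q) (p := p) (x := x) (r := r) hlast
    rw [gB_block hp hx, dB_block hp x (gB_head q r hrlast), ih hrlast]
    simp


/-- one Foata step: case on the last letter of `v` -/
def gam (a : ℕ) (v : List ℕ) : List ℕ :=
  if v.getLast?.any (fun x => decide (x ≤ a)) then gB (fun y => decide (y ≤ a)) v
  else gB (fun y => decide (a < y)) v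

def del (a : ℕ) (u : List ℕ) : List ℕ :=
  if u.head?.any (fun x => decide (x ≤ a)) then dB (fun y => decide (y ≤ a)) u
  else dB (fun y => decide (a < y)) u

lemma gam_nil (a : ℕ) : gam a [] = [] := by
  simp [gam, gB_nil]

lemma gam_perm (a : ℕ) (v : List ℕ) : (gam a v).Perm v := by
  unfold gam
  split <;> exact gB_perm _ v

lemma getLast?_eq (v : List ℕ) (h : v ≠ []) : v.getLast? = some (v.getLast h) :=
  List.getLast?_eq_getLast h

lemma gam_of_last_le {a : ℕ} {v : List ℕ} (h : v ≠ []) (hle : v.getLast h ≤ a) :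
    gam a v = gB (fun y => decide (y ≤ a)) v := by
  unfold gam
  rw [getLast?_eq v h]
  simp [hle]

lemma gam_of_last_gt {a : ℕ} {v : List ℕ} (h : v ≠ []) (hgt : a < v.getLast h) :
    gam a v = gB (fun y => decide (a < y)) v := by
  unfold gam
  rw [getLast?_eq v h]
  simp; omega

lemma del_gam (a : ℕ) (v : List ℕ) : del a (gam a v) = v := by
  rcases eq_or_ne v [] with rfl | hne
  · rw [gam_nil]; simp [del, dB]
  by_cases hle : v.getLast hne ≤ a
  · rw [gam_of_last_le hne hle]
    set q : ℕ → Bool := fun y => decide (y ≤ a) with hq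
    have hcomp : ∀ h : v ≠ [], q (v.getLast h) = true := by
      intro h; simp [hq, hle]
    have hhead := gB_head q v hcomp
    have hgne : gB q v ≠ [] := by
      intro h0
      have := (gB_perm q v).length_eq
      rw [h0] at this
      simp at this
      exact hne (List.length_eq_zero_iff.mp this.symm)
    unfold del
    rw [List.head?_eq_head hgne]
    have hh : ((gB q v).head hgne) ≤ a := of_decide_eq_true (hhead hgne)
    have hc : (some ((gB q v).head hgne)).any (fun x => decide (x ≤ a)) = true := by
      simpa using hh
    rw [if_pos hc]
    exact dB_gB q v hcomp
  · push_neg at hle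
    rw [gam_of_last_gt hne hle]
    set q : ℕ → Bool := fun y => decide (a < y) with hq
    have hcomp : ∀ h : v ≠ [], q (v.getLast h) = true := by
      intro h; simp [hq]; omega
    have hhead := gB_head q v hcomp
    have hgne : gB q v ≠ [] := by
      intro h0
      have := (gB_perm q v).length_eq
      rw [h0] at this
      simp at this
      exact hne (List.length_eq_zero_iff.mp this.symm)
    unfold del
    rw [List.head?_eq_head hgne]
    have hh : a < ((gB q v).head hgne) := of_decide_eq_true (hhead hgne)
    have hc : ¬ ((some ((gB q v).head hgne)).any (fun x => decide (x ≤ a)) = true) := by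
      simp; omega
    rw [if_neg hc]
    exact dB_gB q v hcomp

lemma gam_filter {a : ℕ} {p : ℕ → Bool}
    (hp : (∀ x, p x = true → x ≤ a) ∨ (∀ x, p x = true → a < x)) (v : List ℕ) :
    (gam a v).filter p = v.filter p := by
  unfold gam
  rcases hp with hp | hp
  · split
    · exact gB_filter_pos (fun x hx => by simpa using hp x hx) v
    · exact gB_filter_neg (fun x hx => by have := hp x hx; simp; omega) v
  · split
    · exact gB_filter_neg (fun x hx => by have := hp x hx; simp; omega) v
    · exact gB_filter_pos (fun x hx => by have := hp x hx; simpa using this) v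

lemma gam_inv_le {a : ℕ} {v : List ℕ} (h : v ≠ []) (hle : v.getLast h ≤ a) :
    winv (gam a v ++ [a]) = winv v := by
  rw [winv_concat, gam_of_last_le h hle]
  have e := (gB_perm (fun y => decide (y ≤ a)) v).countP_eq (fun y => decide (a < y))
  rw [e]
  have := gB_inv_le a v (fun _ => hle)
  omega

lemma gam_inv_gt {a : ℕ} {v : List ℕ} (h : v ≠ []) (hgt : a < v.getLast h) :
    winv (gam a v ++ [a]) = winv v + v.length := by
  rw [winv_concat, gam_of_last_gt h hgt]
  have e := (gB_perm (fun y => decide (a < y)) v).countP_eq (fun y => decide (a < y))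
  rw [e]
  have h2 := gB_inv_gt a v (fun _ => hgt)
  have h4 := List.length_eq_countP_add_countP (fun y => decide (a < y)) (l := v)
  have h5 : v.countP (fun y => decide (¬ decide (a < y) = true))
      = v.countP (fun y => decide (y ≤ a)) := by
    apply List.countP_congr
    intro x _
    simp
  omega

/-- Foata's bijection, on the reversed word: `Frec [aₖ,…,a₁]` is
`φ (a₁ ⋯ aₖ)`. -/
def Frec : List ℕ → List ℕ
  | [] => []
  | a :: r => gam a (Frec r) ++ [a]

lemma Frec_perm : ∀ r : List ℕ, (Frec r).Perm r
  | [] => List.Perm.refl []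
  | a :: r => by
    show (gam a (Frec r) ++ [a]).Perm (a :: r)
    refine ((List.perm_append_singleton _ _).trans ?_)
    exact List.Perm.cons a ((gam_perm a (Frec r)).trans (Frec_perm r))

lemma Frec_getLast? (r : List ℕ) : (Frec r).getLast? = r.head? := by
  cases r with
  | nil => rfl
  | cons a t =>
    show (gam a (Frec t) ++ [a]).getLast? = some a
    rw [List.getLast?_concat]

lemma Frec_nil_iff (r : List ℕ) : Frec r = [] ↔ r = [] := by
  constructor
  · intro h
    have := (Frec_perm r).length_eq
    rw [h] at this
    simpa using (List.length_eq_zero_iff.mp this.symm)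
  · intro h; rw [h]; rfl

/-- the fundamental property: inversions of the image = major index -/
lemma Frec_winv (r : List ℕ) : winv (Frec r) = wmaj r.reverse := by
  induction r with
  | nil => rfl
  | cons a t ih =>
    rw [List.reverse_cons]
    show winv (gam a (Frec t) ++ [a]) = wmaj (t.reverse ++ [a])
    rw [wmaj_concat, List.getLast?_reverse]
    rcases eq_or_ne t [] with rfl | hne
    · rw [show Frec [] = [] from rfl, gam_nil]
      simp [winv, wmaj, majGo]
    · have hFne : Frec t ≠ [] := by
        rw [ne_eq, Frec_nil_iff]; exact hne
      have hlast : (Frec t).getLast hFne = t.head (by exact hne) := by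
        have h1 := Frec_getLast? t
        rw [getLast?_eq _ hFne, List.head?_eq_head hne] at h1
        exact Option.some.inj h1
      by_cases hle : t.head hne ≤ a
      · rw [gam_inv_le hFne (by rw [hlast]; exact hle), ih]
        rw [List.head?_eq_head hne]
        have : ¬ (a < t.head hne) := by omega
        simp [this]
      · push_neg at hle
        rw [gam_inv_gt hFne (by rw [hlast]; exact hle), ih]
        rw [List.head?_eq_head hne]
        have := (Frec_perm t).length_eq
        simp [hle, this]

lemma Frec_inj : ∀ r r' : List ℕ, Frec r = Frec r' → r = r' := by
  intro r
  induction r with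
  | nil =>
    intro r' h
    cases r' with
    | nil => rfl
    | cons a t =>
      exfalso
      have : Frec (a :: t) = [] := h.symm
      rw [Frec_nil_iff] at this
      cases this
  | cons a t ih =>
    intro r' h
    cases r' with
    | nil =>
      exfalso
      have : Frec (a :: t) = [] := h
      rw [Frec_nil_iff] at this
      cases this
    | cons a' t' =>
      have h1 : gam a (Frec t) ++ [a] = gam a' (Frec t') ++ [a'] := h
      have ha : a = a' := by
        have := congrArg List.getLast? h1
        rw [List.getLast?_concat, List.getLast?_concat] at this
        exact Option.some.inj this
      subst ha
      have h2 : gam a (Frec t) = gam a (Frec t') := List.append_cancel_right h1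
      have h3 : Frec t = Frec t' := by
        have := congrArg (del a) h2
        rwa [del_gam, del_gam] at this
      rw [ih t' h3]

/-- the pair predicate selecting the letters `c` and `c+1` -/
def pc (c : ℕ) : ℕ → Bool := fun x => decide (x = c) || decide (x = c + 1)

lemma gam_filter_pair (a c : ℕ) {X : List ℕ} (ha : a ∉ X) :
    (gam a X).filter (pc c) = X.filter (pc c) := by
  rcases lt_trichotomy a c with hac | rfl | hca
  · -- both c, c+1 are > a
    apply gam_filter
    right
    intro x hx
    unfold pc at hx
    simp at hx
    omega
  · -- a = c : the other letter is a+1 > a, and a does not occur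
    have hag : a ∉ gam a X := fun hmem => ha ((gam_perm a X).mem_iff.mp hmem)
    have e1 : (gam a X).filter (pc a) = (gam a X).filter (fun x => decide (x = a + 1)) := by
      apply List.filter_congr
      intro x hx
      unfold pc
      have : x ≠ a := fun h => hag (h ▸ hx)
      simp [this]
    have e2 : X.filter (pc a) = X.filter (fun x => decide (x = a + 1)) := by
      apply List.filter_congr
      intro x hx
      unfold pc
      have : x ≠ a := fun h => ha (h ▸ hx)
      simp [this]
    rw [e1, e2]
    apply gam_filter
    right
    intro x hx
    simp at hx
    omega
  · -- both c, c+1 are ≤ a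
    apply gam_filter
    left
    intro x hx
    unfold pc at hx
    simp at hx
    omega

lemma Frec_filter (c : ℕ) : ∀ r : List ℕ, r.Nodup →
    (Frec r).filter (pc c) = r.reverse.filter (pc c) := by
  intro r
  induction r with
  | nil => intro _; rfl
  | cons a t ih =>
    intro hnd
    rw [List.nodup_cons] at hnd
    have ha : a ∉ Frec t := fun hmem => hnd.1 ((Frec_perm t).mem_iff.mp hmem)
    show (gam a (Frec t) ++ [a]).filter (pc c) = ((a :: t).reverse).filter (pc c)
    rw [List.reverse_cons, List.filter_append, List.filter_append,
      gam_filter_pair a c ha, ih hnd.2]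

def wordOf (n : ℕ) (σ : Equiv.Perm (Fin n)) : List ℕ := List.ofFn (fun i => (σ i : ℕ))

lemma countP_ofFn (p : ℕ → Bool) : ∀ {m : ℕ} (g : Fin m → ℕ),
    (List.ofFn g).countP p = ∑ j : Fin m, if p (g j) then 1 else 0 := by
  intro m
  induction m with
  | zero => intro g; simp
  | succ m ih =>
    intro g
    rw [List.ofFn_succ, List.countP_cons, ih (fun i => g i.succ), Fin.sum_univ_succ]
    omega

lemma winv_ofFn : ∀ {m : ℕ} (f : Fin m → ℕ),
    winv (List.ofFn f) = ∑ i : Fin m, ∑ j : Fin m,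
      if i < j ∧ f j < f i then 1 else 0 := by
  intro m
  induction m with
  | zero => intro f; simp [winv]
  | succ m ih =>
    intro f
    rw [List.ofFn_succ]
    rw [show winv (f 0 :: List.ofFn fun i => f i.succ)
      = (List.ofFn fun i => f i.succ).countP (fun y => decide (y < f 0))
        + winv (List.ofFn fun i => f i.succ) from rfl]
    rw [countP_ofFn, ih (fun i => f i.succ), Fin.sum_univ_succ]
    congr 1
    · -- i = 0 column
      rw [Fin.sum_univ_succ]
      have h0 : (if (0 : Fin (m+1)) < 0 ∧ f 0 < f 0 then 1 else 0) = 0 := by simp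
      rw [h0]
      simp only [zero_add]
      apply Finset.sum_congr rfl
      intro j _
      have : ((0 : Fin (m+1)) < j.succ) := Fin.succ_pos j
      by_cases h : f j.succ < f 0 <;> simp [h, this]
    · -- i = succ
      apply Finset.sum_congr rfl
      intro i _
      rw [Fin.sum_univ_succ]
      have h0 : (if i.succ < 0 ∧ f 0 < f i.succ then 1 else 0) = 0 := by
        simp [Fin.not_lt_zero]
      rw [h0, zero_add]
      apply Finset.sum_congr rfl
      intro j _
      simp [Fin.succ_lt_succ_iff]

lemma permInv_eq_sum (n : ℕ) (σ : Equiv.Perm (Fin n)) :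
    permInv n σ = ∑ i : Fin n, ∑ j : Fin n,
      if i < j ∧ σ j < σ i then 1 else 0 := by
  unfold permInv
  classical
  rw [Finset.card_filter]
  rw [← Finset.univ_product_univ, Finset.sum_product]

lemma permInv_eq_winv (n : ℕ) (σ : Equiv.Perm (Fin n)) :
    permInv n σ = winv (wordOf n σ) := by
  rw [permInv_eq_sum, wordOf, winv_ofFn]
  apply Finset.sum_congr rfl
  intro i _
  apply Finset.sum_congr rfl
  intro j _
  rfl

lemma permInv_inv (n : ℕ) (σ : Equiv.Perm (Fin n)) :
    permInv n σ⁻¹ = permInv n σ := by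
  unfold permInv
  classical
  apply Finset.card_bij (fun p _ => ((σ⁻¹ p.2 : Fin n), (σ⁻¹ p.1 : Fin n)))
  · intro p hp
    simp only [Finset.mem_filter, Finset.mem_univ, true_and] at hp ⊢
    refine ⟨hp.2, ?_⟩
    simpa using hp.1
  · intro p hp p' hp' h
    simp only [Prod.mk.injEq] at h
    have h1 : p.2 = p'.2 := σ⁻¹.injective h.1
    have h2 : p.1 = p'.1 := σ⁻¹.injective h.2
    exact Prod.ext h2 h1
  · intro p hp
    simp only [Finset.mem_filter, Finset.mem_univ, true_and] at hp
    refine ⟨((σ p.2 : Fin n), (σ p.1 : Fin n)), ?_, ?_⟩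
    · simp only [Finset.mem_filter, Finset.mem_univ, true_and]
      refine ⟨hp.2, ?_⟩
      simpa using hp.1
    · simp

/-- extension of a `Fin`-indexed word to ℕ indices -/
def ext (m : ℕ) (f : Fin m → ℕ) : ℕ → ℕ := fun i => if h : i < m then f ⟨i, h⟩ else 0

lemma majGo_ofFn : ∀ (m : ℕ) (f : Fin m → ℕ) (k : ℕ),
    majGo k (List.ofFn f) = ∑ i ∈ Finset.range (m - 1),
      if ext m f (i+1) < ext m f i then k + i else 0 := by
  intro m
  induction m with
  | zero => intro f k; simp [majGo]
  | succ m ih =>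
    intro f k
    cases m with
    | zero => simp [majGo, List.ofFn_succ]
    | succ m' =>
      rw [List.ofFn_succ]
      rw [List.ofFn_succ (f := fun i => f i.succ)]
      rw [show majGo k (f 0 :: f (0:Fin (m'+1)).succ :: List.ofFn fun i => f i.succ.succ)
        = (if f (0:Fin (m'+1)).succ < f 0 then k else 0)
          + majGo (k+1) (f (0:Fin (m'+1)).succ :: List.ofFn fun i => f i.succ.succ) from rfl]
      rw [← List.ofFn_succ (f := fun i => f i.succ)]
      rw [ih (fun i => f i.succ) (k+1)]
      have hext : ∀ i : ℕ, ext (m'+1) (fun i => f i.succ) i = ext (m'+2) f (i+1) := by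
        intro i
        unfold ext
        by_cases h : i < m' + 1
        · rw [dif_pos h, dif_pos (by omega)]
          congr 1
        · rw [dif_neg h, dif_neg (by omega)]
      rw [show m' + 1 + 1 - 1 = (m' + 1 - 1) + 1 by omega]
      rw [Finset.sum_range_succ']
      have e0 : (if ext (m'+2) f (0+1) < ext (m'+2) f 0 then k + 0 else 0)
          = if f (0:Fin (m'+1)).succ < f 0 then k else 0 := by
        unfold ext
        rw [dif_pos (by omega), dif_pos (by omega)]
        have : f ⟨0+1, by omega⟩ = f (0:Fin (m'+1)).succ := by congr 1
        rw [this]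
        simp
        rfl
      rw [e0]
      rw [Nat.add_comm]
      congr 1
      apply Finset.sum_congr rfl
      intro i _
      rw [hext i, hext (i+1)]
      by_cases h : ext (m'+2) f (i+1+1) < ext (m'+2) f (i+1) <;> simp [h] <;> omega

lemma wmaj_wordOf (n : ℕ) (σ : Equiv.Perm (Fin n)) :
    wmaj (wordOf n σ) = permMaj n σ := by
  unfold wmaj wordOf
  rw [majGo_ofFn]
  unfold permMaj permDes
  rw [Finset.sum_filter]
  have hIcc : Finset.Icc 1 (n-1) = Finset.Ico 1 n := by
    cases n with
    | zero => rfl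
    | succ m => rw [← Finset.Ico_add_one_right_eq_Icc, Nat.succ_sub_one]
  rw [hIcc, Finset.sum_Ico_eq_sum_range]
  apply Finset.sum_congr rfl
  intro i hi
  rw [Finset.mem_range] at hi
  have h2 : 1 + i < n := by omega
  have h1 : i < n := by omega
  have hcond : (∃ (hh1 : 1 + i - 1 < n) (hh2 : 1 + i < n),
      σ ⟨1 + i, hh2⟩ < σ ⟨1 + i - 1, hh1⟩) ↔
      (ext n (fun j => (σ j : ℕ)) (i+1) < ext n (fun j => (σ j : ℕ)) i) := by
    unfold ext
    rw [dif_pos (by omega : i + 1 < n), dif_pos h1]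
    constructor
    · rintro ⟨hh1, hh2, hlt⟩
      have e1 : (⟨1 + i, hh2⟩ : Fin n) = ⟨i + 1, by omega⟩ := by
        congr 1; omega
      have e2 : (⟨1 + i - 1, hh1⟩ : Fin n) = ⟨i, h1⟩ := by
        congr 1; omega
      rw [e1, e2] at hlt
      exact hlt
    · intro hlt
      refine ⟨by omega, h2, ?_⟩
      have e1 : (⟨1 + i, h2⟩ : Fin n) = ⟨i + 1, by omega⟩ := by
        congr 1; omega
      have e2 : (⟨1 + i - 1, by omega⟩ : Fin n) = ⟨i, h1⟩ := by
        congr 1; omega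
      rw [e1, e2]
      exact hlt
  rcases Classical.em (ext n (fun j => (σ j : ℕ)) (i+1) < ext n (fun j => (σ j : ℕ)) i) with h | h
  · rw [if_pos h, if_pos (hcond.mpr h)]
  · rw [if_neg h, if_neg (fun hc => h (hcond.mp hc))]

lemma notmem_ofFn_succ {m : ℕ} (f : Fin (m+1) → ℕ) (hinj : Function.Injective f) :
    f 0 ∉ List.ofFn (fun i : Fin m => f i.succ) := by
  intro hmem
  rw [List.mem_ofFn] at hmem
  obtain ⟨k, hk⟩ := hmem
  have := hinj hk
  exact (Fin.succ_ne_zero k) this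

lemma filter_single : ∀ {m : ℕ} (g : Fin m → ℕ), Function.Injective g → ∀ (j : Fin m),
    (List.ofFn g).filter (fun x => decide (x = g j)) = [g j] := by
  intro m
  induction m with
  | zero => intro g _ j; exact absurd j.isLt (by omega)
  | succ m ih =>
    intro g hinj j
    rw [List.ofFn_succ, List.filter_cons]
    rcases Fin.eq_zero_or_eq_succ j with rfl | ⟨j', rfl⟩
    · rw [if_pos (by simp)]
      have : (List.ofFn fun i : Fin m => g i.succ).filter (fun x => decide (x = g 0)) = [] := by
        rw [List.filter_eq_nil_iff]
        intro x hx hpx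
        simp at hpx
        rw [hpx] at hx
        exact notmem_ofFn_succ g hinj hx
      rw [this]
    · have h0 : ¬ (g 0 = g j'.succ) := fun h => (Fin.succ_ne_zero j') (hinj h).symm
      rw [if_neg (by simp [h0])]
      have hinj' : Function.Injective (fun i : Fin m => g i.succ) := by
        intro x y hxy
        have := hinj hxy
        exact Fin.succ_injective _ this
      exact ih (fun i => g i.succ) hinj' j'

lemma filter_pair : ∀ {m : ℕ} (f : Fin m → ℕ), Function.Injective f →
    ∀ (i j : Fin m), i ≠ j →
    (List.ofFn f).filter (fun x => decide (x = f i) || decide (x = f j)) =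
      if (i : ℕ) < (j : ℕ) then [f i, f j] else [f j, f i] := by
  intro m
  induction m with
  | zero => intro f _ i; exact absurd i.isLt (by omega)
  | succ m ih =>
    intro f hinj i j hij
    have hinj' : Function.Injective (fun i : Fin m => f i.succ) := by
      intro x y hxy
      exact Fin.succ_injective _ (hinj hxy)
    rw [List.ofFn_succ, List.filter_cons]
    rcases Fin.eq_zero_or_eq_succ i with rfl | ⟨i', rfl⟩
    · -- i = 0
      obtain ⟨j', rfl⟩ : ∃ j', j = Fin.succ j' := by
        rcases Fin.eq_zero_or_eq_succ j with rfl | h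
        · exact absurd rfl hij
        · exact h
      rw [if_pos (by simp)]
      have e1 : (List.ofFn fun i : Fin m => f i.succ).filter
          (fun x => decide (x = f 0) || decide (x = f j'.succ))
          = (List.ofFn fun i : Fin m => f i.succ).filter (fun x => decide (x = f j'.succ)) := by
        apply List.filter_congr
        intro x hx
        have : x ≠ f 0 := by
          intro h
          rw [h] at hx
          exact notmem_ofFn_succ f hinj hx
        simp [this]
      rw [e1, filter_single (fun i : Fin m => f i.succ) hinj' j']
      have hlt : ((0 : Fin (m+1)) : ℕ) < (j'.succ : ℕ) := by simp
      rw [if_pos hlt]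
    · rcases Fin.eq_zero_or_eq_succ j with rfl | ⟨j', rfl⟩
      · -- j = 0, i = succ
        have h0 : ¬ (f 0 = f i'.succ) := fun h => (Fin.succ_ne_zero i') (hinj h).symm
        rw [if_pos (by simp)]
        have e1 : (List.ofFn fun i : Fin m => f i.succ).filter
            (fun x => decide (x = f i'.succ) || decide (x = f 0))
            = (List.ofFn fun i : Fin m => f i.succ).filter (fun x => decide (x = f i'.succ)) := by
          apply List.filter_congr
          intro x hx
          have : x ≠ f 0 := by
            intro h
            rw [h] at hx
            exact notmem_ofFn_succ f hinj hx
          simp [this]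
        rw [e1, filter_single (fun i : Fin m => f i.succ) hinj' i']
        have hnlt : ¬ ((i'.succ : ℕ) < ((0 : Fin (m+1)) : ℕ)) := by simp
        rw [if_neg hnlt]
      · -- both succ
        have hne0i : ¬ (f 0 = f i'.succ) := fun h => (Fin.succ_ne_zero i') (hinj h).symm
        have hne0j : ¬ (f 0 = f j'.succ) := fun h => (Fin.succ_ne_zero j') (hinj h).symm
        rw [if_neg (by simp [hne0i, hne0j])]
        have hij' : i' ≠ j' := by
          intro h; exact hij (by rw [h])
        have key := ih (fun i => f i.succ) hinj' i' j' hij'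
        by_cases h : (i' : ℕ) < (j' : ℕ) <;>
          simp [key, h, Fin.val_succ]

lemma wordOf_filter_pair (n : ℕ) (τ : Equiv.Perm (Fin n)) (c : ℕ) (hc : c + 1 < n) :
    (wordOf n τ).filter (pc c) =
      if ((τ⁻¹ ⟨c, by omega⟩ : Fin n) : ℕ) < ((τ⁻¹ ⟨c+1, hc⟩ : Fin n) : ℕ)
      then [c, c+1] else [c+1, c] := by
  have hinj : Function.Injective (fun i : Fin n => ((τ i : Fin n) : ℕ)) := by
    intro x y hxy
    exact τ.injective (Fin.val_injective hxy)
  have hij : τ⁻¹ ⟨c, by omega⟩ ≠ τ⁻¹ ⟨c+1, hc⟩ := by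
    intro h
    have h2 : (⟨c, by omega⟩ : Fin n) = ⟨c+1, hc⟩ := τ⁻¹.injective h
    have := congrArg Fin.val h2
    simp at this
  have key := filter_pair (fun i : Fin n => ((τ i : Fin n) : ℕ)) hinj
    (τ⁻¹ ⟨c, by omega⟩) (τ⁻¹ ⟨c+1, hc⟩) hij
  have e1 : ((τ (τ⁻¹ ⟨c, by omega⟩) : Fin n) : ℕ) = c := by
    rw [← Equiv.Perm.mul_apply, mul_inv_cancel, Equiv.Perm.one_apply]
  have e2 : ((τ (τ⁻¹ ⟨c+1, hc⟩) : Fin n) : ℕ) = c + 1 := by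
    rw [← Equiv.Perm.mul_apply, mul_inv_cancel, Equiv.Perm.one_apply]
  beta_reduce at key
  simp only [e1, e2] at key
  have epc : (wordOf n τ).filter (pc c)
      = (wordOf n τ).filter (fun x => decide (x = c) || decide (x = c+1)) := rfl
  rw [epc]
  rw [wordOf]
  exact key

lemma if_eq_iff_of_ne {A B : Prop} [Decidable A] [Decidable B] {α : Type*} {x y : α}
    (hxy : x ≠ y) (h : (if A then x else y) = (if B then x else y)) : A ↔ B := by
  by_cases hA : A <;> by_cases hB : B <;> simp [hA, hB] at h ⊢ <;> first
    | exact hxy h | exact hxy h.symm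

lemma permDes_eq_of_filters {n : ℕ} (τ τ' : Equiv.Perm (Fin n))
    (h : ∀ c, (wordOf n τ').filter (pc c) = (wordOf n τ).filter (pc c)) :
    permDes n τ'⁻¹ = permDes n τ⁻¹ := by
  have main : ∀ (ρ ρ' : Equiv.Perm (Fin n)), (∀ c, (wordOf n ρ').filter (pc c) = (wordOf n ρ).filter (pc c)) →
      ∀ c, (hcn : c + 1 < n) →
      (((ρ'⁻¹ ⟨c+1, hcn⟩ : Fin n) : ℕ) < ((ρ'⁻¹ ⟨c, by omega⟩ : Fin n) : ℕ) →
       ((ρ⁻¹ ⟨c+1, hcn⟩ : Fin n) : ℕ) < ((ρ⁻¹ ⟨c, by omega⟩ : Fin n) : ℕ)) := by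
    intro ρ ρ' hfil c hcn hlt
    have hf := hfil c
    rw [wordOf_filter_pair n ρ c hcn, wordOf_filter_pair n ρ' c hcn] at hf
    have hne : ([c, c+1] : List ℕ) ≠ [c+1, c] := by
      intro hl
      have := List.head_eq_of_cons_eq hl
      omega
    have hiff := if_eq_iff_of_ne hne hf
    -- distinctness for ρ
    have hne2 : ((ρ⁻¹ ⟨c, by omega⟩ : Fin n) : ℕ) ≠ ((ρ⁻¹ ⟨c+1, hcn⟩ : Fin n) : ℕ) := by
      intro he
      have h2 : (ρ⁻¹ ⟨c, by omega⟩ : Fin n) = ρ⁻¹ ⟨c+1, hcn⟩ := Fin.val_injective he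
      have h3 := ρ⁻¹.injective h2
      have := congrArg Fin.val h3
      simp at this
    have hA : ¬ (((ρ'⁻¹ ⟨c, by omega⟩ : Fin n) : ℕ) < ((ρ'⁻¹ ⟨c+1, hcn⟩ : Fin n) : ℕ)) := by
      omega
    have hB := fun hb => hA (hiff.mpr hb)
    omega
  unfold permDes
  ext i
  simp only [Finset.mem_filter]
  constructor
  · rintro ⟨hicc, hh1, hh2, hlt⟩
    refine ⟨hicc, hh1, hh2, ?_⟩
    rw [Finset.mem_Icc] at hicc
    obtain ⟨c, rfl⟩ : ∃ c, i = c + 1 := ⟨i - 1, by omega⟩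
    have hcn : c + 1 < n := hh2
    have e2 : (⟨c + 1 - 1, hh1⟩ : Fin n) = ⟨c, by omega⟩ := by
      apply Fin.ext; simp
    rw [e2] at hlt ⊢
    have := main τ τ' h c hcn (by exact hlt)
    exact this
  · rintro ⟨hicc, hh1, hh2, hlt⟩
    refine ⟨hicc, hh1, hh2, ?_⟩
    rw [Finset.mem_Icc] at hicc
    obtain ⟨c, rfl⟩ : ∃ c, i = c + 1 := ⟨i - 1, by omega⟩
    have hcn : c + 1 < n := hh2
    have e2 : (⟨c + 1 - 1, hh1⟩ : Fin n) = ⟨c, by omega⟩ := by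
      apply Fin.ext; simp
    rw [e2] at hlt ⊢
    have hsymm : ∀ c, (wordOf n τ).filter (pc c) = (wordOf n τ').filter (pc c) :=
      fun c => (h c).symm
    have := main τ' τ hsymm c hcn (by exact hlt)
    exact this

lemma wordOf_nodup (n : ℕ) (σ : Equiv.Perm (Fin n)) : (wordOf n σ).Nodup := by
  rw [wordOf, List.nodup_ofFn]
  intro x y hxy
  exact σ.injective (Fin.val_injective hxy)

lemma wordOf_length (n : ℕ) (σ : Equiv.Perm (Fin n)) : (wordOf n σ).length = n := by
  simp [wordOf]

lemma wordOf_mem (n : ℕ) (σ : Equiv.Perm (Fin n)) : ∀ x ∈ wordOf n σ, x < n := by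
  intro x hx
  rw [wordOf, List.mem_ofFn] at hx
  obtain ⟨i, rfl⟩ := hx
  exact (σ i).isLt

lemma wordOf_injective (n : ℕ) : Function.Injective (wordOf n) := by
  intro σ1 σ2 h
  rw [wordOf, wordOf, List.ofFn_inj] at h
  apply Equiv.ext
  intro i
  exact Fin.val_injective (congrFun h i)

lemma exists_perm_of_word (n : ℕ) (w : List ℕ) (hlen : w.length = n) (hnd : w.Nodup)
    (hmem : ∀ x ∈ w, x < n) : ∃ τ : Equiv.Perm (Fin n), wordOf n τ = w := by
  subst hlen
  have hget : Function.Injective w.get := List.nodup_iff_injective_get.mp hnd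
  have hmem2 : ∀ i : Fin w.length, w.get i < w.length := fun i => hmem _ (by rw [show i = ⟨i.1, i.2⟩ from rfl]; exact w.get_mem i)
  let g : Fin w.length → Fin w.length := fun i => ⟨w.get i, hmem2 i⟩
  have hginj : Function.Injective g := by
    intro x y hxy
    apply hget
    exact congrArg Fin.val hxy
  have hbij := Finite.injective_iff_bijective.mp hginj
  refine ⟨Equiv.ofBijective g hbij, ?_⟩
  rw [wordOf]
  have e : (fun i => ((Equiv.ofBijective g hbij) i : ℕ)) = fun i => w.get i := rfl
  rw [e]
  exact List.ofFn_get w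

end FoataProof

/-- There is a bijection `ψ : S_n → S_n` with `Des(ψ(π)) = Des(π)` and
`inv(ψ(π)) = imaj(π) = maj(π⁻¹)` for all `π`. -/
theorem stmt5 (n : ℕ) :
    ∃ ψ : Equiv.Perm (Fin n) → Equiv.Perm (Fin n), Function.Bijective ψ ∧
      ∀ π : Equiv.Perm (Fin n),
        permDes n (ψ π) = permDes n π ∧ permInv n (ψ π) = permMaj n π⁻¹ := by
  classical
  open FoataProof in
  have hword : ∀ π : Equiv.Perm (Fin n), ∃ τ : Equiv.Perm (Fin n),
      FoataProof.wordOf n τ = FoataProof.Frec ((FoataProof.wordOf n π⁻¹).reverse) := by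
    intro π
    have hperm : (FoataProof.Frec ((FoataProof.wordOf n π⁻¹).reverse)).Perm
        (FoataProof.wordOf n π⁻¹) :=
      (FoataProof.Frec_perm _).trans (List.reverse_perm _)
    apply FoataProof.exists_perm_of_word
    · rw [hperm.length_eq]
      exact FoataProof.wordOf_length n π⁻¹
    · exact (hperm.nodup_iff).mpr (FoataProof.wordOf_nodup n π⁻¹)
    · intro x hx
      exact FoataProof.wordOf_mem n π⁻¹ x (hperm.mem_iff.mp hx)
  choose T hT using hword
  refine ⟨fun π => (T π)⁻¹, ?_, ?_⟩
  · rw [← Finite.injective_iff_bijective]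
    intro π1 π2 h12
    have h1 : T π1 = T π2 := inv_injective h12
    have h2 : FoataProof.wordOf n (T π1) = FoataProof.wordOf n (T π2) := congrArg _ h1
    rw [hT π1, hT π2] at h2
    have h3 := FoataProof.Frec_inj _ _ h2
    have h4 : FoataProof.wordOf n π1⁻¹ = FoataProof.wordOf n π2⁻¹ :=
      List.reverse_injective h3
    have h5 := FoataProof.wordOf_injective n h4
    exact inv_injective h5
  · intro π
    constructor
    · -- descents
      have hdes := FoataProof.permDes_eq_of_filters (π⁻¹) (T π) ?_
      · rw [inv_inv] at hdes
        exact hdes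
      · intro c
        rw [hT π, FoataProof.Frec_filter c _
          (List.nodup_reverse.mpr (FoataProof.wordOf_nodup n π⁻¹)), List.reverse_reverse]
    · -- inversions
      rw [FoataProof.permInv_inv, FoataProof.permInv_eq_winv, hT π,
        FoataProof.Frec_winv, List.reverse_reverse, FoataProof.wmaj_wordOf]
end

section
/- Euler's pentagonal number theorem: Π_{n≥1} (1 − x^n) = 1 + Σ_{m≥1} (−1)^m ( x^{m(3m−1)/2} + x^{m(3m+1)/2} ) as formal power series. -/
open Finset

namespace PentAux

noncomputable def mn (S : Finset ℕ) : ℕ := sInf (S : Set ℕ)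
noncomputable def mx (S : Finset ℕ) : ℕ := sSup (S : Set ℕ)
noncomputable def runb (S : Finset ℕ) : ℕ := sInf {x | x ∈ S ∧ Finset.Icc x (mx S) ⊆ S}

lemma mn_mem {S : Finset ℕ} (h : S.Nonempty) : mn S ∈ S := by
  have := Nat.sInf_mem (s := (S : Set ℕ)) (by exact_mod_cast h)
  exact_mod_cast this

lemma mn_le {S : Finset ℕ} {x : ℕ} (hx : x ∈ S) : mn S ≤ x :=
  Nat.sInf_le (by exact_mod_cast hx)

lemma mx_mem {S : Finset ℕ} (h : S.Nonempty) : mx S ∈ S := by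
  have := Nat.sSup_mem (s := (S : Set ℕ)) (by exact_mod_cast h) S.bddAbove
  exact_mod_cast this

lemma le_mx {S : Finset ℕ} {x : ℕ} (hx : x ∈ S) : x ≤ mx S :=
  le_csSup S.bddAbove (by exact_mod_cast hx)

lemma runb_spec {S : Finset ℕ} (h : S.Nonempty) :
    runb S ∈ S ∧ Finset.Icc (runb S) (mx S) ⊆ S := by
  have hmem : mx S ∈ {x | x ∈ S ∧ Finset.Icc x (mx S) ⊆ S} := by
    refine ⟨mx_mem h, ?_⟩
    intro y hy
    simp only [Finset.mem_Icc] at hy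
    have : y = mx S := le_antisymm hy.2 hy.1
    simpa [this] using mx_mem h
  exact Nat.sInf_mem ⟨_, hmem⟩

lemma runb_le {S : Finset ℕ} {x : ℕ} (hx : x ∈ S) (hI : Finset.Icc x (mx S) ⊆ S) :
    runb S ≤ x := Nat.sInf_le ⟨hx, hI⟩

lemma runb_mem {S : Finset ℕ} (h : S.Nonempty) : runb S ∈ S := (runb_spec h).1

lemma runb_icc {S : Finset ℕ} (h : S.Nonempty) : Finset.Icc (runb S) (mx S) ⊆ S :=
  (runb_spec h).2

lemma mn_le_runb {S : Finset ℕ} (h : S.Nonempty) : mn S ≤ runb S := mn_le (runb_mem h)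

lemma runb_le_mx {S : Finset ℕ} (h : S.Nonempty) : runb S ≤ mx S := le_mx (runb_mem h)

/-- maximality of the top run: the element just below it is not in `S`. -/
lemma runb_pred_not_mem {S : Finset ℕ} (h : S.Nonempty) (hpos : 1 ≤ runb S) :
    runb S - 1 ∉ S := by
  intro hmem
  have hI : Finset.Icc (runb S - 1) (mx S) ⊆ S := by
    intro y hy
    simp only [Finset.mem_Icc] at hy
    rcases eq_or_lt_of_le hy.1 with h1 | h1
    · simpa [← h1] using hmem
    · exact runb_icc h (Finset.mem_Icc.mpr ⟨by omega, hy.2⟩)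
  have := runb_le hmem hI
  omega

/-- If the run reaches the minimum, `S` is an interval. -/
lemma eq_Icc_of_runb_le_mn {S : Finset ℕ} (h : S.Nonempty) (hle : runb S ≤ mn S) :
    S = Finset.Icc (mn S) (mx S) := by
  apply Finset.Subset.antisymm
  · intro x hx; exact Finset.mem_Icc.mpr ⟨mn_le hx, le_mx hx⟩
  · exact fun x hx => runb_icc h (Finset.mem_Icc.mpr
      ⟨le_trans hle (Finset.mem_Icc.mp hx).1, (Finset.mem_Icc.mp hx).2⟩)

lemma filter_ge_eq_Icc {S : Finset ℕ} (h : S.Nonempty) {T : ℕ} (hT : runb S ≤ T) :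
    S.filter (fun x => T ≤ x) = Finset.Icc T (mx S) := by
  ext y
  simp only [Finset.mem_filter, Finset.mem_Icc]
  constructor
  · rintro ⟨hy, hTy⟩; exact ⟨hTy, le_mx hy⟩
  · rintro ⟨h1, h2⟩
    exact ⟨runb_icc h (Finset.mem_Icc.mpr ⟨le_trans hT h1, h2⟩), h1⟩

lemma mx_le_sum {S : Finset ℕ} (h : S.Nonempty) : mx S ≤ ∑ i ∈ S, i :=
  Finset.single_le_sum (f := fun i => i) (fun _ _ => Nat.zero_le _) (mx_mem h)

lemma mn_Icc {a b : ℕ} (hab : a ≤ b) : mn (Finset.Icc a b) = a := by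
  have h1 : a ∈ Finset.Icc a b := Finset.mem_Icc.mpr ⟨le_refl a, hab⟩
  have h2 := mn_le h1
  have h3 := mn_mem (⟨a, h1⟩ : (Finset.Icc a b).Nonempty)
  simp only [Finset.mem_Icc] at h3
  omega

lemma mx_Icc {a b : ℕ} (hab : a ≤ b) : mx (Finset.Icc a b) = b := by
  have h1 : b ∈ Finset.Icc a b := Finset.mem_Icc.mpr ⟨hab, le_refl b⟩
  have h2 := le_mx h1
  have h3 := mx_mem (⟨b, h1⟩ : (Finset.Icc a b).Nonempty)
  simp only [Finset.mem_Icc] at h3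
  omega


def IsExc (S : Finset ℕ) : Prop :=
  ∃ m : ℕ, 1 ≤ m ∧ (S = Finset.Icc m (2 * m - 1) ∨ S = Finset.Icc (m + 1) (2 * m))

noncomputable def down (S : Finset ℕ) : Finset ℕ :=
  (S.erase (mn S)).image (fun x => if mx S + 1 - mn S ≤ x then x + 1 else x)

noncomputable def up (S : Finset ℕ) : Finset ℕ :=
  insert (mx S + 1 - runb S) (S.image (fun x => if runb S ≤ x then x - 1 else x))

noncomputable def invol (S : Finset ℕ) : Finset ℕ :=
  if mn S + runb S ≤ mx S + 1 then down S else up S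

section CaseA

variable {S : Finset ℕ} (hne : S.Nonempty) (hpos : ∀ x ∈ S, 1 ≤ x)

include hne hpos in
/-- In the non-exceptional "down" branch, `2 * min ≤ max`. -/
lemma caseA_2s (hexc : ¬ IsExc S) (hcond : mn S + runb S ≤ mx S + 1) :
    2 * mn S ≤ mx S := by
  by_contra hcon
  push_neg at hcon
  have hmnr := mn_le_runb hne
  have hrx := runb_le_mx hne
  have h1 : runb S ≤ mn S := by omega
  have hI := eq_Icc_of_runb_le_mn hne h1
  have hmm : mx S = 2 * mn S - 1 := by omega
  exact hexc ⟨mn S, hpos _ (mn_mem hne), Or.inl (by rw [← hmm]; exact hI)⟩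

variable (h2s : 2 * mn S ≤ mx S) (hcond : mn S + runb S ≤ mx S + 1)

include hne hpos in
lemma mn_pos : 1 ≤ mn S := hpos _ (mn_mem hne)

include hne hpos h2s in
lemma caseA_mn_lt_mx : mn S < mx S := by
  have := mn_pos hne hpos; omega

include hne hpos h2s in
lemma caseA_mx_mem_erase : mx S ∈ S.erase (mn S) :=
  Finset.mem_erase.mpr ⟨by have := caseA_mn_lt_mx hne hpos h2s; omega, mx_mem hne⟩

include hne hpos h2s in
lemma down_nonempty : (down S).Nonempty := by
  refine ⟨_, Finset.mem_image_of_mem _ (caseA_mx_mem_erase hne hpos h2s)⟩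

lemma bump_injOn {T : ℕ} {t : Finset ℕ} :
    Set.InjOn (fun x => if T ≤ x then x + 1 else x) t := by
  intro x _ y _ hxy
  simp only at hxy
  split_ifs at hxy <;> omega

include hne in
lemma down_card : (down S).card + 1 = S.card := by
  rw [down, Finset.card_image_of_injOn bump_injOn,
    Finset.card_erase_of_mem (mn_mem hne)]
  have := Finset.card_pos.mpr hne
  omega

include hne hpos h2s hcond in
lemma caseA_filter_eq :
    (S.erase (mn S)).filter (fun x => mx S + 1 - mn S ≤ x)
      = Finset.Icc (mx S + 1 - mn S) (mx S) := by
  have hs1 := mn_pos hne hpos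
  have hmr := mn_le_runb hne
  have hrx := runb_le_mx hne
  ext y
  simp only [Finset.mem_filter, Finset.mem_erase, Finset.mem_Icc]
  constructor
  · rintro ⟨⟨hy1, hy2⟩, hy3⟩
    exact ⟨hy3, le_mx hy2⟩
  · rintro ⟨h1, h2⟩
    have hy : y ∈ S := runb_icc hne (Finset.mem_Icc.mpr ⟨by omega, h2⟩)
    exact ⟨⟨by omega, hy⟩, h1⟩

include hne hpos h2s hcond in
lemma down_sum : ∑ i ∈ down S, i = ∑ i ∈ S, i := by
  have hs1 := mn_pos hne hpos
  have h1 : ∑ i ∈ down S, i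
      = ∑ x ∈ S.erase (mn S), (if mx S + 1 - mn S ≤ x then x + 1 else x) := by
    rw [down, Finset.sum_image (fun x hx y hy h => bump_injOn hx hy h)]
  have h2 : ∀ x ∈ S.erase (mn S),
      (if mx S + 1 - mn S ≤ x then x + 1 else x)
        = x + (if mx S + 1 - mn S ≤ x then 1 else 0) := by
    intro x _; split_ifs <;> omega
  rw [h1, Finset.sum_congr rfl h2, Finset.sum_add_distrib]
  have h3 : ∑ x ∈ S.erase (mn S), (if mx S + 1 - mn S ≤ x then 1 else 0)
      = ((S.erase (mn S)).filter (fun x => mx S + 1 - mn S ≤ x)).card :=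
    (Finset.card_filter _ _).symm
  rw [h3, caseA_filter_eq hne hpos h2s hcond, Nat.card_Icc]
  have h4 : ∑ x ∈ S.erase (mn S), x + mn S = ∑ x ∈ S, x :=
    Finset.sum_erase_add S _ (mn_mem hne)
  have hmr := mn_le_runb hne
  have hrx := runb_le_mx hne
  omega

include hne hpos h2s in
lemma down_pos : ∀ y ∈ down S, 1 ≤ y := by
  intro y hy
  rw [down, Finset.mem_image] at hy
  obtain ⟨x, hx, rfl⟩ := hy
  have := hpos x (Finset.mem_of_mem_erase hx)
  split_ifs <;> omega

include hne hpos h2s in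
lemma down_mx : mx (down S) = mx S + 1 := by
  have hmem : mx S + 1 ∈ down S := by
    rw [down, Finset.mem_image]
    refine ⟨mx S, caseA_mx_mem_erase hne hpos h2s, ?_⟩
    rw [if_pos (by have := mn_pos hne hpos; omega)]
  have hub : ∀ y ∈ down S, y ≤ mx S + 1 := by
    intro y hy
    rw [down, Finset.mem_image] at hy
    obtain ⟨x, hx, rfl⟩ := hy
    have := le_mx (Finset.mem_of_mem_erase hx)
    split_ifs <;> omega
  exact le_antisymm (hub _ (mx_mem ⟨_, hmem⟩)) (le_mx hmem)

include hne hpos h2s in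
lemma down_mn_gt : mn S < mn (down S) := by
  have hmem : mn (down S) ∈ (S.erase (mn S)).image
      (fun x => if mx S + 1 - mn S ≤ x then x + 1 else x) :=
    mn_mem (down_nonempty hne hpos h2s)
  obtain ⟨x, hx, hxe⟩ := Finset.mem_image.mp hmem
  rw [Finset.mem_erase] at hx
  have := mn_le hx.2
  have h1 := hx.1
  rw [← hxe]
  split_ifs <;> omega

include hne hpos h2s in
lemma down_T_not_mem : mx S + 1 - mn S ∉ down S := by
  intro hy
  rw [down, Finset.mem_image] at hy
  obtain ⟨x, hx, hxe⟩ := hy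
  have hs1 := mn_pos hne hpos
  split_ifs at hxe <;> omega

include hne hpos h2s hcond in
lemma caseA_Icc_subset : Finset.Icc (mx S + 1 - mn S + 1) (mx S + 1) ⊆ down S := by
  intro y hy
  rw [Finset.mem_Icc] at hy
  have hs1 := mn_pos hne hpos
  rw [down, Finset.mem_image]
  refine ⟨y - 1, Finset.mem_erase.mpr ⟨by omega, ?_⟩, by rw [if_pos (by omega)]; omega⟩
  exact runb_icc hne (Finset.mem_Icc.mpr ⟨by omega, by omega⟩)

include hne hpos h2s hcond in
lemma down_runb : runb (down S) = mx S + 1 - mn S + 1 := by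
  have hs1 := mn_pos hne hpos
  have hsub := caseA_Icc_subset hne hpos h2s hcond
  have hmx := down_mx hne hpos h2s
  have hTmem : mx S + 1 - mn S + 1 ∈ down S :=
    hsub (Finset.mem_Icc.mpr ⟨le_refl _, by omega⟩)
  have hle : runb (down S) ≤ mx S + 1 - mn S + 1 := by
    apply runb_le hTmem
    rw [hmx]
    exact fun y hy => hsub (by rw [Finset.mem_Icc] at hy ⊢; omega)
  have hge : ¬ runb (down S) ≤ mx S + 1 - mn S := by
    intro hcon
    have hT : mx S + 1 - mn S ∈ down S := by
      apply runb_icc (down_nonempty hne hpos h2s)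
      rw [Finset.mem_Icc, hmx]
      omega
    exact down_T_not_mem hne hpos h2s hT
  omega

include hne hpos h2s hcond in
lemma up_down : up (down S) = S := by
  have hs1 := mn_pos hne hpos
  have hmx := down_mx hne hpos h2s
  have hrb := down_runb hne hpos h2s hcond
  have h1 : mx (down S) + 1 - runb (down S) = mn S := by rw [hmx, hrb]; omega
  rw [up, h1, hrb]
  have h2 : (down S).image (fun x => if mx S + 1 - mn S + 1 ≤ x then x - 1 else x)
      = S.erase (mn S) := by
    rw [down, Finset.image_image]
    have : ∀ x ∈ S.erase (mn S),
        ((fun x => if mx S + 1 - mn S + 1 ≤ x then x - 1 else x) ∘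
          (fun x => if mx S + 1 - mn S ≤ x then x + 1 else x)) x = id x := by
      intro x hx
      simp only [Function.comp, id]
      split_ifs <;> omega
    rw [Finset.image_congr (fun x hx => this x hx), Finset.image_id]
  rw [h2, Finset.insert_erase (mn_mem hne)]

include hne hpos h2s hcond in
lemma down_not_exc : ¬ IsExc (down S) := by
  rintro ⟨m, hm, hcase⟩
  have hs1 := mn_pos hne hpos
  have hmx := down_mx hne hpos h2s
  have hmn := down_mn_gt hne hpos h2s
  have hTnm := down_T_not_mem hne hpos h2s
  have hsub := caseA_Icc_subset hne hpos h2s hcond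
  -- down S = Icc a b with (a,b) as below
  obtain ⟨a, b, hab, hS'⟩ : ∃ a b : ℕ, (2 * a = b + 1 ∨ 2 * a = b + 2) ∧
      down S = Finset.Icc a b := by
    rcases hcase with h | h
    · exact ⟨m, 2 * m - 1, Or.inl (by omega), h⟩
    · exact ⟨m + 1, 2 * m, Or.inr (by omega), h⟩
  have hne' : (down S).Nonempty := down_nonempty hne hpos h2s
  have hab' : a ≤ b := by
    obtain ⟨y, hy⟩ := hne'
    rw [hS', Finset.mem_Icc] at hy
    omega
  have ha : mn (down S) = a := by rw [hS']; exact mn_Icc hab'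
  have hb : mx (down S) = b := by rw [hS']; exact mx_Icc hab'
  have hmr := mn_le_runb hne
  have hrx := runb_le_mx hne
  by_cases hcmp : mn (down S) ≤ mx S + 1 - mn S
  · -- then T would be in the interval, contradiction
    apply hTnm
    rw [hS', Finset.mem_Icc]
    omega
  · -- down S is exactly the run `Icc (T+1) (mx+1)`; exceptional shapes impossible
    have ha2 : a ≤ mx S + 1 - mn S + 1 := by
      have hTm : mx S + 1 - mn S + 1 ∈ down S :=
        caseA_Icc_subset hne hpos h2s hcond (Finset.mem_Icc.mpr ⟨le_refl _, by omega⟩)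
      rw [hS', Finset.mem_Icc] at hTm
      exact hTm.1
    omega

include hne hpos h2s hcond in
lemma down_branchB : ¬ mn (down S) + runb (down S) ≤ mx (down S) + 1 := by
  have h1 := down_mn_gt hne hpos h2s
  have h2 := down_runb hne hpos h2s hcond
  have h3 := down_mx hne hpos h2s
  have hs1 := mn_pos hne hpos
  have hmr := mn_le_runb hne
  have hrx := runb_le_mx hne
  omega

end CaseA

section CaseB

variable {S : Finset ℕ} (hne : S.Nonempty) (hpos : ∀ x ∈ S, 1 ≤ x)

include hne hpos in
/-- In the non-exceptional "up" branch, `mx + 3 ≤ 2 * runb`. -/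
lemma caseB_2L (hexc : ¬ IsExc S) (hcond : ¬ mn S + runb S ≤ mx S + 1) :
    mx S + 3 ≤ 2 * runb S := by
  by_contra hcon
  push_neg at hcon
  have hmnr := mn_le_runb hne
  have hrx := runb_le_mx hne
  have h1 : runb S ≤ mn S := by omega
  have hI := eq_Icc_of_runb_le_mn hne h1
  have hs1 : 1 ≤ mn S := hpos _ (mn_mem hne)
  -- mn = runb, 2 * runb = mx + 2, so S = Icc (m+1) (2m) with m = runb - 1
  refine hexc ⟨runb S - 1, by omega, Or.inr ?_⟩
  have h2 : runb S - 1 + 1 = mn S := by omega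
  have h3 : 2 * (runb S - 1) = mx S := by omega
  rw [h2, h3]; exact hI

variable (h2L : mx S + 3 ≤ 2 * runb S) (hBcond : mx S + 2 ≤ mn S + runb S)

include hne hpos h2L hBcond in
lemma caseB_facts : 3 ≤ runb S ∧ runb S ≤ mx S ∧ mn S ≤ runb S ∧ 1 ≤ mn S ∧
    1 ≤ mx S + 1 - runb S ∧ mx S + 1 - runb S ≤ runb S - 2 ∧
    mx S + 1 - runb S < mn S := by
  have hrx := runb_le_mx hne
  have hmr := mn_le_runb hne
  have hs1 : 1 ≤ mn S := hpos _ (mn_mem hne)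
  omega

include hne hpos h2L hBcond in
lemma caseB_dec_injOn :
    Set.InjOn (fun x => if runb S ≤ x then x - 1 else x) S := by
  obtain ⟨hL3, hrx, hmr, hs1, hr1, hr2, hr3⟩ := caseB_facts hne hpos h2L hBcond
  have hpred := runb_pred_not_mem hne (by omega)
  intro x hx y hy hxy
  have hx' : (x : ℕ) ∈ S := hx
  have hy' : (y : ℕ) ∈ S := hy
  have h1 : x ≠ runb S - 1 := fun h => hpred (h ▸ hx')
  have h2 : y ≠ runb S - 1 := fun h => hpred (h ▸ hy')
  have hxy' : (if runb S ≤ x then x - 1 else x) = (if runb S ≤ y then y - 1 else y) := hxy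
  split_ifs at hxy' <;> omega

include hne hpos h2L hBcond in
lemma caseB_r_not_mem_image :
    mx S + 1 - runb S ∉ S.image (fun x => if runb S ≤ x then x - 1 else x) := by
  obtain ⟨hL3, hrx, hmr, hs1, hr1, hr2, hr3⟩ := caseB_facts hne hpos h2L hBcond
  intro hmem
  obtain ⟨x, hx, hxe⟩ := Finset.mem_image.mp hmem
  have hxm := mn_le hx
  split_ifs at hxe <;> omega

include hne hpos h2L hBcond in
lemma up_card : (up S).card = S.card + 1 := by
  rw [up, Finset.card_insert_of_notMem (caseB_r_not_mem_image hne hpos h2L hBcond),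
    Finset.card_image_of_injOn (caseB_dec_injOn hne hpos h2L hBcond)]

include hne hpos h2L hBcond in
lemma up_sum : ∑ i ∈ up S, i = ∑ i ∈ S, i := by
  obtain ⟨hL3, hrx, hmr, hs1, hr1, hr2, hr3⟩ := caseB_facts hne hpos h2L hBcond
  rw [up, Finset.sum_insert (caseB_r_not_mem_image hne hpos h2L hBcond),
    Finset.sum_image (fun x hx y hy h => caseB_dec_injOn hne hpos h2L hBcond hx hy h)]
  have h2 : ∀ x ∈ S, (if runb S ≤ x then x - 1 else x)
      = x - (if runb S ≤ x then 1 else 0) := by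
    intro x _; split_ifs <;> omega
  have h2' : ∀ x ∈ S, (if runb S ≤ x then x - 1 else x)
      + (if runb S ≤ x then 1 else 0) = x := by
    intro x hx
    have := hpos x hx; split_ifs <;> omega
  have h3 : (∑ x ∈ S, (if runb S ≤ x then x - 1 else x))
      + (∑ x ∈ S, (if runb S ≤ x then 1 else 0)) = ∑ x ∈ S, x := by
    rw [← Finset.sum_add_distrib]
    exact Finset.sum_congr rfl h2'
  have h4 : ∑ x ∈ S, (if runb S ≤ x then 1 else 0)
      = (S.filter (fun x => runb S ≤ x)).card := (Finset.card_filter _ _).symm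
  rw [filter_ge_eq_Icc hne (le_refl _), Nat.card_Icc] at h4
  omega

include hne hpos h2L hBcond in
lemma up_pos : ∀ y ∈ up S, 1 ≤ y := by
  obtain ⟨hL3, hrx, hmr, hs1, hr1, hr2, hr3⟩ := caseB_facts hne hpos h2L hBcond
  intro y hy
  rcases Finset.mem_insert.mp hy with h | h
  · omega
  · obtain ⟨x, hx, hxe⟩ := Finset.mem_image.mp h
    have := hpos x hx
    have := mn_le hx
    split_ifs at hxe <;> omega

include hne hpos h2L hBcond in
lemma up_nonempty : (up S).Nonempty := ⟨_, Finset.mem_insert_self _ _⟩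

include hne hpos h2L hBcond in
lemma up_mx : mx (up S) = mx S - 1 := by
  obtain ⟨hL3, hrx, hmr, hs1, hr1, hr2, hr3⟩ := caseB_facts hne hpos h2L hBcond
  have hmem : mx S - 1 ∈ up S := by
    rw [up]
    refine Finset.mem_insert_of_mem (Finset.mem_image.mpr ⟨mx S, mx_mem hne, ?_⟩)
    rw [if_pos hrx]
  have hub : ∀ y ∈ up S, y ≤ mx S - 1 := by
    intro y hy
    rcases Finset.mem_insert.mp hy with h | h
    · omega
    · obtain ⟨x, hx, hxe⟩ := Finset.mem_image.mp h
      have h5 := le_mx hx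
      have h6 := mn_le hx
      split_ifs at hxe <;> omega
  exact le_antisymm (hub _ (mx_mem (up_nonempty hne hpos h2L hBcond))) (le_mx hmem)

include hne hpos h2L hBcond in
lemma up_mn : mn (up S) = mx S + 1 - runb S := by
  obtain ⟨hL3, hrx, hmr, hs1, hr1, hr2, hr3⟩ := caseB_facts hne hpos h2L hBcond
  have hmem : mx S + 1 - runb S ∈ up S := Finset.mem_insert_self _ _
  have hlb : ∀ y ∈ up S, mx S + 1 - runb S ≤ y := by
    intro y hy
    rcases Finset.mem_insert.mp hy with h | h
    · omega
    · obtain ⟨x, hx, hxe⟩ := Finset.mem_image.mp h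
      have h6 := mn_le hx
      split_ifs at hxe <;> omega
  exact le_antisymm (mn_le hmem) (hlb _ (mn_mem (up_nonempty hne hpos h2L hBcond)))

include hne hpos h2L hBcond in
lemma caseB_Icc_subset : Finset.Icc (runb S - 1) (mx S - 1) ⊆ up S := by
  obtain ⟨hL3, hrx, hmr, hs1, hr1, hr2, hr3⟩ := caseB_facts hne hpos h2L hBcond
  intro y hy
  rw [Finset.mem_Icc] at hy
  rw [up]
  refine Finset.mem_insert_of_mem (Finset.mem_image.mpr ⟨y + 1, ?_, ?_⟩)
  · exact runb_icc hne (Finset.mem_Icc.mpr ⟨by omega, by omega⟩)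
  · rw [if_pos (by omega)]; omega

include hne hpos h2L hBcond in
lemma up_runb_le : runb (up S) ≤ runb S - 1 := by
  obtain ⟨hL3, hrx, hmr, hs1, hr1, hr2, hr3⟩ := caseB_facts hne hpos h2L hBcond
  have hsub := caseB_Icc_subset hne hpos h2L hBcond
  apply runb_le (hsub (Finset.mem_Icc.mpr ⟨le_refl _, by omega⟩))
  rw [up_mx hne hpos h2L hBcond]
  exact fun y hy => hsub hy

include hne hpos h2L hBcond in
lemma up_branchA : mn (up S) + runb (up S) ≤ mx (up S) + 1 := by
  obtain ⟨hL3, hrx, hmr, hs1, hr1, hr2, hr3⟩ := caseB_facts hne hpos h2L hBcond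
  have h1 := up_mn hne hpos h2L hBcond
  have h2 := up_mx hne hpos h2L hBcond
  have h3 := up_runb_le hne hpos h2L hBcond
  omega

include hne hpos h2L hBcond in
lemma up_not_exc : ¬ IsExc (up S) := by
  rintro ⟨m, hm, hcase⟩
  obtain ⟨hL3, hrx, hmr, hs1, hr1, hr2, hr3⟩ := caseB_facts hne hpos h2L hBcond
  have h1 := up_mn hne hpos h2L hBcond
  have h2 := up_mx hne hpos h2L hBcond
  rcases hcase with h | h
  · have ha : mn (up S) = m := by rw [h]; exact mn_Icc (by omega)
    have hb : mx (up S) = 2 * m - 1 := by rw [h]; exact mx_Icc (by omega)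
    omega
  · have ha : mn (up S) = m + 1 := by rw [h]; exact mn_Icc (by omega)
    have hb : mx (up S) = 2 * m := by rw [h]; exact mx_Icc (by omega)
    omega

include hne hpos h2L hBcond in
lemma down_up : down (up S) = S := by
  obtain ⟨hL3, hrx, hmr, hs1, hr1, hr2, hr3⟩ := caseB_facts hne hpos h2L hBcond
  have h1 := up_mn hne hpos h2L hBcond
  have h2 := up_mx hne hpos h2L hBcond
  rw [down, h1, h2]
  have hT : mx S - 1 + 1 - (mx S + 1 - runb S) = runb S - 1 := by omega
  rw [hT]
  have he : (up S).erase (mx S + 1 - runb S)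
      = S.image (fun x => if runb S ≤ x then x - 1 else x) := by
    rw [up, Finset.erase_insert (caseB_r_not_mem_image hne hpos h2L hBcond)]
  rw [he, Finset.image_image]
  have hid : ∀ x ∈ S,
      ((fun x => if runb S - 1 ≤ x then x + 1 else x) ∘
        (fun x => if runb S ≤ x then x - 1 else x)) x = id x := by
    intro x hx
    have hxm := mn_le hx
    have hpred := runb_pred_not_mem hne (by omega)
    have hxp : x ≠ runb S - 1 := fun hh => hpred (hh ▸ hx)
    simp only [Function.comp, id]
    split_ifs <;> omega
  rw [Finset.image_congr (fun x hx => hid x hx), Finset.image_id]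

end CaseB

section Involution

lemma nonempty_of_sum_pos {S : Finset ℕ} {k : ℕ} (hk : 1 ≤ k) (hsum : ∑ i ∈ S, i = k) :
    S.Nonempty := by
  rcases S.eq_empty_or_nonempty with rfl | h
  · simp at hsum; omega
  · exact h

lemma invol_spec {k : ℕ} (hk : 1 ≤ k) {S : Finset ℕ} (hpos : ∀ x ∈ S, 1 ≤ x)
    (hsum : ∑ i ∈ S, i = k) (hexc : ¬ IsExc S) :
    (∀ x ∈ invol S, 1 ≤ x) ∧ (∑ i ∈ invol S, i = k) ∧ ¬ IsExc (invol S) ∧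
      invol (invol S) = S ∧
      ((invol S).card + 1 = S.card ∨ S.card + 1 = (invol S).card) := by
  have hne : S.Nonempty := nonempty_of_sum_pos hk hsum
  by_cases hcond : mn S + runb S ≤ mx S + 1
  · have h2s := caseA_2s hne hpos hexc hcond
    have hd : invol S = down S := by rw [invol, if_pos hcond]
    have hdd : invol (down S) = up (down S) := by
      rw [invol, if_neg (down_branchB hne hpos h2s hcond)]
    refine ⟨?_, ?_, ?_, ?_, ?_⟩
    · rw [hd]; exact down_pos hne hpos h2s
    · rw [hd, down_sum hne hpos h2s hcond]; exact hsum
    · rw [hd]; exact down_not_exc hne hpos h2s hcond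
    · rw [hd, hdd, up_down hne hpos h2s hcond]
    · left; rw [hd]; exact down_card hne
  · have hBcond : mx S + 2 ≤ mn S + runb S := by omega
    have h2L := caseB_2L hne hpos hexc hcond
    have hu : invol S = up S := by rw [invol, if_neg hcond]
    have huu : invol (up S) = down (up S) := by
      rw [invol, if_pos (up_branchA hne hpos h2L hBcond)]
    refine ⟨?_, ?_, ?_, ?_, ?_⟩
    · rw [hu]; exact up_pos hne hpos h2L hBcond
    · rw [hu, up_sum hne hpos h2L hBcond]; exact hsum
    · rw [hu]; exact up_not_exc hne hpos h2L hBcond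
    · rw [hu, huu, down_up hne hpos h2L hBcond]
    · right; rw [hu]; exact (up_card hne hpos h2L hBcond).symm

lemma neg_one_pow_add_eq_zero {m n : ℕ} (h : m + 1 = n ∨ n + 1 = m) :
    (-1 : ℤ) ^ m + (-1 : ℤ) ^ n = 0 := by
  rcases h with h | h
  · rw [← h, pow_succ]; ring
  · rw [← h, pow_succ]; ring

open Classical in
lemma sum_rest_zero (k N : ℕ) (hk : 1 ≤ k) (hkN : k ≤ N) :
    ∑ t ∈ ((Finset.Icc 1 N).powerset.filter (fun t => ∑ i ∈ t, i = k)).filter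
        (fun t => ¬ IsExc t), (-1 : ℤ) ^ t.card = 0 := by
  have hmem : ∀ S : Finset ℕ, (∀ x ∈ S, 1 ≤ x) → (∑ i ∈ S, i = k) → ¬ IsExc S →
      S ∈ ((Finset.Icc 1 N).powerset.filter (fun t => ∑ i ∈ t, i = k)).filter
        (fun t => ¬ IsExc t) := by
    intro S hpos hsum hexc
    have hne : S.Nonempty := nonempty_of_sum_pos hk hsum
    simp only [Finset.mem_filter, Finset.mem_powerset]
    refine ⟨⟨?_, hsum⟩, hexc⟩
    intro x hx
    have h1 := le_mx hx
    have h2 := mx_le_sum hne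
    exact Finset.mem_Icc.mpr ⟨hpos x hx, by omega⟩
  have hget : ∀ S : Finset ℕ,
      S ∈ ((Finset.Icc 1 N).powerset.filter (fun t => ∑ i ∈ t, i = k)).filter
        (fun t => ¬ IsExc t) →
      (∀ x ∈ S, 1 ≤ x) ∧ (∑ i ∈ S, i = k) ∧ ¬ IsExc S := by
    intro S hS
    simp only [Finset.mem_filter, Finset.mem_powerset] at hS
    exact ⟨fun x hx => (Finset.mem_Icc.mp (hS.1.1 hx)).1, hS.1.2, hS.2⟩
  apply Finset.sum_involution (g := fun a _ => invol a)
  · intro a ha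
    obtain ⟨hpos, hsum, hexc⟩ := hget a ha
    obtain ⟨_, _, _, _, hcard⟩ := invol_spec hk hpos hsum hexc
    exact neg_one_pow_add_eq_zero (by omega)
  · intro a ha _
    obtain ⟨hpos, hsum, hexc⟩ := hget a ha
    obtain ⟨_, _, _, _, hcard⟩ := invol_spec hk hpos hsum hexc
    intro hcon
    rw [hcon] at hcard
    omega
  · intro a ha
    obtain ⟨hpos, hsum, hexc⟩ := hget a ha
    obtain ⟨h1, h2, h3, _, _⟩ := invol_spec hk hpos hsum hexc
    exact hmem _ h1 h2 h3
  · intro a ha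
    obtain ⟨hpos, hsum, hexc⟩ := hget a ha
    exact (invol_spec hk hpos hsum hexc).2.2.2.1

end Involution

section Exc

lemma sum_Icc_gauss {a b : ℕ} (h : a ≤ b + 1) :
    (∑ i ∈ Finset.range a, i) + (∑ i ∈ Finset.Icc a b, i)
      = ∑ i ∈ Finset.range (b + 1), i := by
  rw [Finset.range_eq_Ico, ← Finset.Ico_add_one_right_eq_Icc]
  rw [Finset.range_eq_Ico]
  exact Finset.sum_Ico_consecutive (fun i => i) (Nat.zero_le a) h

lemma sumE1 {m : ℕ} (hm : 1 ≤ m) :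
    ∑ i ∈ Finset.Icc m (2 * m - 1), i = m * (3 * m - 1) / 2 := by
  obtain ⟨n, rfl⟩ : ∃ n, m = n + 1 := ⟨m - 1, by omega⟩
  have e1 : 2 * (n + 1) - 1 = 2 * n + 1 := by omega
  rw [e1]
  have g := sum_Icc_gauss (a := n + 1) (b := 2 * n + 1) (by omega)
  have r1 := Finset.sum_range_id_mul_two (n + 1)
  have r2 := Finset.sum_range_id_mul_two (2 * n + 2)
  simp only [show 2 * n + 1 + 1 = 2 * n + 2 from rfl] at g
  simp only [show 2 * n + 2 - 1 = 2 * n + 1 from by omega] at r2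
  simp only [show n + 1 - 1 = n from by omega] at r1
  have h3 : (∑ i ∈ Finset.Icc (n + 1) (2 * n + 1), i) * 2 = (n + 1) * (3 * (n + 1) - 1) := by
    have e2 : (n + 1) * (3 * (n + 1) - 1) = (n + 1) * (3 * n + 2) := by
      have : 3 * (n + 1) - 1 = 3 * n + 2 := by omega
      rw [this]
    rw [e2]
    nlinarith [g, r1, r2]
  generalize hP : (n + 1) * (3 * (n + 1) - 1) = P at h3 ⊢
  omega

lemma sumE2 {m : ℕ} (hm : 1 ≤ m) :
    ∑ i ∈ Finset.Icc (m + 1) (2 * m), i = m * (3 * m + 1) / 2 := by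
  have g := sum_Icc_gauss (a := m + 1) (b := 2 * m) (by omega)
  have r1 := Finset.sum_range_id_mul_two (m + 1)
  have r2 := Finset.sum_range_id_mul_two (2 * m + 1)
  simp only [show (2 * m + 1) - 1 = 2 * m from by omega] at r2
  simp only [show m + 1 - 1 = m from by omega] at r1
  have h3 : (∑ i ∈ Finset.Icc (m + 1) (2 * m), i) * 2 = m * (3 * m + 1) := by
    nlinarith [g, r1, r2]
  generalize hP : m * (3 * m + 1) = P at h3 ⊢
  omega

lemma cardE1 {m : ℕ} (hm : 1 ≤ m) : (Finset.Icc m (2 * m - 1)).card = m := by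
  rw [Nat.card_Icc]; omega

lemma cardE2 {m : ℕ} (hm : 1 ≤ m) : (Finset.Icc (m + 1) (2 * m)).card = m := by
  rw [Nat.card_Icc]; omega

open Classical in
lemma sum_exc (k N : ℕ) (hk : 1 ≤ k) (hkN : k ≤ N) :
    ∑ t ∈ ((Finset.Icc 1 N).powerset.filter (fun t => ∑ i ∈ t, i = k)).filter
        (fun t => IsExc t), (-1 : ℤ) ^ t.card
      = ∑ m ∈ Finset.Icc 1 k, (-1 : ℤ) ^ m *
          ((if m * (3 * m - 1) / 2 = k then 1 else 0) +
            (if m * (3 * m + 1) / 2 = k then 1 else 0)) := by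
  set X1 : Finset (Finset ℕ) :=
    ((Finset.Icc 1 k).filter (fun m => m * (3 * m - 1) / 2 = k)).image
      (fun m => Finset.Icc m (2 * m - 1)) with hX1
  set X2 : Finset (Finset ℕ) :=
    ((Finset.Icc 1 k).filter (fun m => m * (3 * m + 1) / 2 = k)).image
      (fun m => Finset.Icc (m + 1) (2 * m)) with hX2
  have hset : ((Finset.Icc 1 N).powerset.filter (fun t => ∑ i ∈ t, i = k)).filter
      (fun t => IsExc t) = X1 ∪ X2 := by
    ext t
    simp only [Finset.mem_filter, Finset.mem_powerset, Finset.mem_union, hX1, hX2,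
      Finset.mem_image]
    constructor
    · rintro ⟨⟨hsub, hsum⟩, m, hm, hcase | hcase⟩
      · left
        refine ⟨m, ⟨Finset.mem_Icc.mpr ⟨hm, ?_⟩, ?_⟩, hcase.symm⟩
        · have hmem : m ∈ t := by
            rw [hcase]; exact Finset.mem_Icc.mpr ⟨le_refl _, by omega⟩
          have h5 : m ≤ ∑ i ∈ t, i :=
            Finset.single_le_sum (f := fun i => i) (fun _ _ => Nat.zero_le _) hmem
          omega
        · rw [← hsum, hcase, sumE1 hm]
      · right
        refine ⟨m, ⟨Finset.mem_Icc.mpr ⟨hm, ?_⟩, ?_⟩, hcase.symm⟩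
        · have hmem : m + 1 ∈ t := by
            rw [hcase]; exact Finset.mem_Icc.mpr ⟨le_refl _, by omega⟩
          have h5 : m + 1 ≤ ∑ i ∈ t, i :=
            Finset.single_le_sum (f := fun i => i) (fun _ _ => Nat.zero_le _) hmem
          omega
        · rw [← hsum, hcase, sumE2 hm]
    · rintro (⟨m, hm, rfl⟩ | ⟨m, hm, rfl⟩) <;>
        (obtain ⟨hm1, hm2⟩ := hm; rw [Finset.mem_Icc] at hm1)
      · have hsum : ∑ i ∈ Finset.Icc m (2 * m - 1), i = k := by
          rw [sumE1 hm1.1]; exact hm2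
        refine ⟨⟨?_, hsum⟩, ⟨m, hm1.1, Or.inl rfl⟩⟩
        intro x hx
        have h1 : x ≤ mx (Finset.Icc m (2 * m - 1)) := le_mx hx
        have h2 : mx (Finset.Icc m (2 * m - 1)) ≤ k := by
          rw [← hsum]; exact mx_le_sum ⟨x, hx⟩
        rw [Finset.mem_Icc] at hx ⊢
        exact ⟨by omega, by omega⟩
      · have hsum : ∑ i ∈ Finset.Icc (m + 1) (2 * m), i = k := by
          rw [sumE2 hm1.1]; exact hm2
        refine ⟨⟨?_, hsum⟩, ⟨m, hm1.1, Or.inr rfl⟩⟩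
        intro x hx
        have h1 : x ≤ mx (Finset.Icc (m + 1) (2 * m)) := le_mx hx
        have h2 : mx (Finset.Icc (m + 1) (2 * m)) ≤ k := by
          rw [← hsum]; exact mx_le_sum ⟨x, hx⟩
        rw [Finset.mem_Icc] at hx ⊢
        exact ⟨by omega, by omega⟩
  have hdisj : Disjoint X1 X2 := by
    rw [Finset.disjoint_left]
    rintro t ht1 ht2
    rw [hX1, Finset.mem_image] at ht1
    rw [hX2, Finset.mem_image] at ht2
    obtain ⟨m, hm, rfl⟩ := ht1
    obtain ⟨m', hm', heq⟩ := ht2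
    rw [Finset.mem_filter, Finset.mem_Icc] at hm hm'
    have h1 : mn (Finset.Icc m (2 * m - 1)) = m := mn_Icc (by omega)
    have h2 : mx (Finset.Icc m (2 * m - 1)) = 2 * m - 1 := mx_Icc (by omega)
    rw [← heq] at h1 h2
    rw [mn_Icc (by omega)] at h1
    rw [mx_Icc (by omega)] at h2
    omega
  rw [hset, Finset.sum_union hdisj]
  have hinj1 : ∀ m ∈ (Finset.Icc 1 k).filter (fun m => m * (3 * m - 1) / 2 = k),
      ∀ m' ∈ (Finset.Icc 1 k).filter (fun m => m * (3 * m - 1) / 2 = k),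
      Finset.Icc m (2 * m - 1) = Finset.Icc m' (2 * m' - 1) → m = m' := by
    intro m hm m' hm' heq
    rw [Finset.mem_filter, Finset.mem_Icc] at hm hm'
    have h1 : mn (Finset.Icc m (2 * m - 1)) = m := mn_Icc (by omega)
    rw [heq, mn_Icc (by omega)] at h1
    omega
  have hinj2 : ∀ m ∈ (Finset.Icc 1 k).filter (fun m => m * (3 * m + 1) / 2 = k),
      ∀ m' ∈ (Finset.Icc 1 k).filter (fun m => m * (3 * m + 1) / 2 = k),
      Finset.Icc (m + 1) (2 * m) = Finset.Icc (m' + 1) (2 * m') → m = m' := by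
    intro m hm m' hm' heq
    rw [Finset.mem_filter, Finset.mem_Icc] at hm hm'
    have h1 : mn (Finset.Icc (m + 1) (2 * m)) = m + 1 := mn_Icc (by omega)
    rw [heq, mn_Icc (by omega)] at h1
    omega
  rw [hX1, hX2, Finset.sum_image hinj1, Finset.sum_image hinj2]
  have hc1 : ∑ m ∈ (Finset.Icc 1 k).filter (fun m => m * (3 * m - 1) / 2 = k),
      (-1 : ℤ) ^ (Finset.Icc m (2 * m - 1)).card
      = ∑ m ∈ (Finset.Icc 1 k).filter (fun m => m * (3 * m - 1) / 2 = k), (-1 : ℤ) ^ m := by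
    refine Finset.sum_congr rfl fun m hm => ?_
    rw [Finset.mem_filter, Finset.mem_Icc] at hm
    rw [cardE1 hm.1.1]
  have hc2 : ∑ m ∈ (Finset.Icc 1 k).filter (fun m => m * (3 * m + 1) / 2 = k),
      (-1 : ℤ) ^ (Finset.Icc (m + 1) (2 * m)).card
      = ∑ m ∈ (Finset.Icc 1 k).filter (fun m => m * (3 * m + 1) / 2 = k), (-1 : ℤ) ^ m := by
    refine Finset.sum_congr rfl fun m hm => ?_
    rw [Finset.mem_filter, Finset.mem_Icc] at hm
    rw [cardE2 hm.1.1]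
  rw [hc1, hc2, Finset.sum_filter, Finset.sum_filter, ← Finset.sum_add_distrib]
  refine Finset.sum_congr rfl fun m _ => ?_
  split_ifs <;> ring

open Classical in
lemma key (k N : ℕ) (hkN : k ≤ N) :
    ∑ t ∈ (Finset.Icc 1 N).powerset.filter (fun t => ∑ i ∈ t, i = k), (-1 : ℤ) ^ t.card
      = (if k = 0 then 1 else 0) + ∑ m ∈ Finset.Icc 1 k, (-1 : ℤ) ^ m *
          ((if m * (3 * m - 1) / 2 = k then 1 else 0) +
            (if m * (3 * m + 1) / 2 = k then 1 else 0)) := by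
  rcases Nat.eq_zero_or_pos k with rfl | hk
  · have hset : (Finset.Icc 1 N).powerset.filter (fun t => ∑ i ∈ t, i = 0) = {∅} := by
      ext t
      simp only [Finset.mem_filter, Finset.mem_powerset, Finset.mem_singleton]
      constructor
      · rintro ⟨hsub, hsum⟩
        rw [Finset.sum_eq_zero_iff] at hsum
        refine Finset.eq_empty_of_forall_notMem fun x hx => ?_
        have h1 := hsum x hx
        have h2 := (Finset.mem_Icc.mp (hsub hx)).1
        omega
      · rintro rfl; simp
    rw [hset]
    simp
  · rw [← Finset.sum_filter_add_sum_filter_not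
      ((Finset.Icc 1 N).powerset.filter (fun t => ∑ i ∈ t, i = k)) (fun t => IsExc t),
      sum_exc k N hk hkN, sum_rest_zero k N hk hkN, if_neg (by omega)]
    ring

end Exc

lemma ite_eq_comm (a b : ℕ) : (if a = b then (1 : ℤ) else 0) = (if b = a then 1 else 0) := by
  split_ifs with h1 h2 <;> first | rfl | omega

end PentAux

open Finset PentAux in
/-- Euler's pentagonal number theorem,
`Π_{n≥1} (1 − xⁿ) = 1 + Σ_{m≥1} (−1)^m (x^{m(3m−1)/2} + x^{m(3m+1)/2})`,
expressed coefficientwise: for any `N ≥ k`, the coefficient of `x^k` in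
`Π_{n=1}^{N} (1 − xⁿ)` equals the coefficient of `x^k` in the (truncated) right-hand
side, noting that every pentagonal exponent `≤ k` arises from some `m ≤ k`. -/
theorem stmt8 (k N : ℕ) (hkN : k ≤ N) :
    PowerSeries.coeff (R := ℤ) k (∏ n ∈ Finset.Icc 1 N, (1 - PowerSeries.X ^ n)) =
      PowerSeries.coeff (R := ℤ) k
        (1 + ∑ m ∈ Finset.Icc 1 k, ((-1 : PowerSeries ℤ) ^ m *
          (PowerSeries.X ^ (m * (3 * m - 1) / 2) +
            PowerSeries.X ^ (m * (3 * m + 1) / 2)))) := by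
  classical
  have hC : ∀ c : ℕ, (PowerSeries.C (R := ℤ)) ((-1 : ℤ) ^ c) = (-1 : PowerSeries ℤ) ^ c := by
    intro c; rw [map_pow, map_neg, map_one]
  have hL : (PowerSeries.coeff (R := ℤ) k) (∏ n ∈ Finset.Icc 1 N, (1 - PowerSeries.X ^ n)) =
      ∑ t ∈ (Finset.Icc 1 N).powerset.filter (fun t => ∑ i ∈ t, i = k),
        (-1 : ℤ) ^ t.card := by
    rw [Finset.prod_sub (fun _ => (1 : PowerSeries ℤ)) (fun n => PowerSeries.X ^ n),
      map_sum]
    have hterm : ∀ t ∈ (Finset.Icc 1 N).powerset,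
        (PowerSeries.coeff (R := ℤ) k) ((-1) ^ t.card *
            (∏ _i ∈ Finset.Icc 1 N \ t, (1 : PowerSeries ℤ)) * ∏ i ∈ t, PowerSeries.X ^ i)
          = if (∑ i ∈ t, i) = k then (-1 : ℤ) ^ t.card else 0 := by
      intro t _
      rw [Finset.prod_const_one, mul_one, Finset.prod_pow_eq_pow_sum, ← hC,
        PowerSeries.coeff_C_mul, PowerSeries.coeff_X_pow]
      rcases eq_or_ne (∑ i ∈ t, i) k with h | h
      · rw [if_pos h.symm, if_pos h, mul_one]
      · rw [if_neg (Ne.symm h), if_neg h, mul_zero]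
    rw [Finset.sum_congr rfl hterm]
    exact (Finset.sum_filter _ _).symm
  have hR : (PowerSeries.coeff (R := ℤ) k)
      (1 + ∑ m ∈ Finset.Icc 1 k, ((-1 : PowerSeries ℤ) ^ m *
          (PowerSeries.X ^ (m * (3 * m - 1) / 2) + PowerSeries.X ^ (m * (3 * m + 1) / 2))))
      = (if k = 0 then 1 else 0) + ∑ m ∈ Finset.Icc 1 k, (-1 : ℤ) ^ m *
          ((if m * (3 * m - 1) / 2 = k then 1 else 0) +
            (if m * (3 * m + 1) / 2 = k then 1 else 0)) := by
    rw [map_add, map_sum, PowerSeries.coeff_one]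
    congr 1
    refine Finset.sum_congr rfl fun m _ => ?_
    rw [← hC, PowerSeries.coeff_C_mul, map_add, PowerSeries.coeff_X_pow,
      PowerSeries.coeff_X_pow, ite_eq_comm k (m * (3 * m - 1) / 2),
      ite_eq_comm k (m * (3 * m + 1) / 2)]
  rw [hL, hR]
  exact key k N hkN
end

section
/- If k is not a generalized pentagonal number (i.e., k ≠ m(3m±1)/2 for all m ≥ 0), then the number of partitions of k into an even number of distinct parts equals the number of partitions of k into an odd number of distinct parts. -/
namespace Stmt9


def Inv (k : ℕ) (l : List ℕ) : Prop :=
  l.Chain' (· > ·) ∧ (∀ x ∈ l, 0 < x) ∧ l.sum = k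

def partEquiv (k : ℕ) (P : ℕ → Prop) :
    {p : Nat.Partition k // p.parts.Nodup ∧ P (Multiset.card p.parts)} ≃
      {l : List ℕ // Inv k l ∧ P l.length} where
  toFun p := ⟨p.1.parts.sort (· ≥ ·), by
    obtain ⟨p, hnd, hP⟩ := p
    have hs : List.Pairwise (· ≥ ·) (p.parts.sort (· ≥ ·)) := Multiset.pairwise_sort _ _
    have hnd' : (p.parts.sort (· ≥ ·)).Nodup := by
      rw [← Multiset.coe_nodup, Multiset.sort_eq]; exact hnd
    have hpw : (p.parts.sort (· ≥ ·)).Pairwise (· > ·) := by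
      refine (hs.and hnd').imp ?_
      rintro a b ⟨h1, h2⟩; exact lt_of_le_of_ne h1 h2.symm
    refine ⟨⟨hpw.isChain, fun x hx => p.parts_pos (by rwa [Multiset.mem_sort] at hx), ?_⟩, ?_⟩
    · have := congrArg Multiset.sum (Multiset.sort_eq p.parts (· ≥ ·))
      rw [Multiset.sum_coe] at this
      rw [this, p.parts_sum]
    · rwa [← Multiset.length_sort (· ≥ ·)] at hP⟩
  invFun l := ⟨⟨(l.1 : Multiset ℕ), fun {x} hx => l.2.1.2.1 x (by exact_mod_cast hx), by
      rw [Multiset.sum_coe]; exact l.2.1.2.2⟩, by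
    obtain ⟨l, ⟨hc, hpos, hsum⟩, hP⟩ := l
    have hpw : l.Pairwise (· > ·) := List.isChain_iff_pairwise.mp hc
    constructor
    · rw [Multiset.coe_nodup]; exact hpw.imp ne_of_gt
    · simpa using hP⟩
  left_inv p := by
    ext1
    ext1
    simp [Multiset.sort_eq]
  right_inv l := by
    ext1
    obtain ⟨l, ⟨hc, hpos, hsum⟩, hP⟩ := l
    show Multiset.sort (↑l : Multiset ℕ) (· ≥ ·) = l
    have hpw : l.Pairwise (· > ·) := List.isChain_iff_pairwise.mp hc
    refine List.Perm.eq_of_pairwise' (r := (· ≥ ·)) (Multiset.pairwise_sort _ _) (hpw.imp le_of_lt) ?_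
    rw [← Multiset.coe_eq_coe, Multiset.sort_eq]



/-- `g l i` is the `i`-th element of `l` (0 if out of range). -/
def g (l : List ℕ) (i : ℕ) : ℕ := l.getD i 0

theorem g_eq {l : List ℕ} {i : ℕ} (h : i < l.length) : g l i = l[i] :=
  List.getD_eq_getElem l 0 h

theorem g_cons_succ (a : ℕ) (l : List ℕ) (i : ℕ) : g (a :: l) (i + 1) = g l i := rfl
theorem g_cons_zero (a : ℕ) (l : List ℕ) : g (a :: l) 0 = a := rfl

/-- length of the maximal initial "staircase" (consecutive decreasing by 1). -/
def stairLen : List ℕ → ℕ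
  | [] => 0
  | [_] => 1
  | a :: b :: l => if b + 1 = a then stairLen (b :: l) + 1 else 1

theorem stairLen_pos {l : List ℕ} (h : l ≠ []) : 1 ≤ stairLen l := by
  match l with
  | [_] => simp [stairLen]
  | a :: b :: l => simp only [stairLen]; split <;> omega

theorem stairLen_le (l : List ℕ) : stairLen l ≤ l.length := by
  match l with
  | [] => simp [stairLen]
  | [_] => simp [stairLen]
  | a :: b :: l =>
    have := stairLen_le (b :: l)
    simp only [stairLen]; split <;> simp_all

theorem stairLen_spec {l : List ℕ} {i : ℕ} (h : i + 1 < stairLen l) :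
    g l (i + 1) + 1 = g l i := by
  match l with
  | [] => simp [stairLen] at h
  | [_] => simp [stairLen] at h
  | a :: b :: l =>
    simp only [stairLen] at h
    split at h
    · match i with
      | 0 => simpa [g_cons_succ, g_cons_zero]
      | i + 1 =>
        have := stairLen_spec (l := b :: l) (i := i) (by omega)
        simpa [g_cons_succ] using this
    · omega

theorem stairLen_break {l : List ℕ} (h : stairLen l < l.length) :
    g l (stairLen l) + 1 ≠ g l (stairLen l - 1) := by
  match l with
  | [] => simp at h
  | [_] => simp [stairLen] at h
  | a :: b :: l =>
    by_cases hab : b + 1 = a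
    · have h1 : 1 ≤ stairLen (b :: l) := stairLen_pos (by simp)
      have h2 : stairLen (b :: l) < (b :: l).length := by
        simp only [stairLen, if_pos hab] at h; simpa using h
      have := stairLen_break h2
      simp only [stairLen, if_pos hab]
      rw [show stairLen (b :: l) + 1 - 1 = (stairLen (b :: l) - 1) + 1 by omega]
      rw [g_cons_succ, g_cons_succ]
      exact this
    · simp only [stairLen, if_neg hab]
      simpa [g_cons_succ, g_cons_zero]

theorem stairLen_ge {l : List ℕ} {t : ℕ} (hne : l ≠ []) (ht : t ≤ l.length)
    (hspec : ∀ i, i + 1 < t → g l (i + 1) + 1 = g l i) :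
    t ≤ stairLen l := by
  by_contra hlt
  push_neg at hlt
  have h1 : 1 ≤ stairLen l := stairLen_pos hne
  have hb := stairLen_break (l := l) (by omega)
  have := hspec (stairLen l - 1) (by omega)
  rw [show stairLen l - 1 + 1 = stairLen l by omega] at this
  exact hb this

theorem stairLen_eq {l : List ℕ} {t : ℕ} (hne : l ≠ []) (h1 : 1 ≤ t) (ht : t ≤ l.length)
    (hspec : ∀ i, i + 1 < t → g l (i + 1) + 1 = g l i)
    (hbreak : t < l.length → g l t + 1 ≠ g l (t - 1)) :
    stairLen l = t := by
  have hge := stairLen_ge hne ht hspec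
  by_contra hne'
  have hlt : t < stairLen l := by omega
  have := stairLen_spec (l := l) (i := t - 1) (by omega)
  rw [show t - 1 + 1 = t by omega] at this
  exact hbreak (by have := stairLen_le l; omega) this



theorem g_eq_zero {l : List ℕ} {i : ℕ} (h : l.length ≤ i) : g l i = 0 := by
  simp [g, List.getD_eq_getElem?_getD, List.getElem?_eq_none h]

theorem g_append (x y : List ℕ) (i : ℕ) :
    g (x ++ y) i = if i < x.length then g x i else g y (i - x.length) := by
  split
  · rename_i hi
    rw [g_eq (by simp; omega), g_eq hi, List.getElem_append]
    simp [hi]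
  · rename_i hi
    push_neg at hi
    by_cases h2 : i - x.length < y.length
    · rw [g_eq (by simp; omega), g_eq h2, List.getElem_append_right hi]
    · rw [g_eq_zero (by simp; omega), g_eq_zero (by omega)]

theorem g_map (φ : ℕ → ℕ) (l : List ℕ) (i : ℕ) :
    g (l.map φ) i = if i < l.length then φ (g l i) else 0 := by
  split
  · rename_i hi
    rw [g_eq (by simpa), g_eq hi, List.getElem_map]
  · rename_i hi
    exact g_eq_zero (by simpa using by omega)

theorem g_take (s : ℕ) (l : List ℕ) (i : ℕ) :
    g (l.take s) i = if i < s then g l i else 0 := by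
  by_cases hi : i < (l.take s).length
  · have hi' : i < s := by simp at hi; omega
    have hil : i < l.length := by simp at hi; omega
    rw [g_eq hi, List.getElem_take, g_eq hil, if_pos hi']
  · push_neg at hi
    rw [g_eq_zero hi]
    simp only [List.length_take] at hi
    split
    · exact (g_eq_zero (by omega)).symm
    · rfl

theorem g_drop (s : ℕ) (l : List ℕ) (i : ℕ) : g (l.drop s) i = g l (s + i) := by
  by_cases hi : i < (l.drop s).length
  · rw [g_eq hi, List.getElem_drop, g_eq (by simp at hi; omega)]
  · simp only [List.length_drop] at hi
    rw [g_eq_zero (by simp; omega), g_eq_zero (by omega)]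

theorem g_dropLast (l : List ℕ) (i : ℕ) :
    g l.dropLast i = if i < l.length - 1 then g l i else 0 := by
  by_cases hi : i < l.length - 1
  · rw [if_pos hi, g_eq (by simpa using hi), List.getElem_dropLast, g_eq (by omega)]
  · rw [if_neg hi, g_eq_zero (by simp; omega)]

theorem g_singleton (a i : ℕ) : g [a] i = if i = 0 then a else 0 := by
  match i with
  | 0 => rfl
  | i + 1 => simp [g]

/-- replace the first `s` entries `x` by `φ x`. -/
def mt (φ : ℕ → ℕ) (s : ℕ) (l : List ℕ) : List ℕ := (l.take s).map φ ++ l.drop s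

theorem mt_length (φ : ℕ → ℕ) (s : ℕ) (l : List ℕ) : (mt φ s l).length = l.length := by
  simp [mt]; omega

theorem g_mt (φ : ℕ → ℕ) (s : ℕ) (l : List ℕ) (i : ℕ) (hs : s ≤ l.length) :
    g (mt φ s l) i = if i < s then φ (g l i) else g l i := by
  rw [mt, g_append, g_map, g_take, g_drop]
  simp only [List.length_map, List.length_take]
  rcases lt_or_ge i s with hi | hi
  · simp [hi, inf_of_le_left hs, lt_of_lt_of_le hi hs]
  · have h1 : ¬ i < s ⊓ l.length := by omega
    simp only [if_neg h1, if_neg (not_lt.mpr hi)]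
    rcases lt_or_ge i l.length with h2 | h2
    · rw [inf_of_le_left hs]; congr 1; omega
    · rw [inf_of_le_left hs, g_eq_zero h2, g_eq_zero (by omega)]

def opA (s : ℕ) (l : List ℕ) : List ℕ := mt (· + 1) s l.dropLast
def opB (t : ℕ) (l : List ℕ) : List ℕ := mt (· - 1) t l ++ [t]

theorem opA_length (s : ℕ) (l : List ℕ) : (opA s l).length = l.length - 1 := by
  simp [opA, mt_length]

theorem opB_length (t : ℕ) (l : List ℕ) : (opB t l).length = l.length + 1 := by
  simp [opB, mt_length]

theorem g_opA (s : ℕ) (l : List ℕ) (i : ℕ) (hs : s ≤ l.length - 1) :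
    g (opA s l) i = if i < s then g l i + 1 else if i < l.length - 1 then g l i else 0 := by
  rw [opA, g_mt _ _ _ _ (by simpa using hs)]
  rcases lt_or_ge i s with hi | hi
  · rw [if_pos hi, if_pos hi, g_dropLast, if_pos (by omega)]
  · rw [if_neg (not_lt.mpr hi), if_neg (not_lt.mpr hi), g_dropLast]

theorem g_opB (t : ℕ) (l : List ℕ) (i : ℕ) (ht : t ≤ l.length) :
    g (opB t l) i = if i < t then g l i - 1
      else if i < l.length then g l i else if i = l.length then t else 0 := by
  rw [opB, g_append, g_mt _ _ _ _ ht, mt_length, g_singleton]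
  rcases lt_or_ge i t with hi | hi
  · simp [hi, lt_of_lt_of_le hi ht]
  · rcases lt_or_ge i l.length with h2 | h2
    · simp [h2, not_lt.mpr hi]
    · simp only [if_neg (by omega : ¬ i < l.length), if_neg (not_lt.mpr hi)]
      rcases eq_or_lt_of_le h2 with h3 | h3
      · simp [← h3]
      · rw [if_neg (by omega), if_neg (by omega)]

theorem chain'_iff_g {l : List ℕ} :
    l.Chain' (· > ·) ↔ ∀ i, i + 1 < l.length → g l (i + 1) < g l i := by
  rw [show l.Chain' (· > ·) ↔ l.IsChain (· > ·) from Iff.rfl, List.isChain_iff_getElem]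
  constructor
  · intro H i hi
    have := H i (by omega)
    rw [g_eq (by omega), g_eq (by omega)]
    simpa [List.get_eq_getElem] using this
  · intro H i hi
    have := H i (by omega)
    rw [g_eq (by omega), g_eq (by omega)] at this
    simpa [List.get_eq_getElem] using this

theorem g_dec {l : List ℕ} (hc : l.Chain' (· > ·)) {i j : ℕ} (hij : i < j)
    (hj : j < l.length) : g l j < g l i := by
  have hp := List.isChain_iff_pairwise.mp hc
  rw [List.pairwise_iff_getElem] at hp
  rw [g_eq hj, g_eq (by omega)]
  exact hp i j (by omega) hj hij

theorem g_anti {l : List ℕ} (hc : l.Chain' (· > ·)) {i j : ℕ} (hij : i ≤ j)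
    (hj : j < l.length) : g l j ≤ g l i := by
  rcases eq_or_lt_of_le hij with rfl | h
  · exact le_refl _
  · exact le_of_lt (g_dec hc h hj)

theorem pos_iff_g {l : List ℕ} : (∀ x ∈ l, 0 < x) ↔ ∀ i < l.length, 0 < g l i := by
  constructor
  · intro H i hi
    rw [g_eq hi]
    exact H _ (l.getElem_mem hi)
  · intro H x hx
    obtain ⟨i, hi, rfl⟩ := List.mem_iff_getElem.mp hx
    rw [← g_eq hi]
    exact H i hi

theorem sum_g (l : List ℕ) : l.sum = ∑ i ∈ Finset.range l.length, g l i := by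
  rw [← Fin.sum_univ_getElem l, ← Fin.sum_univ_eq_sum_range (fun i => g l i) l.length]
  exact Finset.sum_congr rfl fun i _ => (g_eq i.2).symm

theorem sum_map_add_one (l : List ℕ) : (l.map (· + 1)).sum = l.sum + l.length := by
  induction l with
  | nil => simp
  | cons a l ih => simp [ih]; omega

theorem sum_map_sub_one (l : List ℕ) (h : ∀ a ∈ l, 1 ≤ a) :
    (l.map (· - 1)).sum + l.length = l.sum := by
  induction l with
  | nil => simp
  | cons a l ih =>
    have ha := h a (by simp)
    have := ih (fun a ha => h a (by simp [ha]))
    simp only [List.map_cons, List.sum_cons, List.length_cons]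
    omega


theorem stair_val {l : List ℕ} : ∀ i, i < stairLen l → g l i + i = g l 0 := by
  intro i
  induction i with
  | zero => intro; rfl
  | succ j ih =>
    intro hj
    have h1 := stairLen_spec (l := l) (i := j) hj
    have h2 := ih (by omega)
    omega

theorem dropLast_append_g {l : List ℕ} (hne : l ≠ []) :
    l.dropLast ++ [g l (l.length - 1)] = l := by
  have h1 : l.length - 1 < l.length := by
    cases l with
    | nil => simp at hne
    | cons a l => simp
  rw [g_eq h1, ← List.getLast_eq_getElem hne, List.dropLast_append_getLast]

theorem sum_dropLast {l : List ℕ} (hne : l ≠ []) :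
    l.dropLast.sum + g l (l.length - 1) = l.sum := by
  conv_rhs => rw [← dropLast_append_g hne]
  simp

theorem sum_opA {l : List ℕ} {s : ℕ} (hs : s ≤ l.length - 1) (hne : l ≠ [])
    (hgl : g l (l.length - 1) = s) : (opA s l).sum = l.sum := by
  have hd : l.dropLast.length = l.length - 1 := by simp
  have h1 : ((l.dropLast.take s).map (· + 1)).sum = (l.dropLast.take s).sum + s := by
    rw [sum_map_add_one, List.length_take, hd, inf_of_le_left hs]
  have h2 := List.sum_take_add_sum_drop l.dropLast s
  have h3 := sum_dropLast hne
  simp only [opA, mt, List.sum_append]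
  omega

theorem sum_opB {l : List ℕ} {t : ℕ} (ht : t ≤ l.length) (hpos : ∀ x ∈ l, 0 < x) :
    (opB t l).sum = l.sum := by
  have h1 : ((l.take t).map (· - 1)).sum + t = (l.take t).sum := by
    have := sum_map_sub_one (l.take t) (fun a ha => hpos a (List.mem_of_mem_take ha))
    rwa [List.length_take, inf_of_le_left ht] at this
  have h2 := List.sum_take_add_sum_drop l t
  simp only [opB, mt, List.sum_append, List.sum_cons, List.sum_nil]
  omega

theorem roundtripA {l : List ℕ} (hne : l ≠ [])
    (hs : g l (l.length - 1) ≤ l.length - 1) :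
    opB (g l (l.length - 1)) (opA (g l (l.length - 1)) l) = l := by
  set s := g l (l.length - 1) with hs_def
  have hd : l.dropLast.length = l.length - 1 := by simp
  have hlen : ((l.dropLast.take s).map (· + 1)).length = s := by
    rw [List.length_map, List.length_take, hd, inf_of_le_left hs]
  have htake : (opA s l).take s = (l.dropLast.take s).map (· + 1) := by
    rw [opA, mt, List.take_left' hlen]
  have hdrop : (opA s l).drop s = l.dropLast.drop s := by
    rw [opA, mt, List.drop_left' hlen]
  rw [opB, mt, htake, hdrop, List.map_map]
  have : ((l.dropLast.take s).map ((· - 1) ∘ (· + 1))) = l.dropLast.take s := by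
    rw [List.map_congr_left (g := id) (fun a _ => by simp), List.map_id]
  rw [this, List.take_append_drop]
  exact dropLast_append_g hne

theorem roundtripB {l : List ℕ} (hne : l ≠ []) (hpos : ∀ x ∈ l, 0 < x) :
    opA (stairLen l) (opB (stairLen l) l) = l := by
  set t := stairLen l with ht_def
  have ht : t ≤ l.length := stairLen_le l
  have hdl : (opB t l).dropLast = (l.take t).map (· - 1) ++ l.drop t := by
    rw [opB, mt, List.dropLast_concat]
  have hlen : ((l.take t).map (· - 1)).length = t := by
    rw [List.length_map, List.length_take, inf_of_le_left ht]
  rw [opA, mt, hdl, List.take_left' hlen, List.drop_left' hlen, List.map_map]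
  have : ((l.take t).map ((· + 1) ∘ (· - 1))) = l.take t := by
    refine List.map_congr_left (g := id) (fun a ha => ?_) |>.trans (List.map_id _)
    have := hpos a (List.mem_of_mem_take ha)
    simp; omega
  rw [this, List.take_append_drop]

theorem pent_sum {l : List ℕ} (hful : stairLen l = l.length) :
    2 * l.sum + l.length * (l.length - 1) = 2 * (l.length * g l 0) := by
  have h1 : ∀ i ∈ Finset.range l.length, g l i + i = g l 0 := by
    intro i hi
    exact stair_val i (by rw [hful]; exact Finset.mem_range.mp hi)
  have h2 : ∑ i ∈ Finset.range l.length, (g l i + i) = l.length * g l 0 := by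
    rw [Finset.sum_congr rfl h1, Finset.sum_const, Finset.card_range, smul_eq_mul]
  rw [Finset.sum_add_distrib] at h2
  have h3 := Finset.sum_range_id_mul_two l.length
  have h4 := sum_g l
  omega

theorem excA {k : ℕ} {l : List ℕ}
    (hk : ∀ m : ℕ, 2 * k ≠ m * (3 * m - 1) ∧ 2 * k ≠ m * (3 * m + 1))
    (hsum : l.sum = k) (hne : l ≠ [])
    (hful : stairLen l = l.length) (hlast : g l (l.length - 1) = l.length) : False := by
  have hn1 : 1 ≤ l.length := List.length_pos_iff.mpr hne
  obtain ⟨m, hm⟩ : ∃ m, l.length = m + 1 := ⟨l.length - 1, by omega⟩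
  have hg0 : g l (l.length - 1) + (l.length - 1) = g l 0 :=
    stair_val (l.length - 1) (by omega)
  have hps := pent_sum hful
  rw [hsum] at hps
  have hg0' : g l 0 = 2 * m + 1 := by omega
  rw [hm, hg0'] at hps
  simp only [Nat.add_sub_cancel] at hps
  have : 2 * k = (m + 1) * (3 * (m + 1) - 1) := by
    rw [show 3 * (m + 1) - 1 = 3 * m + 2 by omega]
    zify at hps ⊢
    linear_combination hps
  exact (hk (m + 1)).1 this

theorem excB {k : ℕ} {l : List ℕ}
    (hk : ∀ m : ℕ, 2 * k ≠ m * (3 * m - 1) ∧ 2 * k ≠ m * (3 * m + 1))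
    (hsum : l.sum = k) (hne : l ≠ [])
    (hful : stairLen l = l.length) (hlast : g l (l.length - 1) = l.length + 1) : False := by
  have hn1 : 1 ≤ l.length := List.length_pos_iff.mpr hne
  obtain ⟨m, hm⟩ : ∃ m, l.length = m + 1 := ⟨l.length - 1, by omega⟩
  have hg0 : g l (l.length - 1) + (l.length - 1) = g l 0 :=
    stair_val (l.length - 1) (by omega)
  have hps := pent_sum hful
  rw [hsum] at hps
  have hg0' : g l 0 = 2 * m + 2 := by omega
  rw [hm, hg0'] at hps
  simp only [Nat.add_sub_cancel] at hps
  have : 2 * k = (m + 1) * (3 * (m + 1) + 1) := by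
    zify at hps ⊢
    linear_combination hps
  exact (hk (m + 1)).2 this

/-- Franklin's involution. -/
def f (l : List ℕ) : List ℕ :=
  if g l (l.length - 1) ≤ stairLen l then opA (g l (l.length - 1)) l
  else opB (stairLen l) l

theorem f_main {k : ℕ} {l : List ℕ}
    (hk : ∀ m : ℕ, 2 * k ≠ m * (3 * m - 1) ∧ 2 * k ≠ m * (3 * m + 1))
    (hinv : Inv k l) :
    Inv k (f l) ∧ (f l).length % 2 = (l.length + 1) % 2 ∧ f (f l) = l := by
  obtain ⟨hc, hpos, hsum⟩ := hinv
  have hk0 : k ≠ 0 := by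
    intro h
    exact (hk 0).1 (by simp [h])
  have hne : l ≠ [] := by
    intro h
    rw [h] at hsum
    exact hk0 hsum.symm
  have hn1 : 1 ≤ l.length := List.length_pos_iff.mpr hne
  have ht1 : 1 ≤ stairLen l := stairLen_pos hne
  have htn : stairLen l ≤ l.length := stairLen_le l
  have hposg : ∀ i < l.length, 0 < g l i := pos_iff_g.mp hpos
  have hs1 : 1 ≤ g l (l.length - 1) := hposg _ (by omega)
  have hdec : ∀ i, i + 1 < l.length → g l (i + 1) < g l i :=
    fun i hi => g_dec hc (by omega) hi
  by_cases hAB : g l (l.length - 1) ≤ stairLen l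
  · -- Case A
    set s := g l (l.length - 1) with hs_def
    have hsn : s < l.length := by
      by_contra h'
      have h1 : s = l.length := by omega
      have h2 : stairLen l = l.length := by omega
      exact excA hk hsum hne h2 h1
    have hn2 : 2 ≤ l.length := by omega
    have hfl : f l = opA s l := if_pos hAB
    have hlenA : (opA s l).length = l.length - 1 := opA_length s l
    have hg : ∀ i, g (opA s l) i =
        if i < s then g l i + 1 else if i < l.length - 1 then g l i else 0 :=
      fun i => g_opA s l i (by omega)
    have hneA : opA s l ≠ [] := by
      refine List.length_pos_iff.mp ?_
      rw [hlenA]; omega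
    have hchainA : (opA s l).Chain' (· > ·) := by
      rw [chain'_iff_g]
      intro i hi
      rw [hlenA] at hi
      rw [hg (i + 1), hg i]
      have d1 := hdec i (by omega)
      split_ifs <;> omega
    have hposA : ∀ x ∈ opA s l, 0 < x := by
      rw [pos_iff_g]
      intro i hi
      rw [hlenA] at hi
      rw [hg i]
      have p1 := hposg i (by omega)
      split_ifs <;> omega
    have hsumA : (opA s l).sum = k := by
      rw [sum_opA (by omega) hne rfl, hsum]
    have hstairA : stairLen (opA s l) = s := by
      refine stairLen_eq hneA (by omega) (by omega) ?_ ?_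
      · intro i hi
        rw [hg (i + 1), hg i]
        have hsp := stairLen_spec (l := l) (i := i) (by omega)
        split_ifs <;> omega
      · intro hbr
        rw [hlenA] at hbr
        rw [hg s, hg (s - 1)]
        have d2 : g l (s - 1 + 1) < g l (s - 1) := hdec (s - 1) (by omega)
        rw [show s - 1 + 1 = s by omega] at d2
        split_ifs <;> omega
    have hlastA : s < g (opA s l) ((opA s l).length - 1) := by
      rw [hlenA, hg (l.length - 1 - 1)]
      have d3 : g l (l.length - 1 - 1 + 1) < g l (l.length - 1 - 1) :=
        hdec (l.length - 1 - 1) (by omega)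
      rw [show l.length - 1 - 1 + 1 = l.length - 1 by omega] at d3
      split_ifs <;> omega
    refine ⟨?_, ?_, ?_⟩
    · rw [hfl]; exact ⟨hchainA, hposA, hsumA⟩
    · rw [hfl, hlenA]; omega
    · rw [hfl, f, if_neg (by rw [hstairA]; omega), hstairA]
      exact roundtripA hne (by omega)
  · -- Case B
    push_neg at hAB
    set t := stairLen l with ht_def
    have hBx : t < l.length ∨ t + 2 ≤ g l (l.length - 1) := by
      by_contra h'
      push_neg at h'
      obtain ⟨h1, h2⟩ := h'
      have h3 : t = l.length := by omega
      have h4 : g l (l.length - 1) = l.length + 1 := by omega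
      exact excB hk hsum hne h3 h4
    have hfl : f l = opB t l := if_neg (by omega)
    have hlenB : (opB t l).length = l.length + 1 := opB_length t l
    have hg : ∀ i, g (opB t l) i =
        if i < t then g l i - 1
        else if i < l.length then g l i else if i = l.length then t else 0 :=
      fun i => g_opB t l i htn
    have hneB : opB t l ≠ [] := by
      refine List.length_pos_iff.mp ?_
      rw [hlenB]; omega
    have hchainB : (opB t l).Chain' (· > ·) := by
      rw [chain'_iff_g]
      intro i hi
      rw [hlenB] at hi
      rw [hg (i + 1), hg i]
      rcases lt_or_ge (i + 1) l.length with h | h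
      · have d1 := hdec i h
        have p1 := hposg (i + 1) h
        by_cases h2 : i + 1 < t
        · simp only [if_pos h2, if_pos (by omega : i < t)]
          omega
        · by_cases h3 : i + 1 = t
          · have hbk := stairLen_break (l := l) (show stairLen l < l.length by omega)
            rw [← ht_def, ← h3, show i + 1 - 1 = i by omega] at hbk
            split_ifs <;> omega
          · split_ifs <;> omega
      · have h4 : i + 1 = l.length := by omega
        by_cases h5 : i < t
        · -- then t = l.length
          have h6 : t = l.length := by omega
          have h7 := hAB
          rw [show l.length - 1 = i by omega] at h7 hBx
          split_ifs <;> omega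
        · have h7 := hAB
          rw [show l.length - 1 = i by omega] at h7
          split_ifs <;> omega
    have hposB : ∀ x ∈ opB t l, 0 < x := by
      rw [pos_iff_g]
      intro i hi
      rw [hlenB] at hi
      rw [hg i]
      rcases lt_or_ge i l.length with h | h
      · have q1 : g l (l.length - 1) ≤ g l i := g_anti hc (by omega) (by omega)
        split_ifs <;> omega
      · split_ifs <;> omega
    have hsumB : (opB t l).sum = k := by rw [sum_opB htn hpos, hsum]
    have hgn : g (opB t l) ((opB t l).length - 1) = t := by
      rw [hlenB]
      simp only [Nat.add_sub_cancel]
      rw [hg l.length]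
      rw [if_neg (by omega), if_neg (by omega), if_pos rfl]
    have hstairB : t ≤ stairLen (opB t l) := by
      refine stairLen_ge hneB (by omega) ?_
      intro i hi
      rw [hg (i + 1), hg i]
      have hsp := stairLen_spec (l := l) (i := i) (by omega)
      have p1 := hposg (i + 1) (by omega)
      simp only [if_pos hi, if_pos (by omega : i < t)]
      omega
    refine ⟨?_, ?_, ?_⟩
    · exact hfl ▸ (⟨hchainB, hposB, hsumB⟩ : Inv k (opB t l))
    · rw [hfl, hlenB]
    · rw [hfl, f, if_pos (by rw [hgn]; exact hstairB), hgn]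
      exact roundtripB hne hpos

end Stmt9

/-- If `k` is not a generalized pentagonal number (`k ≠ m(3m±1)/2` for all `m ∈ ℕ`),
then the number of partitions of `k` into an even number of distinct parts equals the
number of partitions of `k` into an odd number of distinct parts. -/
theorem stmt9 (k : ℕ)
    (h : ∀ m : ℕ, 2 * k ≠ m * (3 * m - 1) ∧ 2 * k ≠ m * (3 * m + 1)) :
    Nat.card {p : Nat.Partition k // p.parts.Nodup ∧ Even (Multiset.card p.parts)} =
      Nat.card {p : Nat.Partition k // p.parts.Nodup ∧ Odd (Multiset.card p.parts)} := by
  refine Nat.card_congr (((Stmt9.partEquiv k Even).trans ?_).trans (Stmt9.partEquiv k Odd).symm)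
  refine
    { toFun := fun x => ⟨Stmt9.f x.1, (Stmt9.f_main h x.2.1).1, ?_⟩
      invFun := fun x => ⟨Stmt9.f x.1, (Stmt9.f_main h x.2.1).1, ?_⟩
      left_inv := fun x => Subtype.ext (Stmt9.f_main h x.2.1).2.2
      right_inv := fun x => Subtype.ext (Stmt9.f_main h x.2.1).2.2 }
  · have hp := (Stmt9.f_main h x.2.1).2.1
    have he := Nat.even_iff.mp x.2.2
    rw [Nat.odd_iff]
    omega
  · have hp := (Stmt9.f_main h x.2.1).2.1
    have he := Nat.odd_iff.mp x.2.2
    rw [Nat.even_iff]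
    omega
end

section
/- Let k be a positive integer that is not a generalized pentagonal number. Then the polynomial Pd_k(t) = Σ_m pd(k,m) t^m is divisible by (1+t) in ℤ[t], and the quotient Pd_k(t)/(1+t) has non-negative integer coefficients. -/
open scoped Classical
open Finset

/-- `pd k m`: the number of partitions of `k` into exactly `m` distinct positive parts. -/
noncomputable def pd (k m : ℕ) : ℕ :=
  Nat.card {p : Nat.Partition k // p.parts.Nodup ∧ Multiset.card p.parts = m}

/-- `Pd_k(t) = Σ_m pd(k,m) tᵐ`. -/
noncomputable def Pd (k : ℕ) : Polynomial ℤ :=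
  ∑ m ∈ Finset.range (k + 1), Polynomial.C (pd k m : ℤ) * Polynomial.X ^ m

noncomputable def fmn (S : Finset ℕ) : ℕ := if h : S.Nonempty then S.min' h else 0
noncomputable def fmx (S : Finset ℕ) : ℕ := if h : S.Nonempty then S.max' h else 0
noncomputable def frr (S : Finset ℕ) : ℕ :=
  Nat.find (⟨fmx S + 1, Or.inr (by omega)⟩ : ∃ i, fmx S - i ∉ S ∨ fmx S < i)
noncomputable def DPf (k m : ℕ) : Finset (Finset ℕ) :=
  ((Finset.range (k+1)).powerset).filter
    (fun S => (∀ x ∈ S, 0 < x) ∧ S.sum id = k ∧ S.card = m)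
def Acond (S : Finset ℕ) : Prop := ∀ i < fmn S, fmx S - i ∈ S
noncomputable def fA (S : Finset ℕ) : Finset ℕ :=
  insert (fmx S + 1) ((S.erase (fmn S)).erase (fmx S + 1 - fmn S))
noncomputable def fB (S : Finset ℕ) : Finset ℕ :=
  insert (frr S) (insert (fmx S - frr S) (S.erase (fmx S)))


lemma fmn_spec {S : Finset ℕ} (hne : S.Nonempty) : fmn S ∈ S ∧ ∀ x ∈ S, fmn S ≤ x := by
  unfold fmn; rw [dif_pos hne]; exact ⟨S.min'_mem hne, fun x hx => S.min'_le x hx⟩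

lemma fmx_spec {S : Finset ℕ} (hne : S.Nonempty) : fmx S ∈ S ∧ ∀ x ∈ S, x ≤ fmx S := by
  unfold fmx; rw [dif_pos hne]; exact ⟨S.max'_mem hne, fun x hx => S.le_max' x hx⟩

lemma fmn_eq {S : Finset ℕ} {a : ℕ} (hmem : a ∈ S) (hlb : ∀ x ∈ S, a ≤ x) : fmn S = a := by
  have h := fmn_spec ⟨a, hmem⟩
  exact le_antisymm (h.2 a hmem) (hlb _ h.1)

lemma fmx_eq {S : Finset ℕ} {a : ℕ} (hmem : a ∈ S) (hub : ∀ x ∈ S, x ≤ a) : fmx S = a := by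
  have h := fmx_spec ⟨a, hmem⟩
  exact le_antisymm (hub _ h.1) (h.2 a hmem)

lemma frr_eq {S : Finset ℕ} {r : ℕ} (hr : fmx S - r ∉ S ∨ fmx S < r)
    (hmin : ∀ i < r, fmx S - i ∈ S ∧ i ≤ fmx S) : frr S = r := by
  unfold frr; rw [Nat.find_eq_iff]
  exact ⟨hr, fun i hi => by push_neg; exact ⟨(hmin i hi).1, (hmin i hi).2⟩⟩

lemma frr_facts {S : Finset ℕ} (hpos : ∀ x ∈ S, 0 < x) (hne : S.Nonempty) :
    1 ≤ frr S ∧ frr S ≤ fmx S ∧ (∀ i < frr S, fmx S - i ∈ S) ∧ fmx S - frr S ∉ S := by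
  have hMmem := (fmx_spec hne).1
  have hle : frr S ≤ fmx S := Nat.find_le (Or.inl (by simpa using fun hc => absurd (hpos 0 hc) (by omega)))
  have hspec : fmx S - frr S ∉ S ∨ fmx S < frr S :=
    Nat.find_spec (⟨fmx S + 1, Or.inr (by omega)⟩ : ∃ i, fmx S - i ∉ S ∨ fmx S < i)
  have hpos1 : 1 ≤ frr S := by
    rcases Nat.eq_zero_or_pos (frr S) with h0 | h1
    · exfalso
      rw [h0] at hspec
      rcases hspec with h | h
      · simp at h; exact h hMmem
      · omega
    · exact h1
  have hstair : ∀ i < frr S, fmx S - i ∈ S := by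
    intro i hi
    have := Nat.find_min (⟨fmx S + 1, Or.inr (by omega)⟩ : ∃ i, fmx S - i ∉ S ∨ fmx S < i) hi
    push_neg at this
    exact this.1
  have hgap : fmx S - frr S ∉ S := by
    rcases hspec with h | h
    · exact h
    · omega
  exact ⟨hpos1, hle, hstair, hgap⟩


lemma sum_Icc_gauss (a n : ℕ) : 2 * (∑ x ∈ Icc a (a + n), x) = (n + 1) * (2 * a + n) := by
  induction n with
  | zero => simp
  | succ n ih =>
    rw [show a + (n+1) = (a + n) + 1 by omega, Finset.sum_Icc_succ_top (by omega),
      Nat.mul_add, ih]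
    ring


lemma mem_DPf (k m : ℕ) (p : Nat.Partition k) (hnd : p.parts.Nodup)
    (hcard : Multiset.card p.parts = m) : p.parts.toFinset ∈ DPf k m := by
  have hval : p.parts.toFinset.val = p.parts := by
    rw [Multiset.toFinset_val, hnd.dedup]
  simp only [DPf, mem_filter, mem_powerset]
  have hsum : p.parts.toFinset.sum id = k := by
    rw [Finset.sum, hval, Multiset.map_id]; exact p.parts_sum
  refine ⟨fun x hx => ?_, fun x hx => p.parts_pos (by simpa using hx), hsum, ?_⟩
  · rw [Finset.mem_range]
    have : x ≤ p.parts.toFinset.sum id := by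
      exact Finset.single_le_sum (fun a _ => Nat.zero_le a) hx
    omega
  · rw [Finset.card_def, hval, hcard]

lemma pd_eq_card (k m : ℕ) : pd k m = (DPf k m).card := by
  rw [← Nat.card_eq_finsetCard]
  apply Nat.card_eq_of_bijective
    (fun p : {p : Nat.Partition k // p.parts.Nodup ∧ Multiset.card p.parts = m} =>
      (⟨p.1.parts.toFinset, mem_DPf k m p.1 p.2.1 p.2.2⟩ : {S // S ∈ DPf k m}))
  constructor
  · rintro ⟨p, hnd, hcard⟩ ⟨q, hnd', hcard'⟩ hpq
    apply Subtype.ext; apply Nat.Partition.ext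
    have h2 : p.parts.toFinset = q.parts.toFinset := by
      simpa using congrArg Subtype.val hpq
    have := congrArg Finset.val h2
    rwa [Multiset.toFinset_val, Multiset.toFinset_val, hnd.dedup, hnd'.dedup] at this
  · rintro ⟨S, hS⟩
    simp only [DPf, mem_filter, mem_powerset] at hS
    obtain ⟨hsub, hpos, hsum, hcard⟩ := hS
    refine ⟨⟨⟨S.val, fun {i} hi => hpos i hi, ?_⟩, S.nodup, ?_⟩, ?_⟩
    · rw [Finset.sum, Multiset.map_id] at hsum; exact hsum
    · rw [← Finset.card_def]; exact hcard
    · apply Subtype.ext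
      simp only
      ext x
      simp [Multiset.mem_toFinset, ← Finset.mem_def]


lemma sum_lb (S : Finset ℕ) (h0 : ∀ x ∈ S, 0 < x) :
    S.card * (S.card + 1) ≤ 2 * S.sum id := by
  induction S using Finset.strongInduction with
  | _ S ih =>
    rcases S.eq_empty_or_nonempty with rfl | hne
    · simp
    · set M := S.max' hne with hM
      have hMmem : M ∈ S := S.max'_mem hne
      have hsub : S ⊆ Finset.Icc 1 M := fun x hx =>
        Finset.mem_Icc.mpr ⟨h0 x hx, S.le_max' x hx⟩
      have hcard : S.card ≤ M := by
        calc S.card ≤ (Finset.Icc 1 M).card := Finset.card_le_card hsub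
        _ = M := by rw [Nat.card_Icc]; omega
      have hih := ih (S.erase M) (Finset.erase_ssubset hMmem)
        (fun x hx => h0 x (Finset.mem_of_mem_erase hx))
      have hce : (S.erase M).card = S.card - 1 := Finset.card_erase_of_mem hMmem
      have hse : (S.erase M).sum id + M = S.sum id := Finset.sum_erase_add S id hMmem
      have hcpos : 1 ≤ S.card := Finset.card_pos.mpr hne
      rw [hce] at hih
      obtain ⟨c, hc⟩ : ∃ c, S.card = c + 1 := ⟨S.card - 1, by omega⟩
      rw [hc] at hih ⊢
      simp only [Nat.add_sub_cancel] at hih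
      nlinarith [hih, hcard, hse]


lemma mem_DPf_iff {k m : ℕ} {S : Finset ℕ} :
    S ∈ DPf k m ↔ (∀ x ∈ S, x ≤ k) ∧ (∀ x ∈ S, 0 < x) ∧ S.sum id = k ∧ S.card = m := by
  simp only [DPf, mem_filter, mem_powerset, Finset.subset_iff, mem_range]
  constructor
  · rintro ⟨h1, h2⟩; exact ⟨fun x hx => by have := h1 hx; omega, h2⟩
  · rintro ⟨h1, h2⟩; exact ⟨fun {x} hx => by have := h1 x hx; omega, h2⟩

lemma A_props (k m : ℕ) (hk : 0 < k)
    (h : ∀ m : ℕ, 2 * k ≠ m * (3 * m - 1) ∧ 2 * k ≠ m * (3 * m + 1))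
    (S : Finset ℕ) (hS : S ∈ DPf k m) (hA : Acond S) :
    fA S ∈ DPf k (m-1) ∧ ¬ Acond (fA S) ∧ fB (fA S) = S := by
  rw [mem_DPf_iff] at hS
  obtain ⟨hub, hpos, hsum, hcard⟩ := hS
  have hne : S.Nonempty := by
    rcases S.eq_empty_or_nonempty with rfl | hne
    · simp at hsum; omega
    · exact hne
  obtain ⟨hsmem, hsle⟩ := fmn_spec hne
  obtain ⟨hMmem, hleM⟩ := fmx_spec hne
  have hA : ∀ i < fmn S, fmx S - i ∈ S := hA
  set s := fmn S with hs
  set M := fmx S with hM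
  have hs1 : 1 ≤ s := hpos _ hsmem
  have hsM : s ≤ M := hsle _ hMmem
  -- Step 1: 2*s ≤ M (else pentagonal)
  have h2s : 2 * s ≤ M := by
    by_contra hlt
    push_neg at hlt
    have hin : M + 1 - s ∈ S := by
      have := hA (s - 1) (by omega)
      rwa [show M - (s-1) = M + 1 - s by omega] at this
    have hMeq : M = 2*s - 1 := by have := hsle _ hin; omega
    have hSeq : S = Finset.Icc s M := by
      apply Finset.Subset.antisymm
      · intro x hx; exact mem_Icc.mpr ⟨hsle x hx, hleM x hx⟩
      · intro y hy
        rw [mem_Icc] at hy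
        have := hA (M - y) (by omega)
        rwa [show M - (M - y) = y by omega] at this
    exfalso
    apply (h s).1
    have : 2 * (S.sum id) = 2 * (∑ x ∈ Icc s (s + (s-1)), x) := by
      rw [hSeq, show M = s + (s-1) by omega]; simp [id]
    rw [hsum, sum_Icc_gauss] at this
    rw [this]
    have h1 : s - 1 + 1 = s := by omega
    have h2 : 3 * s - 1 = 2 * s + (s - 1) := by omega
    rw [h1, h2]
  have hin : M + 1 - s ∈ S := by
    have := hA (s - 1) (by omega)
    rwa [show M - (s-1) = M + 1 - s by omega] at this
  have hslt : s < M + 1 - s := by omega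
  have hsltM : s < M := by omega
  -- M < k
  have hMk : M < k := by
    have hsub2 : ({s, M} : Finset ℕ) ⊆ S := by
      intro x hx; rcases Finset.mem_insert.mp hx with rfl | hx
      · exact hsmem
      · rw [Finset.mem_singleton] at hx; subst hx; exact hMmem
    have := Finset.sum_le_sum_of_subset (f := id) hsub2
    rw [Finset.sum_pair (by omega : s ≠ M)] at this
    simp only [id] at this
    have hsum2 : (∑ x ∈ S, x) = k := by simpa using hsum
    omega
  -- basic structure
  set T := (S.erase s).erase (M + 1 - s) with hT
  have hTsub : T ⊆ S := fun x hx => Finset.mem_of_mem_erase (Finset.mem_of_mem_erase hx)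
  have hmemT : ∀ x, x ∈ T ↔ x ∈ S ∧ x ≠ s ∧ x ≠ M + 1 - s := by
    intro x; rw [hT, Finset.mem_erase, Finset.mem_erase]; tauto
  have hM1T : M + 1 ∉ T := fun hc => by have := hleM _ (hTsub hc); omega
  have hfA : fA S = insert (M+1) T := rfl
  have hmemfA : ∀ x, x ∈ fA S ↔ x = M + 1 ∨ (x ∈ S ∧ x ≠ s ∧ x ≠ M + 1 - s) := by
    intro x; rw [hfA, Finset.mem_insert, hmemT]
  have hin' : M + 1 - s ∈ S.erase s := Finset.mem_erase.mpr ⟨by omega, hin⟩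
  -- card
  have hm2 : 2 ≤ m := by
    have : ({s, M + 1 - s} : Finset ℕ) ⊆ S := by
      intro x hx; rcases Finset.mem_insert.mp hx with rfl | hx
      · exact hsmem
      · rw [Finset.mem_singleton] at hx; subst hx; exact hin
    have := Finset.card_le_card this
    rw [Finset.card_pair (by omega : s ≠ M + 1 - s)] at this
    omega
  have hcardT : T.card = m - 2 := by
    rw [hT, Finset.card_erase_of_mem hin', Finset.card_erase_of_mem hsmem, hcard]
    omega
  have hcardfA : (fA S).card = m - 1 := by
    rw [hfA, Finset.card_insert_of_notMem hM1T, hcardT]; omega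
  -- sum
  have hsumfA : (fA S).sum id = k := by
    rw [hfA, Finset.sum_insert hM1T, hT]
    have e1 := Finset.sum_erase_add (S.erase s) id hin'
    have e2 := Finset.sum_erase_add S id hsmem
    rw [hsum] at e2
    simp only [id] at e1 e2 ⊢
    omega
  -- membership in DPf
  have hfAmem : fA S ∈ DPf k (m-1) := by
    rw [mem_DPf_iff]
    refine ⟨fun x hx => ?_, fun x hx => ?_, hsumfA, hcardfA⟩
    · rcases (hmemfA x).mp hx with rfl | ⟨hxS, -⟩
      · omega
      · exact hub x hxS
    · rcases (hmemfA x).mp hx with rfl | ⟨hxS, -⟩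
      · omega
      · exact hpos x hxS
  -- min and max of fA S
  have hfAne : (fA S).Nonempty := ⟨M + 1, (hmemfA _).mpr (Or.inl rfl)⟩
  have hmxfA : fmx (fA S) = M + 1 := by
    apply fmx_eq ((hmemfA _).mpr (Or.inl rfl))
    intro x hx
    rcases (hmemfA x).mp hx with rfl | ⟨hxS, -⟩
    · omega
    · have := hleM x hxS; omega
  have hmn_gt : s < fmn (fA S) := by
    have hmm := (fmn_spec hfAne).1
    rcases (hmemfA _).mp hmm with he | ⟨hxS, hne1, -⟩
    · omega
    · have := hsle _ hxS; omega
  have hnotin : M + 1 - s ∉ fA S := by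
    intro hc
    rcases (hmemfA _).mp hc with he | ⟨-, -, hne2⟩
    · omega
    · exact hne2 rfl
  -- ¬ Acond (fA S)
  have hnA : ¬ Acond (fA S) := by
    intro hA'
    have := hA' s (by omega)
    rw [hmxfA, show M + 1 - s = M + 1 - s from rfl] at this
    exact hnotin this
  -- frr (fA S) = s
  have hrr : frr (fA S) = s := by
    apply frr_eq
    · rw [hmxfA]; exact Or.inl hnotin
    · intro i hi
      rw [hmxfA]
      refine ⟨?_, by omega⟩
      rcases Nat.eq_zero_or_pos i with rfl | hi1
      · simpa using (hmemfA _).mpr (Or.inl rfl)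
      · apply (hmemfA _).mpr
        right
        have hstep : M + 1 - i = M - (i - 1) := by omega
        have hmem2 : M - (i-1) ∈ S := hA (i-1) (by omega)
        rw [hstep]
        exact ⟨hmem2, by omega, by omega⟩
  -- fB (fA S) = S
  have hback : fB (fA S) = S := by
    rw [show fB (fA S) = insert (frr (fA S)) (insert (fmx (fA S) - frr (fA S)) ((fA S).erase (fmx (fA S)))) from rfl]
    rw [hrr, hmxfA, hfA, Finset.erase_insert hM1T,
      show M + 1 - s = M + 1 - s from rfl, hT]
    rw [Finset.insert_erase hin', Finset.insert_erase hsmem]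
  exact ⟨hfAmem, hnA, hback⟩


lemma frr_le {S : Finset ℕ} {i : ℕ} (hi : fmx S - i ∉ S ∨ fmx S < i) : frr S ≤ i :=
  Nat.find_le hi

lemma B_props (k m : ℕ) (hk : 0 < k)
    (h : ∀ m : ℕ, 2 * k ≠ m * (3 * m - 1) ∧ 2 * k ≠ m * (3 * m + 1))
    (S : Finset ℕ) (hS : S ∈ DPf k m) (hB : ¬ Acond S) :
    fB S ∈ DPf k (m+1) ∧ Acond (fB S) ∧ fA (fB S) = S := by
  rw [mem_DPf_iff] at hS
  obtain ⟨hub, hpos, hsum, hcard⟩ := hS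
  have hne : S.Nonempty := by
    rcases S.eq_empty_or_nonempty with rfl | hne
    · simp at hsum; omega
    · exact hne
  obtain ⟨hsmem, hsle⟩ := fmn_spec hne
  obtain ⟨hMmem, hleM⟩ := fmx_spec hne
  obtain ⟨hr1, hrM, hstair, hgap⟩ := frr_facts hpos hne
  unfold Acond at hB
  push_neg at hB
  set s := fmn S with hs
  set M := fmx S with hM
  set r := frr S with hr
  have hs1 : 1 ≤ s := hpos _ hsmem
  have hsM : s ≤ M := hsle _ hMmem
  have hrs : r < s := by
    obtain ⟨i, hi, hni⟩ := hB
    have : r ≤ i := frr_le (Or.inl hni)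
    omega
  have hs_le : s ≤ M - r + 1 := by
    have h1 := hstair (r - 1) (by omega)
    have h2 := hsle _ h1
    omega
  have h2r : 2 * r < M := by
    rcases Nat.lt_or_ge (2*r) M with h' | h'
    · exact h'
    · exfalso
      have hMeq : M = 2 * r := by omega
      have hseq : s = r + 1 := by omega
      have hSeq : S = Finset.Icc (r+1) (2*r) := by
        apply Finset.Subset.antisymm
        · intro x hx
          exact mem_Icc.mpr ⟨by have := hsle x hx; omega, by have := hleM x hx; omega⟩
        · intro y hy
          rw [mem_Icc] at hy
          have := hstair (M - y) (by omega)
          rwa [show M - (M - y) = y by omega] at this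
      apply (h r).2
      have heq : 2 * (S.sum id) = 2 * (∑ x ∈ Icc (r+1) ((r+1) + (r-1)), x) := by
        rw [hSeq, show 2*r = (r+1) + (r-1) by omega]; simp [id]
      rw [hsum, sum_Icc_gauss] at heq
      rw [heq, show r - 1 + 1 = r by omega, show 3 * r + 1 = 2*(r+1) + (r-1) by omega]
  have hMk : M ≤ k := hub _ hMmem
  set U := S.erase M with hU
  have hUsub : U ⊆ S := Finset.erase_subset _ _
  have hmemU : ∀ x, x ∈ U ↔ x ∈ S ∧ x ≠ M := by
    intro x; rw [hU, Finset.mem_erase]; tauto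
  have hMrU : M - r ∉ insert (M - r) U → False := fun hc => absurd (Finset.mem_insert_self _ _) hc
  have hMrnotU : M - r ∉ U := fun hc => hgap (hUsub hc)
  have hrnot : r ∉ insert (M - r) U := by
    rw [Finset.mem_insert]
    rintro (he | hc)
    · omega
    · have := hsle _ (hUsub hc); omega
  have hfB : fB S = insert r (insert (M - r) U) := rfl
  have hmemfB : ∀ x, x ∈ fB S ↔ x = r ∨ x = M - r ∨ (x ∈ S ∧ x ≠ M) := by
    intro x
    rw [hfB, Finset.mem_insert, Finset.mem_insert, hmemU]
  -- card
  have hcardfB : (fB S).card = m + 1 := by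
    rw [hfB, Finset.card_insert_of_notMem hrnot, Finset.card_insert_of_notMem hMrnotU,
      hU, Finset.card_erase_of_mem hMmem, hcard]
    have : 1 ≤ m := by rw [← hcard]; exact Finset.card_pos.mpr hne
    omega
  -- sum
  have hsumfB : (fB S).sum id = k := by
    rw [hfB, Finset.sum_insert hrnot, Finset.sum_insert hMrnotU, hU]
    have e1 := Finset.sum_erase_add S id hMmem
    rw [hsum] at e1
    simp only [id] at e1 ⊢
    omega
  have hfBmem : fB S ∈ DPf k (m+1) := by
    rw [mem_DPf_iff]
    refine ⟨fun x hx => ?_, fun x hx => ?_, hsumfB, hcardfB⟩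
    · rcases (hmemfB x).mp hx with rfl | rfl | ⟨hxS, -⟩
      · omega
      · omega
      · exact hub x hxS
    · rcases (hmemfB x).mp hx with rfl | rfl | ⟨hxS, -⟩
      · omega
      · omega
      · exact hpos x hxS
  -- min and max
  have hmnfB : fmn (fB S) = r := by
    apply fmn_eq ((hmemfB r).mpr (Or.inl rfl))
    intro x hx
    rcases (hmemfB x).mp hx with rfl | rfl | ⟨hxS, -⟩
    · omega
    · omega
    · have := hsle x hxS; omega
  have hmxfB : fmx (fB S) = M - 1 := by
    apply fmx_eq
    · rcases Nat.eq_or_lt_of_le hr1 with he | h2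
      · exact (hmemfB _).mpr (Or.inr (Or.inl (by omega)))
      · have hst := hstair 1 (by omega)
        exact (hmemfB _).mpr (Or.inr (Or.inr ⟨hst, by omega⟩))
    · intro x hx
      rcases (hmemfB x).mp hx with rfl | rfl | ⟨hxS, hxne⟩
      · omega
      · omega
      · have := hleM x hxS; omega
  -- Acond (fB S)
  have hAfB : Acond (fB S) := by
    intro i hi
    rw [hmnfB] at hi
    rw [hmxfB]
    rcases Nat.lt_or_ge i (r - 1) with hlt | hge
    · have hst := hstair (i + 1) (by omega)
      apply (hmemfB _).mpr
      exact Or.inr (Or.inr ⟨by rwa [show M - 1 - i = M - (i+1) by omega], by omega⟩)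
    · have : i = r - 1 := by omega
      subst this
      apply (hmemfB _).mpr
      exact Or.inr (Or.inl (by omega))
  -- fA (fB S) = S
  have hback : fA (fB S) = S := by
    rw [show fA (fB S) = insert (fmx (fB S) + 1)
      (((fB S).erase (fmn (fB S))).erase (fmx (fB S) + 1 - fmn (fB S))) from rfl]
    rw [hmnfB, hmxfB, show M - 1 + 1 = M by omega, show M - r = M - r from rfl]
    rw [hfB, Finset.erase_insert hrnot, Finset.erase_insert hMrnotU, hU,
      Finset.insert_erase hMmem]
  exact ⟨hfBmem, hAfB, hback⟩


noncomputable def qq (k m : ℕ) : ℕ := ((DPf k m).filter (fun S => ¬ Acond S)).card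

lemma bij_card (k m : ℕ) (hk : 0 < k)
    (h : ∀ m : ℕ, 2 * k ≠ m * (3 * m - 1) ∧ 2 * k ≠ m * (3 * m + 1)) :
    ((DPf k (m+1)).filter (fun S => Acond S)).card = qq k m := by
  apply Finset.card_bij (fun S _ => fA S)
  · intro S hS
    rw [Finset.mem_filter] at hS
    obtain ⟨hmem, hnA, -⟩ := A_props k (m+1) hk h S hS.1 hS.2
    rw [Finset.mem_filter]
    exact ⟨by simpa using hmem, hnA⟩
  · intro S1 h1 S2 h2 heq
    rw [Finset.mem_filter] at h1 h2
    have e1 := (A_props k (m+1) hk h S1 h1.1 h1.2).2.2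
    have e2 := (A_props k (m+1) hk h S2 h2.1 h2.2).2.2
    rw [← e1, ← e2, heq]
  · intro T hT
    rw [Finset.mem_filter] at hT
    obtain ⟨hmem, hA, heq⟩ := B_props k m hk h T hT.1 hT.2
    exact ⟨fB T, Finset.mem_filter.mpr ⟨hmem, hA⟩, heq⟩

lemma pd_rec (k m : ℕ) (hk : 0 < k)
    (h : ∀ m : ℕ, 2 * k ≠ m * (3 * m - 1) ∧ 2 * k ≠ m * (3 * m + 1)) :
    pd k (m+1) = qq k (m+1) + qq k m := by
  have hsplit := Finset.card_filter_add_card_filter_not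
    (s := DPf k (m+1)) (p := fun S => Acond S)
  rw [bij_card k m hk h] at hsplit
  have h2 : ((DPf k (m+1)).filter (fun S => ¬ Acond S)).card = qq k (m+1) := rfl
  rw [pd_eq_card, ← hsplit, h2]
  omega

lemma pd_zero (k : ℕ) (hk : 0 < k) : pd k 0 = 0 := by
  rw [pd_eq_card]
  convert Finset.card_empty
  rw [Finset.eq_empty_iff_forall_notMem]
  intro S hS
  rw [mem_DPf_iff] at hS
  obtain ⟨-, -, hsum, hcard⟩ := hS
  rw [Finset.card_eq_zero] at hcard
  subst hcard
  simp at hsum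
  omega

lemma qq_zero (k : ℕ) (hk : 0 < k) : qq k 0 = 0 := by
  rw [qq, Finset.card_eq_zero, Finset.eq_empty_iff_forall_notMem]
  intro S hS
  rw [Finset.mem_filter, mem_DPf_iff] at hS
  obtain ⟨⟨-, -, hsum, hcard⟩, -⟩ := hS
  rw [Finset.card_eq_zero] at hcard
  subst hcard
  simp at hsum
  omega

lemma qq_top (k : ℕ) (hk2 : 2 ≤ k) : qq k k = 0 := by
  rw [qq, Finset.card_eq_zero, Finset.eq_empty_iff_forall_notMem]
  intro S hS
  rw [Finset.mem_filter, mem_DPf_iff] at hS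
  obtain ⟨⟨-, hpos, hsum, hcard⟩, -⟩ := hS
  have := sum_lb S hpos
  rw [hcard, hsum] at this
  nlinarith

/-- If `k > 0` is not a generalized pentagonal number, then `(1+t)` divides `Pd_k(t)`
in `ℤ[t]` and the quotient has non-negative coefficients. -/
theorem stmt10 (k : ℕ) (hk : 0 < k)
    (h : ∀ m : ℕ, 2 * k ≠ m * (3 * m - 1) ∧ 2 * k ≠ m * (3 * m + 1)) :
    ∃ q : Polynomial ℤ, Pd k = (1 + Polynomial.X) * q ∧ ∀ i, 0 ≤ q.coeff i := by
  have hk2 : 2 ≤ k := by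
    have := (h 1).1
    omega
  refine ⟨∑ m ∈ Finset.range (k + 1), Polynomial.C (qq k m : ℤ) * Polynomial.X ^ m, ?_, ?_⟩
  · have hq : ∀ i, (∑ m ∈ Finset.range (k + 1),
        Polynomial.C ((qq k m : ℤ)) * Polynomial.X ^ m).coeff i
        = if i ≤ k then (qq k i : ℤ) else 0 := by
      intro i
      rw [Polynomial.finset_sum_coeff]
      simp only [Polynomial.coeff_C_mul, Polynomial.coeff_X_pow, mul_ite, mul_one, mul_zero]
      rw [Finset.sum_ite_eq (Finset.range (k+1)) i (fun m => (qq k m : ℤ))]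
      simp [Nat.lt_succ_iff]
    have hp : ∀ i, (Pd k).coeff i = if i ≤ k then (pd k i : ℤ) else 0 := by
      intro i
      rw [Pd, Polynomial.finset_sum_coeff]
      simp only [Polynomial.coeff_C_mul, Polynomial.coeff_X_pow, mul_ite, mul_one, mul_zero]
      rw [Finset.sum_ite_eq (Finset.range (k+1)) i (fun m => (pd k m : ℤ))]
      simp [Nat.lt_succ_iff]
    apply Polynomial.ext
    intro n
    rw [add_mul, one_mul, Polynomial.coeff_add, hp, hq]
    match n with
    | 0 =>
      rw [Polynomial.mul_coeff_zero]
      simp [pd_zero k hk, qq_zero k hk]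
    | (i+1) =>
      rw [Polynomial.coeff_X_mul, hq]
      rcases Nat.lt_or_ge (i+1) (k+1) with hlt | hge
      · rw [if_pos (by omega), if_pos (by omega), if_pos (by omega)]
        rw [pd_rec k i hk h]
        push_cast
        ring
      · rcases Nat.eq_or_lt_of_le hge with he | hgt
        · rw [if_neg (by omega), if_neg (by omega), if_pos (by omega)]
          have : i = k := by omega
          rw [this, qq_top k hk2]
          simp
        · rw [if_neg (by omega), if_neg (by omega), if_neg (by omega)]
          simp
  · intro i
    rw [Polynomial.finset_sum_coeff]
    apply Finset.sum_nonneg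
    intro m hm
    simp only [Polynomial.coeff_C_mul, Polynomial.coeff_X_pow, mul_ite, mul_one, mul_zero]
    split
    · positivity
    · exact le_refl 0
end

section
/- If k is not a generalized pentagonal number, then there exists an involution φ on the set Q(k) of partitions of k into distinct parts such that the number of parts of φ(λ) differs from the number of parts of λ by exactly 1 for every λ ∈ Q(k). -/
namespace Stmt11

def inc : ℕ → List ℕ → List ℕ
  | 0, L => L
  | _+1, [] => []
  | n+1, a :: l => (a+1) :: inc n l

def dec : ℕ → List ℕ → List ℕ
  | 0, L => L
  | _+1, [] => []
  | n+1, a :: l => (a-1) :: dec n l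

def stair : ℕ → ℕ → List ℕ
  | _, 0 => []
  | a, j+1 => a :: stair (a-1) j

def run : List ℕ → ℕ
  | [] => 0
  | [_] => 1
  | a :: b :: l => if b + 1 = a then run (b :: l) + 1 else 1

def F (L : List ℕ) : List ℕ :=
  if L.getLastD 0 ≤ run L then inc (L.getLastD 0) L.dropLast
  else dec (run L) L ++ [run L]

@[simp] lemma length_stair (a j : ℕ) : (stair a j).length = j := by
  induction j generalizing a with
  | zero => rfl
  | succ j ih => simp [stair, ih]

lemma stair_append (i j a : ℕ) : stair a (i + j) = stair a i ++ stair (a - i) j := by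
  induction i generalizing a with
  | zero => simp [stair]
  | succ i ih =>
      have : i + 1 + j = (i + j) + 1 := by omega
      rw [this]
      show a :: stair (a-1) (i + j) = (a :: stair (a-1) i) ++ stair (a - (i+1)) j
      rw [ih, show a - 1 - i = a - (i+1) by omega, List.cons_append]

lemma getLast?_stair (a j : ℕ) : (stair a (j+1)).getLast? = some (a - j) := by
  induction j generalizing a with
  | zero => rfl
  | succ j ih =>
      show (a :: stair (a-1) (j+1)).getLast? = some (a - (j+1))
      rw [show stair (a-1) (j+1) = (a-1) :: stair (a-1-1) j from rfl]
      rw [List.getLast?_cons_cons]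
      rw [show (a-1) :: stair (a-1-1) j = stair (a-1) (j+1) from rfl, ih]
      congr 1
      omega

lemma mem_stair {x a j : ℕ} (hx : x ∈ stair a j) : a + 1 - j ≤ x ∧ x ≤ a := by
  induction j generalizing a with
  | zero => simp [stair] at hx
  | succ j ih =>
      simp only [stair, List.mem_cons] at hx
      rcases hx with rfl | hx
      · omega
      · have := ih hx; omega

lemma inc_stair (j : ℕ) : ∀ a T, j ≤ a + 1 → inc j (stair a j ++ T) = stair (a+1) j ++ T := by
  induction j with
  | zero => intro a T _; rfl
  | succ j ih =>
      intro a T hja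
      show (a+1) :: inc j (stair (a-1) j ++ T) = (a+1) :: (stair a j ++ T)
      rcases Nat.eq_zero_or_pos j with rfl | hj
      · rfl
      · rw [ih (a-1) T (by omega), show a - 1 + 1 = a by omega]

lemma dec_stair (j : ℕ) : ∀ a T, dec j (stair a j ++ T) = stair (a-1) j ++ T := by
  induction j with
  | zero => intro a T; rfl
  | succ j ih =>
      intro a T
      show (a-1) :: dec j (stair (a-1) j ++ T) = (a-1) :: (stair (a-1-1) j ++ T)
      rw [ih]

lemma sum_stair_succ (j : ℕ) : ∀ a, j ≤ a + 1 → (stair (a+1) j).sum = (stair a j).sum + j := by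
  induction j with
  | zero => intro a _; rfl
  | succ j ih =>
      intro a hja
      show (a+1) + (stair a j).sum = (a + (stair (a-1) j).sum) + (j+1)
      rcases Nat.eq_zero_or_pos j with rfl | hj
      · simp [stair]
      · have h1 := ih (a-1) (by omega)
        rw [show a - 1 + 1 = a by omega] at h1
        omega

lemma two_sum_stair (j : ℕ) : ∀ a, j ≤ a + 1 → 2 * (stair a j).sum + j * j = j * (2 * a + 1) := by
  induction j with
  | zero => intro a _; simp [stair]
  | succ j ih =>
      intro a hja
      show 2 * (a + (stair (a-1) j).sum) + (j+1) * (j+1) = (j+1) * (2 * a + 1)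
      rcases Nat.eq_zero_or_pos j with rfl | hj
      · simp [stair]
      · obtain ⟨b, rfl⟩ : ∃ b, a = b + 1 := ⟨a - 1, by omega⟩
        have h1 := ih b (by omega)
        simp only [Nat.add_sub_cancel] at h1 ⊢
        nlinarith [h1]

lemma run_pos (a : ℕ) (l : List ℕ) : 0 < run (a :: l) := by
  cases l with
  | nil => simp [run]
  | cons b l => simp only [run]; split <;> omega

lemma run_eq (j : ℕ) : ∀ a T, 0 < j → j ≤ a + 1 →
    (∀ b, T.head? = some b → b + 1 ≠ a + 1 - j) → run (stair a j ++ T) = j := by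
  induction j with
  | zero => intro a T h; omega
  | succ j ih =>
      intro a T _ hja hT
      rcases Nat.eq_zero_or_pos j with rfl | hj
      · show run (a :: T) = 1
        cases T with
        | nil => rfl
        | cons b l =>
            have hb := hT b rfl
            simp only [run]
            rw [if_neg (by omega)]
      · obtain ⟨j', rfl⟩ : ∃ j', j = j' + 1 := ⟨j - 1, by omega⟩
        show run (a :: ((a-1) :: (stair (a-1-1) j' ++ T))) = j' + 1 + 1
        have h1 : run ((a-1) :: (stair (a-1-1) j' ++ T)) = j' + 1 := by
          have := ih (a-1) T (by omega) (by omega) ?_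
          · exact this
          · intro b hb
            have := hT b hb
            omega
        simp only [run]
        rw [if_pos (by omega), h1]

lemma run_ge (j : ℕ) : ∀ a T, j ≤ a + 1 → j ≤ run (stair a j ++ T) := by
  induction j with
  | zero => intro a T _; omega
  | succ j ih =>
      intro a T hja
      rcases Nat.eq_zero_or_pos j with rfl | hj
      · show 1 ≤ run (a :: T)
        exact run_pos a T
      · obtain ⟨j', rfl⟩ : ∃ j', j = j' + 1 := ⟨j - 1, by omega⟩
        have h1 := ih (a-1) T (by omega)
        show j' + 1 + 1 ≤ run (a :: ((a-1) :: (stair (a-1-1) j' ++ T)))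
        simp only [run]
        rw [if_pos (by omega)]
        have : run ((a-1) :: (stair (a-1-1) j' ++ T)) = run (stair (a-1) (j'+1) ++ T) := rfl
        omega

lemma run_decomp (L : List ℕ) (h : L ≠ []) :
    ∃ a j T, 0 < j ∧ L = stair a j ++ T ∧ run L = j ∧
      ∀ b, T.head? = some b → b + 1 ≠ a + 1 - j := by
  induction L with
  | nil => exact absurd rfl h
  | cons x l ih =>
      cases l with
      | nil =>
          exact ⟨x, 1, [], Nat.one_pos, rfl, rfl, by simp⟩
      | cons y l' =>
          by_cases hxy : y + 1 = x
          · obtain ⟨a, j, T, hj, hdec, hrun, hstop⟩ := ih (by simp)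
            have ha : y = a := by
              obtain ⟨j', rfl⟩ : ∃ j', j = j' + 1 := ⟨j - 1, by omega⟩
              have h2 : (stair a (j'+1) ++ T).head? = some a := rfl
              rw [← hdec] at h2
              simpa using h2
            subst ha
            refine ⟨x, j + 1, T, by omega, ?_, ?_, ?_⟩
            · show x :: (y :: l') = x :: (stair (x-1) j ++ T)
              rw [hdec, show x - 1 = y by omega]
            · show run (x :: y :: l') = j + 1
              simp only [run]
              rw [if_pos hxy, hrun]
            · intro b hb
              have := hstop b hb
              omega
          · refine ⟨x, 1, y :: l', Nat.one_pos, rfl, ?_, ?_⟩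
            · simp only [run]
              rw [if_neg hxy]
            · intro b hb
              simp at hb
              omega

lemma chain'_stair_append (j : ℕ) : ∀ a T, j ≤ a → List.Chain' (· > ·) T →
    (∀ b, T.head? = some b → b < a + 1 - j) → List.Chain' (· > ·) (stair a j ++ T) := by
  induction j with
  | zero => intro a T _ hT _; simpa [stair] using hT
  | succ j ih =>
      intro a T hja hT hb
      show List.Chain' (· > ·) (a :: (stair (a-1) j ++ T))
      simp only [List.Chain']
      rw [List.isChain_cons]
      refine ⟨?_, ih (a-1) T (by omega) hT (fun b hb' => by have := hb b hb'; omega)⟩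
      intro y hy
      rcases Nat.eq_zero_or_pos j with rfl | hj
      · simp only [stair, List.nil_append] at hy
        have := hb y hy; omega
      · obtain ⟨j', rfl⟩ : ∃ j', j = j'+1 := ⟨j - 1, by omega⟩
        have h2 : (stair (a-1) (j'+1) ++ T).head? = some (a-1) := rfl
        rw [h2] at hy
        simp at hy
        omega

lemma pos_stair_append {a j : ℕ} (hja : j ≤ a) {T : List ℕ} (hT : ∀ x ∈ T, 0 < x) :
    ∀ x ∈ stair a j ++ T, 0 < x := by
  intro x hx
  rcases List.mem_append.1 hx with hx | hx
  · have := mem_stair hx; omega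
  · exact hT x hx

lemma getLast?_of_ne_nil {T : List ℕ} (h : T ≠ []) : T.getLast? = some (T.getLastD 0) := by
  rw [List.getLastD_eq_getLast?]
  cases h2 : T.getLast? with
  | none => exact absurd (List.getLast?_eq_none_iff.1 h2) h
  | some b => rfl

lemma getLastD_append {X T : List ℕ} (h : T ≠ []) :
    (X ++ T).getLastD 0 = T.getLastD 0 := by
  rw [List.getLastD_eq_getLast?, List.getLastD_eq_getLast?, List.getLast?_append,
    getLast?_of_ne_nil h]
  rfl

lemma head?_dropLast {X : List ℕ} {b : ℕ} (h : X.dropLast.head? = some b) :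
    X.head? = some b := by
  match X with
  | [] => simp at h
  | [x] => simp at h
  | x :: y :: X' => simpa using h

lemma chain_dropLast_getLastD {U : List ℕ} (hc : List.Chain' (· > ·) U)
    (h2 : U.dropLast ≠ []) : U.getLastD 0 < U.dropLast.getLastD 0 := by
  have hU : U ≠ [] := by intro h; rw [h] at h2; simp at h2
  have hsplit := List.dropLast_append_getLast? _ (getLast?_of_ne_nil hU)
  rw [← hsplit] at hc
  simp only [List.Chain'] at hc
  rw [List.isChain_append] at hc
  exact hc.2.2 (U.dropLast.getLastD 0) (getLast?_of_ne_nil h2) (U.getLastD 0) rfl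

lemma getLastD_mem (L : List ℕ) (hL : L ≠ []) : L.getLastD 0 ∈ L := by
  have h1 := getLast?_of_ne_nil hL
  exact List.mem_of_mem_getLast? (l := L) (a := L.getLastD 0) (by rw [h1]; rfl)

theorem F_main (k : ℕ) (h : ∀ m : ℕ, 2 * k ≠ m * (3 * m - 1) ∧ 2 * k ≠ m * (3 * m + 1))
    (L : List ℕ) (hc : List.Chain' (· > ·) L) (hp : ∀ x ∈ L, 0 < x) (hsum : L.sum = k) :
    List.Chain' (· > ·) (F L) ∧ (∀ x ∈ F L, 0 < x) ∧ (F L).sum = k ∧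
      F (F L) = L ∧ ((F L).length = L.length + 1 ∨ L.length = (F L).length + 1) := by
  have hk0 : k ≠ 0 := by have := (h 0).1; omega
  have hL : L ≠ [] := by rintro rfl; simp at hsum; omega
  obtain ⟨a, r, T, hr, hLdec, hrun, hstop⟩ := run_decomp L hL
  have hs1 : 0 < L.getLastD 0 := hp _ (getLastD_mem L hL)
  set s := L.getLastD 0 with hsdef
  by_cases hcase : s ≤ r
  · -- Case 1 : remove the smallest part, increment the top s parts
    have hlen : L.length = r + T.length := by rw [hLdec]; simp
    -- exclude s = L.length (pentagonal case A)
    have hslt : s < L.length := by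
      by_contra hge
      push_neg at hge
      have hTnil : T = [] := by
        apply List.length_eq_zero_iff.1
        omega
      subst hTnil
      obtain ⟨r', rfl⟩ : ∃ r', r = r' + 1 := ⟨r - 1, by omega⟩
      have hsr : s = r' + 1 := by omega
      have hlast : s = a - r' := by
        rw [hsdef, hLdec, List.append_nil, List.getLastD_eq_getLast?, getLast?_stair]
        rfl
      have ha : a = 2 * (r' + 1) - 1 := by omega
      have h2 := two_sum_stair (r'+1) a (by omega)
      rw [hLdec, List.append_nil] at hsum
      rw [hsum] at h2
      have key : 2 * k = (r'+1) * (3*(r'+1) - 1) := by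
        rw [show 3*(r'+1) - 1 = 3*r'+2 by omega]
        rw [ha, show 2 * (2*(r'+1)-1) + 1 = 4*r'+3 by omega] at h2
        nlinarith [h2]
      exact (h (r'+1)).1 key
    -- decompose L at position s
    have hdecs : L = stair a s ++ (stair (a-s) (r-s) ++ T) := by
      rw [hLdec, ← List.append_assoc, ← stair_append s (r-s) a, show s + (r - s) = r by omega]
    set U : List ℕ := stair (a-s) (r-s) ++ T with hUdef
    have hLlen : L.length = s + U.length := by rw [hdecs]; simp
    have hUne : U ≠ [] := by
      intro h0
      rw [h0] at hLlen
      simp at hLlen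
      omega
    obtain ⟨u, U', hUeq⟩ := List.exists_cons_of_ne_nil hUne
    obtain ⟨s₁, hs₁⟩ : ∃ s₁, s = s₁ + 1 := ⟨s - 1, by omega⟩
    have hc' : List.Chain' (· > ·) (stair a s ++ U) := hdecs ▸ hc
    simp only [List.Chain'] at hc'
    rw [List.isChain_append] at hc'
    obtain ⟨hc1, hcU, hbd⟩ := hc'
    have hstairlast : (stair a s).getLast? = some (a - s₁) := by
      rw [hs₁]; exact getLast?_stair a s₁
    have hbdu : a - s₁ > u := hbd _ hstairlast u (by rw [hUeq]; rfl)
    have hupos : 0 < u := by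
      apply hp
      rw [hdecs, hUeq]
      exact List.mem_append_right _ List.mem_cons_self
    have ha : s + 1 ≤ a := by omega
    have hUlast : U.getLastD 0 = s := by
      conv_rhs => rw [hsdef]
      rw [hdecs, getLastD_append hUne]
    have hUsplit : U.dropLast ++ [s] = U := by
      apply List.dropLast_append_getLast?
      rw [getLast?_of_ne_nil hUne, hUlast]
      rfl
    have hFL : F L = stair (a+1) s ++ U.dropLast := by
      simp only [F]
      rw [← hsdef, hrun, if_pos hcase, hdecs, List.dropLast_append_of_ne_nil hUne,
        inc_stair s a _ (by omega)]
    have hheadd : ∀ b, U.dropLast.head? = some b → b = u := by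
      intro b hb
      have := head?_dropLast hb
      rw [hUeq] at this
      simpa using this.symm
    have hchainM : List.Chain' (· > ·) (F L) := by
      rw [hFL]
      apply chain'_stair_append s (a+1) _ (by omega)
        (hcU.sublist (List.dropLast_sublist U))
      intro b hb
      have := hheadd b hb
      omega
    have hmemU : ∀ x ∈ U, x ∈ L := by
      intro x hx
      rw [hdecs]
      exact List.mem_append_right _ hx
    have hposM : ∀ x ∈ F L, 0 < x := by
      rw [hFL]
      apply pos_stair_append (by omega)
      intro x hx
      exact hp x (hmemU x ((List.dropLast_sublist U).subset hx))
    have hsum' : (stair a s).sum + U.sum = k := by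
      rw [hdecs, List.sum_append] at hsum
      exact hsum
    have hUsum : U.sum = U.dropLast.sum + s := by
      conv_lhs => rw [← hUsplit]
      simp
    have hsumM : (F L).sum = k := by
      rw [hFL, List.sum_append, sum_stair_succ s a (by omega)]
      omega
    have hUlen1 : 1 ≤ U.length := List.length_pos_iff.2 hUne
    have hlenM : L.length = (F L).length + 1 := by
      rw [hFL]
      simp [List.length_dropLast]
      omega
    have hrunM : run (F L) = s := by
      rw [hFL]
      apply run_eq s (a+1) _ (by omega) (by omega)
      intro b hb
      have := hheadd b hb
      omega
    have hlastM : s < (F L).getLastD 0 := by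
      rw [hFL]
      by_cases hdl : U.dropLast = []
      · have hUs : U = [s] := by rw [← hUsplit, hdl]; rfl
        have hus : u = s := by
          rw [hUs] at hUeq
          exact (List.cons.injEq _ _ _ _ ▸ hUeq.symm).1
        rw [hdl, List.append_nil, List.getLastD_eq_getLast?, hs₁, getLast?_stair]
        simp only [Option.getD_some]
        omega
      · rw [getLastD_append hdl]
        have := chain_dropLast_getLastD hcU hdl
        omega
    have hFF : F (F L) = L := by
      conv_lhs => rw [F]
      rw [hrunM, if_neg (by omega)]
      rw [hFL, dec_stair s (a+1) _, Nat.add_sub_cancel, List.append_assoc, hUsplit,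
        ← hdecs]
    exact ⟨hchainM, hposM, hsumM, hFF, Or.inr hlenM⟩
  · -- Case 2 : decrement the top r parts, append a new smallest part r
    push_neg at hcase
    obtain ⟨r₁, hr₁⟩ : ∃ r₁, r = r₁ + 1 := ⟨r - 1, by omega⟩
    -- facts about T
    have hTlast : T ≠ [] → T.getLastD 0 = s := by
      intro hTne
      conv_rhs => rw [hsdef]
      rw [hLdec, getLastD_append hTne]
    have hTnil_s : T = [] → s = a - r₁ := by
      intro hTnil
      rw [hsdef, hLdec, hTnil, List.append_nil, List.getLastD_eq_getLast?, hr₁,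
        getLast?_stair]
      rfl
    -- exclude the pentagonal case B
    have hs2 : T = [] → r + 2 ≤ s := by
      intro hTnil
      have hsa := hTnil_s hTnil
      by_contra hlt
      have hsr1 : s = r + 1 := by omega
      have haa : a = 2 * r := by omega
      have h2 := two_sum_stair r a (by omega)
      rw [hLdec, hTnil, List.append_nil] at hsum
      rw [hsum] at h2
      have key : 2 * k = r * (3*r + 1) := by
        have e : 2 * a + 1 = (3*r + 1) + r := by omega
        rw [e, Nat.mul_add] at h2
        linarith [h2]
      exact (h r).2 key
    have hc2 : List.Chain' (· > ·) (stair a r ++ T) := hLdec ▸ hc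
    simp only [List.Chain'] at hc2
    rw [List.isChain_append] at hc2
    obtain ⟨_, hcT, hbdT⟩ := hc2
    have ha : r + 1 ≤ a := by
      cases hTc : T with
      | nil =>
          have h1 := hs2 hTc
          have h2 := hTnil_s hTc
          omega
      | cons t T' =>
          have hbt := hbdT _ (by rw [hr₁]; exact getLast?_stair a r₁) t (by rw [hTc]; rfl)
          have htpos : 0 < t := hp t (by
            rw [hLdec, hTc]
            exact List.mem_append_right _ List.mem_cons_self)
          omega
    have hheadTr : ∀ b, (T ++ [r]).head? = some b → b < a - r := by
      intro b hb
      cases hTc : T with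
      | nil =>
          rw [hTc] at hb
          simp at hb
          have h1 := hs2 hTc
          have h2 := hTnil_s hTc
          omega
      | cons t T' =>
          rw [hTc] at hb
          simp only [List.cons_append, List.head?_cons, Option.some.injEq] at hb
          have hbt := hbdT _ (by rw [hr₁]; exact getLast?_stair a r₁) t (by rw [hTc]; rfl)
          have hst := hstop t (by rw [hTc]; rfl)
          omega
    have hTr_last : ∀ x ∈ T.getLast?, x > r := by
      intro x hx
      have hTne : T ≠ [] := by rintro rfl; simp at hx
      rw [getLast?_of_ne_nil hTne] at hx
      have h1 := hTlast hTne
      simp only [Option.mem_def, Option.some.injEq] at hx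
      omega
    have hFL : F L = (stair (a-1) r ++ T) ++ [r] := by
      simp only [F]
      rw [← hsdef, hrun, if_neg (by omega), hLdec, dec_stair r a T]
    have hchainM : List.Chain' (· > ·) (F L) := by
      rw [hFL, List.append_assoc]
      apply chain'_stair_append r (a-1) _ (by omega)
      · simp only [List.Chain']
        rw [List.isChain_append]
        refine ⟨hcT, List.isChain_singleton r, ?_⟩
        intro x hx y hy
        simp only [List.head?_cons, Option.mem_def, Option.some.injEq] at hy
        subst hy
        exact hTr_last x hx
      · intro b hb
        have := hheadTr b hb
        omega
    have hposM : ∀ x ∈ F L, 0 < x := by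
      rw [hFL, List.append_assoc]
      apply pos_stair_append (by omega)
      intro x hx
      rcases List.mem_append.1 hx with hx | hx
      · exact hp x (by rw [hLdec]; exact List.mem_append_right _ hx)
      · simp at hx
        omega
    have hsum2 : (stair a r).sum + T.sum = k := by
      rw [hLdec, List.sum_append] at hsum
      exact hsum
    have hstairsum : (stair a r).sum = (stair (a-1) r).sum + r := by
      have h1 := sum_stair_succ r (a-1) (by omega)
      rw [show a - 1 + 1 = a by omega] at h1
      exact h1
    have hsumM : (F L).sum = k := by
      rw [hFL]
      simp only [List.sum_append, List.sum_cons, List.sum_nil]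
      omega
    have hlenM : (F L).length = L.length + 1 := by
      rw [hFL, hLdec]
      simp
      omega
    have hFF : F (F L) = L := by
      have hlast : (F L).getLastD 0 = r := by rw [hFL, List.getLastD_concat]
      have hge : r ≤ run (F L) := by
        rw [hFL, List.append_assoc]
        exact run_ge r (a-1) _ (by omega)
      conv_lhs => rw [F]
      rw [hlast, if_pos hge, hFL, List.dropLast_concat, inc_stair r (a-1) T (by omega),
        show a - 1 + 1 = a by omega, ← hLdec]
    exact ⟨hchainM, hposM, hsumM, hFF, Or.inl hlenM⟩


def sortL (k : ℕ) (q : {p : Nat.Partition k // p.parts.Nodup}) : List ℕ :=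
  (Multiset.sort q.1.parts (· ≤ ·)).reverse

lemma sortL_coe (k : ℕ) (q : {p : Nat.Partition k // p.parts.Nodup}) :
    (↑(sortL k q) : Multiset ℕ) = q.1.parts := by
  simp [sortL]

lemma sortL_chain (k : ℕ) (q : {p : Nat.Partition k // p.parts.Nodup}) :
    List.Chain' (· > ·) (sortL k q) := by
  simp only [List.Chain']
  rw [List.isChain_iff_pairwise, sortL, List.pairwise_reverse]
  have hsorted : List.Pairwise (· ≤ ·) (Multiset.sort q.1.parts (· ≤ ·)) :=
    Multiset.pairwise_sort _ _
  have hnd : (Multiset.sort q.1.parts (· ≤ ·)).Nodup := by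
    have h2 := q.2
    rw [← Multiset.sort_eq q.1.parts (· ≤ ·), Multiset.coe_nodup] at h2
    exact h2
  exact (hsorted.and hnd).imp fun h => lt_of_le_of_ne h.1 h.2

lemma sortL_pos (k : ℕ) (q : {p : Nat.Partition k // p.parts.Nodup}) :
    ∀ x ∈ sortL k q, 0 < x := by
  intro x hx
  apply q.1.parts_pos
  rw [← sortL_coe k q]
  exact hx

lemma sortL_sum (k : ℕ) (q : {p : Nat.Partition k // p.parts.Nodup}) :
    (sortL k q).sum = k := by
  have h1 : ((sortL k q : Multiset ℕ)).sum = k := by rw [sortL_coe]; exact q.1.parts_sum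
  simpa using h1

def mkQ (k : ℕ) (L : List ℕ) (hchain : List.Chain' (· > ·) L) (hpos : ∀ x ∈ L, 0 < x)
    (hsum : L.sum = k) : {p : Nat.Partition k // p.parts.Nodup} :=
  ⟨⟨(L : Multiset ℕ), fun {i} hi => hpos i (by simpa using hi), by simpa using hsum⟩, by
    rw [Multiset.coe_nodup]
    exact (List.isChain_iff_pairwise.mp hchain).imp fun h => ne_of_gt h⟩

lemma mkQ_parts (k : ℕ) (L : List ℕ) (h1 h2 h3) :
    (mkQ k L h1 h2 h3).1.parts = (L : Multiset ℕ) := rfl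

lemma sortL_mkQ (k : ℕ) (L : List ℕ) (h1 h2 h3) :
    sortL k (mkQ k L h1 h2 h3) = L := by
  have hrev : List.Pairwise (· ≤ ·) L.reverse := by
    rw [List.pairwise_reverse]
    exact (List.isChain_iff_pairwise.mp h1).imp fun h => le_of_lt h
  have hperm : (Multiset.sort (L : Multiset ℕ) (· ≤ ·)).Perm L.reverse := by
    rw [← Multiset.coe_eq_coe, Multiset.sort_eq, Multiset.coe_reverse]
  have heq := List.Perm.eq_of_pairwise' (Multiset.pairwise_sort _ _) hrev hperm
  show (Multiset.sort (L : Multiset ℕ) (· ≤ ·)).reverse = L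
  rw [heq, List.reverse_reverse]


end Stmt11

open Stmt11 in
/-- If `k` is not a generalized pentagonal number, there is an involution `φ` on the set
`Q(k)` of partitions of `k` into distinct parts such that the number of parts of `φ(λ)`
differs from the number of parts of `λ` by exactly 1. -/
theorem stmt11 (k : ℕ)
    (h : ∀ m : ℕ, 2 * k ≠ m * (3 * m - 1) ∧ 2 * k ≠ m * (3 * m + 1)) :
    ∃ φ : {p : Nat.Partition k // p.parts.Nodup} → {p : Nat.Partition k // p.parts.Nodup},
      Function.Involutive φ ∧
        ∀ p, Multiset.card (φ p).1.parts = Multiset.card p.1.parts + 1 ∨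
          Multiset.card p.1.parts = Multiset.card (φ p).1.parts + 1 := by
  have key : ∀ q : {p : Nat.Partition k // p.parts.Nodup},
      List.Chain' (· > ·) (F (sortL k q)) ∧ (∀ x ∈ F (sortL k q), 0 < x) ∧
        (F (sortL k q)).sum = k ∧ F (F (sortL k q)) = sortL k q ∧
        ((F (sortL k q)).length = (sortL k q).length + 1 ∨
          (sortL k q).length = (F (sortL k q)).length + 1) :=
    fun q => F_main k h (sortL k q) (sortL_chain k q) (sortL_pos k q) (sortL_sum k q)
  refine ⟨fun q => mkQ k (F (sortL k q)) (key q).1 (key q).2.1 (key q).2.2.1, ?_, ?_⟩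
  · intro q
    apply Subtype.ext
    apply Nat.Partition.ext
    show ((F (sortL k (mkQ k (F (sortL k q)) _ _ _)) : List ℕ) : Multiset ℕ) = q.1.parts
    rw [sortL_mkQ, (key q).2.2.2.1, sortL_coe]
  · intro q
    have e1 : Multiset.card
        ((mkQ k (F (sortL k q)) (key q).1 (key q).2.1 (key q).2.2.1).1.parts) =
        (F (sortL k q)).length := Multiset.coe_card _
    have e2 : Multiset.card q.1.parts = (sortL k q).length := by
      rw [← sortL_coe k q]
      exact Multiset.coe_card _
    rcases (key q).2.2.2.2 with h1 | h1
    · left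
      rw [e1, e2, h1]
    · right
      rw [e1, e2, h1]
end

section
/- For every odd prime p, the polynomial x^p + (1/p) Σ_{m=1}^{p−1} ( C(p−1, m−1) + (−1)^m ) x^m has integer coefficients, is divisible by (1+x) in ℤ[x], and the quotient has non-negative integer coefficients; explicitly it equals (1+x) · Σ_{m=1}^{p−1} (1/p)( C(p−2, m−1) + (−1)^m m ) x^m. -/
open Polynomial

lemma aux_A15 (r : ℕ) (hp : (r+2).Prime) :
    ∀ k, k ≤ r + 1 → (((r+1).choose k : ℕ) : ZMod (r+2)) = (-1)^k := by
  intro k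
  induction k with
  | zero => simp
  | succ k ih =>
    intro hk
    have h1 := ih (by omega)
    have hid : (r+2).choose (k+1) = (r+1).choose k + (r+1).choose (k+1) := Nat.choose_succ_succ _ _
    have hz : (((r+2).choose (k+1) : ℕ) : ZMod (r+2)) = 0 := by
      rw [ZMod.natCast_eq_zero_iff]
      exact hp.dvd_choose_self (by omega) (by omega)
    rw [hid] at hz
    push_cast at hz
    rw [h1] at hz
    have : (((r+1).choose (k+1) : ℕ) : ZMod (r+2)) = -(-1)^k := by linear_combination hz
    rw [this]; ring

lemma aux_B15 (r : ℕ) (hp : (r+2).Prime) :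
    ∀ k, k ≤ r → ((r.choose k : ℕ) : ZMod (r+2)) = (-1)^k * (k+1) := by
  intro k
  induction k with
  | zero => simp
  | succ k ih =>
    intro hk
    have h1 := ih (by omega)
    have hA := aux_A15 r hp (k+1) (by omega)
    have hid : (r+1).choose (k+1) = r.choose k + r.choose (k+1) := Nat.choose_succ_succ _ _
    rw [hid] at hA
    push_cast at hA ⊢
    rw [h1] at hA
    have : ((r.choose (k+1) : ℕ) : ZMod (r+2)) = (-1)^(k+1) - (-1)^k * (k+1) := by
      linear_combination hA
    rw [this]; ring

lemma aux_coeff15 (r : ℕ) (h : ℕ → ℚ) (n : ℕ) :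
    (∑ m ∈ Finset.Icc 1 (r+1), C (h m) * X ^ m).coeff n
      = if n ∈ Finset.Icc 1 (r+1) then h n else 0 := by
  rw [Polynomial.finset_sum_coeff]
  simp_rw [Polynomial.coeff_C_mul, Polynomial.coeff_X_pow, mul_ite, mul_one, mul_zero]
  exact Finset.sum_ite_eq (Finset.Icc 1 (r+1)) n h

/-- For an odd prime `p`, the polynomial
`x^p + (1/p) Σ_{m=1}^{p−1} (C(p−1,m−1) + (−1)^m) x^m` equals
`(1+x) · Σ_{m=1}^{p−1} (1/p)(C(p−2,m−1) + (−1)^m m) x^m`, and each coefficient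
`(1/p)(C(p−2,m−1) + (−1)^m m)` of the quotient is a non-negative integer. -/
theorem stmt15 (p : ℕ) (hp : p.Prime) (hodd : Odd p) :
    ((X : Polynomial ℚ) ^ p + C (1 / (p : ℚ)) *
        ∑ m ∈ Finset.Icc 1 (p - 1),
          C (((p - 1).choose (m - 1) : ℚ) + (-1) ^ m) * X ^ m) =
      (1 + X) * ∑ m ∈ Finset.Icc 1 (p - 1),
        C ((((p - 2).choose (m - 1) : ℚ) + (-1) ^ m * m) / p) * X ^ m ∧
    ∀ m ∈ Finset.Icc 1 (p - 1), ∃ c : ℕ,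
      (((p - 2).choose (m - 1) : ℚ) + (-1) ^ m * m) / p = c := by
  have h3 : 3 ≤ p := by
    rcases hodd with ⟨s, hs⟩; have := hp.two_le; omega
  obtain ⟨r, rfl⟩ : ∃ r, p = r + 2 := ⟨p - 2, by omega⟩
  have hro : Odd r := by rcases hodd with ⟨s, hs⟩; exact ⟨s - 1, by omega⟩
  have hr1 : 1 ≤ r := hro.pos
  have e1 : r + 2 - 1 = r + 1 := by omega
  have e2 : r + 2 - 2 = r := by omega
  rw [e1, e2]
  have hne : ((r : ℚ) + 2) ≠ 0 := by positivity
  have hne' : (((r + 2 : ℕ)) : ℚ) ≠ 0 := by push_cast; exact hne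
  constructor
  · ext n
    cases n with
    | zero => simp [aux_coeff15, Polynomial.coeff_X_pow, mul_coeff_zero]
    | succ k =>
      rw [Polynomial.coeff_add, Polynomial.coeff_X_pow, Polynomial.coeff_C_mul, aux_coeff15,
        add_mul, one_mul, Polynomial.coeff_add, Polynomial.coeff_X_mul, aux_coeff15, aux_coeff15]
      simp only [Finset.mem_Icc]
      by_cases h0 : k = 0
      · subst h0
        rw [if_neg (by omega), if_pos (by omega), if_pos (by omega), if_neg (by omega)]
        norm_num
      by_cases hk1 : k ≤ r
      · obtain ⟨j, rfl⟩ : ∃ j, k = j + 1 := ⟨k - 1, by omega⟩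
        rw [if_neg (by omega), if_pos (by omega), if_pos (by omega), if_pos (by omega)]
        simp only [Nat.add_sub_cancel]
        rw [Nat.choose_succ_succ r j]
        push_cast
        field_simp
        ring
      by_cases hk2 : k = r + 1
      · subst hk2
        rw [if_pos (by omega), if_neg (by omega), if_neg (by omega), if_pos (by omega)]
        simp only [Nat.add_sub_cancel, Nat.choose_self]
        rw [(hro.add_one).neg_one_pow]
        push_cast
        field_simp
        ring
      · rw [if_neg (by omega), if_neg (by omega), if_neg (by omega), if_neg (by omega)]
        simp
  · intro m hm
    simp only [Finset.mem_Icc] at hm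
    obtain ⟨j, rfl⟩ : ∃ j, m = j + 1 := ⟨m - 1, by omega⟩
    simp only [Nat.add_sub_cancel]
    have hj : j ≤ r := by omega
    have hdvd : ((r:ℤ)+2) ∣ ((r.choose j : ℤ) + (-1)^(j+1) * (j+1)) := by
      have hz : (((r.choose j : ℤ) + (-1)^(j+1) * (j+1) : ℤ) : ZMod (r+2)) = 0 := by
        push_cast
        rw [aux_B15 r hp j hj]
        ring
      have h2 := (ZMod.intCast_zmod_eq_zero_iff_dvd _ (r+2)).mp hz
      exact_mod_cast h2
    obtain ⟨q, hq⟩ := hdvd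
    have hsign : ((-1:ℤ))^(j+1) * (j+1) ≥ -(j+1) := by
      rcases Nat.even_or_odd (j+1) with he | ho
      · rw [he.neg_one_pow]; omega
      · rw [ho.neg_one_pow]; omega
    have hpos : 1 ≤ (r.choose j : ℤ) := by exact_mod_cast Nat.choose_pos hj
    have hlb : -((r:ℤ)+2) < (r.choose j : ℤ) + (-1)^(j+1) * (j+1) := by
      have : (j : ℤ) + 1 ≤ (r:ℤ) + 1 := by exact_mod_cast (by omega : j + 1 ≤ r + 1)
      omega
    have hq0 : 0 ≤ q := by nlinarith [hq, hlb]
    refine ⟨q.toNat, ?_⟩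
    rw [div_eq_iff hne']
    have hcast : ((r.choose j : ℚ)) + (-1)^(j+1) * ((j:ℚ)+1) = ((r:ℚ)+2) * q := by
      have := congrArg (fun z : ℤ => (z : ℚ)) hq
      push_cast at this
      linarith [this]
    have ht : ((q.toNat : ℕ) : ℚ) = (q : ℚ) := by exact_mod_cast Int.toNat_of_nonneg hq0
    push_cast
    rw [hcast, ht]
    ring
end
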